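/- arXiv:1807.02138 — 14 statements merged into one kernel-verified Lean document; each statement's English description precedes it below -/
import Mathlib

section
/- Let k ≤ m be natural numbers and let T be the (k+1) × (m+1) matrix over ℚ whose (i,j)-entry (for 0 ≤ i ≤ k, 0 ≤ j ≤ m) is the binomial coefficient C(m−k, j−i), with the convention that C(m−k, j−i) = 0 when j < i or j−i > m−k. Then every maximal minor of T is non-zero; that is, for every strictly increasing selection c(0) < c(1) < ⋯ < c(k) of k+1 columns from {0,…,m}, the determinant of the (k+1) × (k+1) matrix with (i,j)-entry C(m−k, c(j)−i) is non-zero. -/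
/-!
Write `M_d(r, c)` for the square matrix with entries `C(d, c j - r i)` (zero when `r i > c j`),
for strictly increasing row and column labels `r`, `c`. Pascal's rule splits every row of
`M_{d+1}(r, c)` as the corresponding row of `M_d(r, c)` plus that of `M_d(r + 1, c)`, so by
multilinearity `det M_{d+1}(r, c)` is the sum of `det M_d(r', c)` over all ways `r'` of raising
some labels by one. Each `r'` is monotone, so by induction on `d` every summand is nonnegative
(non-injective `r'` give equal rows), starting from `M_0(r, c)`, which is the identity if `r = c`
and has a zero column otherwise. If moreover `r i ≤ c i ≤ r i + d` for all `i`, raising exactly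
the labels with `r i + d < c i` gives one summand to which the same argument applies, so the
determinant is positive. The Toeplitz minor is `M_{m-k}(id, c)`, and `i ≤ c i ≤ i + (m - k)`
holds because `c` is strictly increasing.
-/

def binomEntry (d a b : ℕ) : ℕ := if a ≤ b then d.choose (b - a) else 0

lemma binomEntry_zero (a b : ℕ) : binomEntry 0 a b = if a = b then 1 else 0 := by
  unfold binomEntry
  rcases lt_trichotomy a b with h | rfl | h
  · rw [if_pos h.le, if_neg h.ne, Nat.choose_eq_zero_of_lt (Nat.sub_pos_of_lt h)]
  · simp
  · rw [if_neg (by omega), if_neg (by omega)]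

lemma binomEntry_succ (d a b : ℕ) :
    binomEntry (d + 1) a b = binomEntry d a b + binomEntry d (a + 1) b := by
  unfold binomEntry
  rcases lt_trichotomy a b with h | rfl | h
  · simp only [if_pos h.le, if_pos (show a + 1 ≤ b from h)]
    rw [show b - a = b - (a + 1) + 1 by omega, Nat.choose_succ_succ', add_comm]
  · simp
  · rw [if_neg (by omega), if_neg (by omega), if_neg (by omega)]

lemma StrictMono.eq_of_range_subset {ι α : Type*} [LinearOrder ι] [Finite ι] [Preorder α]
    {r c : ι → α} (hr : StrictMono r) (hc : StrictMono c) (h : Set.range c ⊆ Set.range r) :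
    r = c := by
  choose g hg using Set.range_subset_iff.mp h
  have hg_mono : StrictMono g := fun a b hab => hr.lt_iff_lt.mp (by simpa [hg] using hc hab)
  funext i
  simpa [hg_mono.apply_eq] using hg i

lemma Fin.val_le_val_of_strictMono {n m : ℕ} {f : Fin (n + 1) → Fin m} (hf : StrictMono f)
    (i : Fin (n + 1)) : (i : ℕ) ≤ f i := by
  induction i using Fin.induction with
  | zero => exact Nat.zero_le _
  | succ i ih => simpa using ih.trans_lt (hf i.castSucc_lt_succ)

lemma Fin.val_add_le_of_strictMono {n m : ℕ} {f : Fin (n + 1) → Fin (m + 1)} (hf : StrictMono f)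
    (i : Fin (n + 1)) : (f i : ℕ) + (n - i) ≤ m := by
  have := Fin.val_le_val_of_strictMono
    ((Fin.rev_strictAnti.comp_strictMono hf).comp Fin.rev_strictAnti) i.rev
  simp only [Function.comp_apply, Fin.rev_rev, Fin.val_rev] at this
  omega

section BinomMatrix

variable (R : Type*) [CommRing R] {ι : Type*} [LinearOrder ι]

def binomMatrix (d : ℕ) (r c : ι → ℕ) : Matrix ι ι R :=
  Matrix.of fun i j => (binomEntry d (r i) (c j) : R)

variable {R}

lemma binomMatrix_zero_self {r : ι → ℕ} (hr : Function.Injective r) :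
    binomMatrix R 0 r r = 1 := by
  ext i j
  simp [binomMatrix, binomEntry_zero, hr.eq_iff, Matrix.one_apply]

lemma binomMatrix_piecewise (d : ℕ) (s : Finset ι) (r r' c : ι → ℕ) :
    binomMatrix R d (s.piecewise r r') c =
      s.piecewise (binomMatrix R d r c) (binomMatrix R d r' c) := by
  ext i j
  by_cases hi : i ∈ s <;> simp [Finset.piecewise, binomMatrix, hi]

lemma StrictMono.monotone_piecewise_add_one {r : ι → ℕ} (hr : StrictMono r) (s : Finset ι) :
    Monotone (s.piecewise (r + 1) r) := by
  intro a b hab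
  rcases hab.lt_or_eq with hab | rfl
  · have := hr hab
    by_cases ha : a ∈ s <;> by_cases hb : b ∈ s <;> simp [ha, hb] <;> omega
  · exact le_rfl

variable [Fintype ι]

lemma det_binomMatrix_succ (d : ℕ) (r c : ι → ℕ) :
    (binomMatrix R (d + 1) r c).det =
      ∑ s : Finset ι, (binomMatrix R d (s.piecewise (r + 1) r) c).det := by
  have pascal : binomMatrix R (d + 1) r c = binomMatrix R d (r + 1) c + binomMatrix R d r c := by
    ext i j
    simp [binomMatrix, binomEntry_succ, add_comm]
  simp_rw [binomMatrix_piecewise]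
  rw [pascal]
  exact Matrix.detRowAlternating.map_add_univ _ _

lemma det_binomMatrix_eq_zero_of_not_injective (d : ℕ) {r : ι → ℕ} (c : ι → ℕ)
    (hr : ¬Function.Injective r) : (binomMatrix R d r c).det = 0 := by
  obtain ⟨a, b, hab, hne⟩ : ∃ a b, r a = r b ∧ a ≠ b := by
    simpa [Function.Injective] using hr
  exact Matrix.det_zero_of_row_eq hne (by ext j; simp [binomMatrix, hab])

variable [LinearOrder R] [IsStrictOrderedRing R]

theorem det_binomMatrix_nonneg (d : ℕ) {r c : ι → ℕ} (hr : Monotone r) (hc : StrictMono c) :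
    0 ≤ (binomMatrix R d r c).det := by
  by_cases hinj : Function.Injective r
  swap
  · exact (det_binomMatrix_eq_zero_of_not_injective d c hinj).ge
  replace hr := hr.strictMono_of_injective hinj
  induction d generalizing r with
  | zero =>
    by_cases h : Set.range c ⊆ Set.range r
    · rw [← hr.eq_of_range_subset hc h, binomMatrix_zero_self hinj, Matrix.det_one]
      exact zero_le_one
    · obtain ⟨j, hj⟩ : ∃ j, ∀ i, r i ≠ c j := by simpa [Set.range_subset_iff] using h
      rw [Matrix.det_eq_zero_of_column_eq_zero j fun i => by
        simp [binomMatrix, binomEntry_zero, hj i]]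
  | succ d ih =>
    rw [det_binomMatrix_succ]
    refine Finset.sum_nonneg fun s _ => ?_
    by_cases hinj' : Function.Injective (s.piecewise (r + 1) r)
    · exact ih hinj' ((hr.monotone_piecewise_add_one s).strictMono_of_injective hinj')
    · exact (det_binomMatrix_eq_zero_of_not_injective d c hinj').ge

theorem det_binomMatrix_pos (d : ℕ) {r c : ι → ℕ} (hr : StrictMono r) (hc : StrictMono c)
    (hrc : ∀ i, r i ≤ c i ∧ c i ≤ r i + d) : 0 < (binomMatrix R d r c).det := by
  induction d generalizing r with
  | zero =>
    obtain rfl : r = c := funext fun i => by have := hrc i; omega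
    rw [binomMatrix_zero_self hr.injective, Matrix.det_one]
    exact zero_lt_one
  | succ d ih =>
    rw [det_binomMatrix_succ]
    set s₀ := Finset.univ.filter fun i => r i + d < c i
    have hs₀ : ∀ i, s₀.piecewise (r + 1) r i = if r i + d < c i then r i + 1 else r i := by
      simp [s₀, Finset.piecewise]
    have hmono : StrictMono (s₀.piecewise (r + 1) r) := fun a b hab => by
      have := hr hab; have := hc hab; have := hrc a; have := hrc b
      rw [hs₀, hs₀]; split_ifs <;> omega
    refine Finset.sum_pos'
      (fun s _ => det_binomMatrix_nonneg d (hr.monotone_piecewise_add_one s) hc)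
      ⟨s₀, Finset.mem_univ _, ih hmono fun i => ?_⟩
    have := hrc i
    rw [hs₀]; split_ifs <;> omega

end BinomMatrix

theorem toeplitz_maximal_minors_ne_zero_general (k m : ℕ)
    (c : Fin (k + 1) → Fin (m + 1)) (hc : StrictMono c) :
    (Matrix.of fun i j : Fin (k + 1) =>
        if (i : ℕ) ≤ (c j : ℕ) then ((Nat.choose (m - k) ((c j : ℕ) - (i : ℕ))) : ℚ)
        else 0).det ≠ 0 := by
  have hc' : StrictMono fun j => (c j : ℕ) := Fin.val_strictMono.comp hc
  have hbounds : ∀ i : Fin (k + 1), (i : ℕ) ≤ c i ∧ (c i : ℕ) ≤ i + (m - k) := fun i =>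
    ⟨Fin.val_le_val_of_strictMono hc i, by have := Fin.val_add_le_of_strictMono hc i; omega⟩
  have hpos := det_binomMatrix_pos (R := ℚ) (m - k) Fin.val_strictMono hc' hbounds
  simpa [binomMatrix, binomEntry] using hpos.ne'

/-- Every maximal minor of the Toeplitz matrix `T_{k,m}`, whose `(i,j)`-entry is the
binomial coefficient `C(m-k, j-i)` (zero when `j < i`), is non-zero. -/
theorem toeplitz_maximal_minors_ne_zero (k m : ℕ) (hkm : k ≤ m)
    (c : Fin (k + 1) → Fin (m + 1)) (hc : StrictMono c) :
    (Matrix.of fun i j : Fin (k + 1) =>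
        if (i : ℕ) ≤ (c j : ℕ) then ((Nat.choose (m - k) ((c j : ℕ) - (i : ℕ))) : ℚ)
        else 0).det ≠ 0 :=
  toeplitz_maximal_minors_ne_zero_general k m c hc
end

section
/- Let K be a field of characteristic zero, S = K[x_1,…,x_n] acting on the dual ring R = K[y_1,…,y_n] with x_i acting as ∂/∂y_i. Fix j with 1 ≤ j ≤ n, let ℓ = x_1 + ⋯ + x_n and ℓ′ = ℓ − x_j. Let f ∈ R be a form of degree d ≥ 2 written as f = Σ_{i=0}^{d} y_j^i g_i, where each g_i is a homogeneous polynomial of degree d−i in the variables different from y_j. Then for every 0 ≤ c ≤ d: ℓ^c ∘ f = Σ_{k=0}^{d−c} Σ_{i=0}^{c} ((k+c−i)!/k!) · C(c,i) · y_j^k · (ℓ′^i ∘ g_{k+c−i}). -/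
/-!
Write `ℓ = ℓ' + x_j` as a sum of two commuting operators and expand `ℓ^c` by the binomial
theorem. Since the `g_m` do not involve `y_j`, the factor `x_j^{c-i}` only differentiates the
powers `y_j^m`, producing the falling factorials `m!/(m-c+i)!`, while `ℓ'` commutes with
multiplication by `y_j^m`. Reindexing by the exponent `k = m - c + i` left on `y_j` gives the
formula; the terms with `k > d - c` vanish because `ℓ'^i` annihilates `g_{k+c-i}`, a form of
degree `d - k - c + i < i`.
-/

open MvPolynomial Finset

theorem Finset.sum_range_descFactorial_smul {M : Type*} [AddCommMonoid M] (F : ℕ → ℕ → M)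
    (n a : ℕ) :
    ∑ m ∈ range n, m.descFactorial a • F (m - a) m =
      ∑ k ∈ range (n - a), (k + a).descFactorial a • F k (k + a) := by
  rcases le_or_gt a n with han | hna
  · obtain ⟨r, rfl⟩ := Nat.exists_eq_add_of_le han
    rw [sum_range_add, Nat.add_sub_cancel_left, sum_eq_zero fun m hm => by
      rw [Nat.descFactorial_of_lt (mem_range.mp hm), zero_smul], zero_add]
    simp only [add_comm a, Nat.add_sub_cancel]
  · rw [Nat.sub_eq_zero_of_le hna.le, sum_range_zero]
    exact sum_eq_zero fun m hm => by
      rw [Nat.descFactorial_of_lt ((mem_range.mp hm).trans hna), zero_smul]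

namespace MvPolynomial

variable {R σ : Type*} [CommSemiring R]

theorem pderiv_pderiv_comm (i j : σ) (p : MvPolynomial σ R) :
    pderiv i (pderiv j p) = pderiv j (pderiv i p) := by
  classical
  ext m
  simp only [coeff_pderiv, add_right_comm m]
  rcases eq_or_ne i j with rfl | hij
  · rfl
  · simp only [Finsupp.add_apply, Finsupp.single_apply, if_neg hij, if_neg hij.symm, add_zero]
    ring

theorem pderiv_eq_zero_of_forall_mem_support {i : σ} {p : MvPolynomial σ R}
    (h : ∀ m ∈ p.support, m i = 0) : pderiv i p = 0 :=
  pderiv_eq_zero_of_notMem_vars fun hi => by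
    obtain ⟨m, hm, him⟩ := (mem_vars_iff_mem_support i).mp hi
    exact Finsupp.mem_support_iff.mp him (h m hm)

theorem IsHomogeneous.pderiv_eq_zero {p : MvPolynomial σ R} (hp : p.IsHomogeneous 0)
    (i : σ) : pderiv i p = 0 := by
  rw [← totalDegree_zero_iff_isHomogeneous, totalDegree_eq_zero_iff_eq_C] at hp
  rw [hp, pderiv_C]

theorem pderiv_X_pow_mul_of_ne {i j : σ} (hij : j ≠ i) (m : ℕ) (p : MvPolynomial σ R) :
    pderiv i (X j ^ m * p) = X j ^ m * pderiv i p := by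
  rw [pderiv_mul, pderiv_pow, pderiv_X_of_ne hij, mul_zero, zero_mul, zero_add]

theorem pderiv_X_pow_mul_of_pderiv_eq_zero {i : σ} {p : MvPolynomial σ R} (hp : pderiv i p = 0)
    (m : ℕ) : pderiv i (X i ^ m * p) = m • (X i ^ (m - 1) * p) := by
  rw [pderiv_mul, pderiv_pow, pderiv_X_self, hp, mul_zero, add_zero, mul_one, nsmul_eq_mul,
    mul_assoc]

theorem pderiv_pow_X_pow_mul {i : σ} {p : MvPolynomial σ R} (hp : pderiv i p = 0) (m a : ℕ) :
    ((pderiv i).toLinearMap ^ a : Module.End R (MvPolynomial σ R)) (X i ^ m * p) =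
      m.descFactorial a • (X i ^ (m - a) * p) := by
  induction a with
  | zero => simp
  | succ a ih =>
    rw [pow_succ', Module.End.mul_apply, ih, LinearMap.map_smul_of_tower,
      Derivation.coeFn_coe, pderiv_X_pow_mul_of_pderiv_eq_zero hp, smul_smul,
      Nat.descFactorial_succ, mul_comm, Nat.sub_sub]

variable (R) in
noncomputable def pderivSum (s : Finset σ) : Module.End R (MvPolynomial σ R) :=
  ∑ t ∈ s, (pderiv t).toLinearMap

theorem pderivSum_apply (s : Finset σ) (p : MvPolynomial σ R) :
    pderivSum R s p = ∑ t ∈ s, pderiv t p := by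
  simp [pderivSum]

theorem pderivSum_eq_pderiv_add_erase [DecidableEq σ] {s : Finset σ} {i : σ} (hi : i ∈ s) :
    pderivSum R s = (pderiv i).toLinearMap + pderivSum R (s.erase i) :=
  (add_sum_erase s _ hi).symm

theorem commute_pderiv_pderivSum (i : σ) (s : Finset σ) :
    Commute (pderiv i).toLinearMap (pderivSum R s) :=
  Commute.sum_right _ _ _ fun t _ => LinearMap.ext fun p => pderiv_pderiv_comm i t p

theorem pderivSum_pow_X_pow_mul {s : Finset σ} {j : σ} (hj : j ∉ s) (m i : ℕ)
    (p : MvPolynomial σ R) :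
    (pderivSum R s ^ i) (X j ^ m * p) = X j ^ m * (pderivSum R s ^ i) p := by
  induction i with
  | zero => rfl
  | succ i ih =>
    rw [pow_succ', Module.End.mul_apply, Module.End.mul_apply, ih, pderivSum_apply,
      pderivSum_apply, mul_sum]
    exact sum_congr rfl fun t ht => pderiv_X_pow_mul_of_ne (ne_of_mem_of_not_mem ht hj).symm _ _

theorem IsHomogeneous.pderivSum_pow_eq_zero {p : MvPolynomial σ R} {e i : ℕ}
    (hp : p.IsHomogeneous e) (hei : e < i) (s : Finset σ) : (pderivSum R s ^ i) p = 0 := by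
  induction i generalizing p e with
  | zero => omega
  | succ i ih =>
    rw [pow_succ, Module.End.mul_apply, pderivSum_apply]
    rcases e with _ | e
    · simp [hp.pderiv_eq_zero]
    · exact ih (IsHomogeneous.sum _ _ _ fun t _ => hp.pderiv) (by omega)

theorem pderivSum_pow_pderiv_pow_sum_X_pow_mul {s : Finset σ} {j : σ} (hj : j ∉ s)
    {g : ℕ → MvPolynomial σ R} {N : ℕ} (hg : ∀ m < N, pderiv j (g m) = 0) (i a : ℕ) :
    (pderivSum R s ^ i) (((pderiv j).toLinearMap ^ a) (∑ m ∈ range N, X j ^ m * g m)) =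
      ∑ k ∈ range (N - a),
        (k + a).descFactorial a • (X j ^ k * (pderivSum R s ^ i) (g (k + a))) := by
  rw [map_sum, map_sum,
    ← sum_range_descFactorial_smul fun k m => X j ^ k * (pderivSum R s ^ i) (g m)]
  refine sum_congr rfl fun m hm => ?_
  rw [pderiv_pow_X_pow_mul (hg m (mem_range.mp hm)), map_nsmul, pderivSum_pow_X_pow_mul hj]

end MvPolynomial

theorem ell_pow_on_form_general {K : Type*} [Field K] {n : ℕ}
    (j : Fin n) (d : ℕ)
    (L L' : MvPolynomial (Fin n) K → MvPolynomial (Fin n) K)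
    (hL : ∀ g, L g = ∑ t, MvPolynomial.pderiv t g)
    (hL' : ∀ g, L' g = ∑ t ∈ Finset.univ.erase j, MvPolynomial.pderiv t g)
    (f : MvPolynomial (Fin n) K)
    (g : ℕ → MvPolynomial (Fin n) K)
    (hg : ∀ i ≤ d, (g i).IsHomogeneous (d - i))
    (hgj : ∀ i ≤ d, ∀ m ∈ (g i).support, m j = 0)
    (hfg : f = ∑ i ∈ Finset.range (d + 1), MvPolynomial.X j ^ i * g i)
    (c : ℕ) (hc : c ≤ d) :
    L^[c] f =
      ∑ k ∈ Finset.range (d - c + 1), ∑ i ∈ Finset.range (c + 1),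
        (((Nat.factorial (k + c - i) / Nat.factorial k : ℕ) : K) * (Nat.choose c i : K)) •
          (MvPolynomial.X j ^ k * L'^[i] (g (k + c - i))) := by
  set D' := pderivSum K (univ.erase j)
  obtain rfl : L = pderivSum K univ := funext fun p => by rw [hL, pderivSum_apply]
  obtain rfl : L' = D' := funext fun p => by rw [hL', pderivSum_apply]
  have hsplit : pderivSum K univ = D' + (pderiv j).toLinearMap := by
    rw [pderivSum_eq_pderiv_add_erase (mem_univ j), add_comm]
  have hgj' : ∀ m < d + 1, pderiv j (g m) = 0 := fun m hm =>
    pderiv_eq_zero_of_forall_mem_support (hgj m (Nat.lt_succ_iff.mp hm))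
  calc (⇑(pderivSum K univ))^[c] f = (pderivSum K univ ^ c) f := (Module.End.pow_apply _ _ _).symm
    _ = ∑ i ∈ range (c + 1), c.choose i • ∑ k ∈ range (d + 1 - (c - i)),
          (k + (c - i)).descFactorial (c - i) • (X j ^ k * (D' ^ i) (g (k + (c - i)))) := by
      rw [hsplit, ((commute_pderiv_pderivSum j _).symm).add_pow, LinearMap.sum_apply]
      refine sum_congr rfl fun i _ => ?_
      rw [Module.End.mul_apply, Module.End.natCast_apply, map_nsmul, Module.End.mul_apply, hfg,
        pderivSum_pow_pderiv_pow_sum_X_pow_mul (notMem_erase j univ) hgj']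
    _ = ∑ i ∈ range (c + 1), c.choose i • ∑ k ∈ range (d - c + 1),
          (k + (c - i)).descFactorial (c - i) • (X j ^ k * (D' ^ i) (g (k + (c - i)))) := by
      refine sum_congr rfl fun i hi => congrArg _ (sum_subset ?_ fun k hk hk' => ?_).symm
      · intro k hk
        simp only [mem_range] at hk ⊢
        omega
      · simp only [mem_range] at hi hk hk'
        rw [(hg _ (by omega)).pderivSum_pow_eq_zero (by omega), mul_zero, smul_zero]
    _ = _ := by
      simp only [smul_sum]
      rw [sum_comm]
      refine sum_congr rfl fun k _ => sum_congr rfl fun i hi => ?_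
      have hci : k + (c - i) = k + c - i := by simp only [mem_range] at hi; omega
      rw [Nat.descFactorial_eq_div (Nat.le_add_left _ _), Nat.add_sub_cancel, hci, smul_smul,
        ← Nat.cast_smul_eq_nsmul K, Nat.cast_mul, mul_comm, Module.End.pow_apply]

/-- Let `ℓ = x_1 + ⋯ + x_n` act on `R = K[y_1,…,y_n]` by `x_i ↦ ∂/∂y_i`, and
`ℓ' = ℓ - x_j`.  If `f = ∑_{i=0}^d y_j^i g_i` is a form of degree `d ≥ 2`, where each
`g_i` is homogeneous of degree `d - i` in the variables different from `y_j`, then for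
every `0 ≤ c ≤ d` we have
`ℓ^c ∘ f = ∑_{k=0}^{d-c} ∑_{i=0}^{c} ((k+c-i)!/k!) C(c,i) y_j^k (ℓ'^i ∘ g_{k+c-i})`. -/
theorem ell_pow_on_form {K : Type*} [Field K] [CharZero K] {n : ℕ} (hn : 1 ≤ n)
    (j : Fin n) (d : ℕ) (hd : 2 ≤ d)
    (L L' : MvPolynomial (Fin n) K → MvPolynomial (Fin n) K)
    (hL : ∀ g, L g = ∑ t, MvPolynomial.pderiv t g)
    (hL' : ∀ g, L' g = ∑ t ∈ Finset.univ.erase j, MvPolynomial.pderiv t g)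
    (f : MvPolynomial (Fin n) K) (hf : f.IsHomogeneous d)
    (g : ℕ → MvPolynomial (Fin n) K)
    (hg : ∀ i ≤ d, (g i).IsHomogeneous (d - i))
    (hgj : ∀ i ≤ d, ∀ m ∈ (g i).support, m j = 0)
    (hfg : f = ∑ i ∈ Finset.range (d + 1), MvPolynomial.X j ^ i * g i)
    (c : ℕ) (hc : c ≤ d) :
    L^[c] f =
      ∑ k ∈ Finset.range (d - c + 1), ∑ i ∈ Finset.range (c + 1),
        (((Nat.factorial (k + c - i) / Nat.factorial k : ℕ) : K) * (Nat.choose c i : K)) •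
          (MvPolynomial.X j ^ k * L'^[i] (g (k + c - i))) :=
  ell_pow_on_form_general j d L L' hL hL' f g hg hgj hfg c hc
end

section
/- Let K be a field of characteristic zero and let f be a non-zero form of degree d in R = K[y_1,…,y_n] such that (x_1 + ⋯ + x_n) ∘ f = 0. Fix i with 1 ≤ i ≤ n and suppose y_i^d ∉ supp(f). Then for each 0 ≤ k ≤ d−1, the sum of the coefficients of f over all monomials m ∈ supp(f) with deg_i(m) = k is zero. -/
/-!
Collapse the variables by `y_i ↦ t` and `y_j ↦ s` for `j ≠ i`. The form `f` becomes the binary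
form `g = ∑ₖ Sₖ s^(d-k) tᵏ`, where `Sₖ` is the `k`-th level sum of `f`, and by the chain rule
`(∂ₛ + ∂ₜ) g` is the image of `(x_1 + ⋯ + x_n) ∘ f = 0`. Comparing coefficients gives
`(d - k) Sₖ + (k + 1) Sₖ₊₁ = 0`, and `S_d` is the coefficient of `y_i^d`, which vanishes; in
characteristic zero this forces every `Sₖ` to vanish.
-/

open MvPolynomial Finset

namespace Finsupp

variable {σ : Type*}

theorem eq_single_of_degree_eq_apply {m : σ →₀ ℕ} {i : σ} (h : m.degree = m i) :
    m = single i (m i) := by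
  have hdeg := degree.map_add (single i (m i)) (m.erase i)
  rw [single_add_erase, degree_single, h, left_eq_add, degree_eq_zero_iff] at hdeg
  rw [← single_add_erase i m, hdeg, add_zero, single_eq_same]

theorem mapDomain_ite_fin_two [DecidableEq σ] (m : σ →₀ ℕ) (i : σ) :
    m.mapDomain (fun j => if j = i then 1 else 0 : σ → Fin 2)
      = single 0 (m.degree - m i) + single 1 (m i) := by
  set c : σ → Fin 2 := fun j => if j = i then 1 else 0
  have h1 : m.mapDomain c 1 = m i := by
    rw [← show c i = 1 from if_pos rfl, mapDomain_apply_eq_sum]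
    simp [c, Finset.sum_filter, eq_comm]
  have h0 : m.mapDomain c 0 = m.degree - m i := by
    rw [← degree_mapDomain c, degree_eq_sum, Fin.sum_univ_two, h1, Nat.add_sub_cancel]
  ext t
  fin_cases t <;> simp [h0, h1]

end Finsupp

namespace MvPolynomial

section Derivatives

variable {R : Type*} [CommSemiring R] {σ τ : Type*} [Fintype σ]

theorem sum_pderiv_mul_X (q : MvPolynomial σ R) (t : σ) :
    ∑ k, pderiv k (q * X t) = (∑ k, pderiv k q) * X t + q := by
  classical
  simp [Finset.sum_add_distrib, ← Finset.mul_sum, pderiv_X, Pi.single_apply]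
  ring

theorem sum_pderiv_rename [Fintype τ] (g : σ → τ) (p : MvPolynomial σ R) :
    ∑ k, pderiv k (rename g p) = rename g (∑ j, pderiv j p) := by
  induction p using MvPolynomial.induction_on with
  | C a => simp
  | add p q hp hq => simp only [map_add, Finset.sum_add_distrib, hp, hq]
  | mul_X p j hp =>
    rw [map_mul, rename_X, sum_pderiv_mul_X, hp, sum_pderiv_mul_X, map_add, map_mul, rename_X]

end Derivatives

theorem coeff_eq_zero_of_pderiv_add_eq_zero {R : Type*} [CommRing R] [IsDomain R] [CharZero R]
    {g : MvPolynomial (Fin 2) R} (hg : pderiv 0 g + pderiv 1 g = 0) {a b : ℕ}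
    (htop : coeff (Finsupp.single 1 (a + b)) g = 0) :
    coeff (Finsupp.single 0 a + Finsupp.single 1 b) g = 0 := by
  induction a generalizing b with
  | zero => simpa using htop
  | succ a ih =>
    have hnext : coeff (Finsupp.single 0 a + Finsupp.single 1 (b + 1)) g = 0 :=
      ih (by rwa [← add_assoc, add_right_comm])
    have hrel := congrArg (coeff (Finsupp.single 0 a + Finsupp.single 1 b)) hg
    rw [coeff_add, coeff_pderiv, coeff_pderiv, coeff_zero,
      show Finsupp.single 0 a + Finsupp.single 1 b + Finsupp.single 0 1
        = Finsupp.single 0 (a + 1) + Finsupp.single (1 : Fin 2) b by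
          rw [Finsupp.single_add]; abel,
      show Finsupp.single 0 a + Finsupp.single 1 b + Finsupp.single 1 1
        = Finsupp.single 0 a + Finsupp.single (1 : Fin 2) (b + 1) by
          rw [Finsupp.single_add]; abel, hnext] at hrel
    simpa [Nat.cast_add_one_ne_zero] using hrel

namespace IsHomogeneous

variable {R : Type*} [CommSemiring R] {σ : Type*}
  {f : MvPolynomial σ R} {d : ℕ}

theorem coeff_rename_ite_fin_two [DecidableEq σ] (hf : f.IsHomogeneous d) (i : σ) (k : ℕ) :
    coeff (Finsupp.single 0 (d - k) + Finsupp.single 1 k)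
        (rename (fun j => if j = i then 1 else 0 : σ → Fin 2) f)
      = ∑ m ∈ f.support with m i = k, f.coeff m := by
  conv_lhs => rw [f.as_sum, map_sum]
  rw [coeff_sum, Finset.sum_filter]
  refine Finset.sum_congr rfl fun m hm => ?_
  have hdeg : m.degree = d := by
    rw [Finsupp.degree_eq_weight_one]; exact hf (mem_support_iff.mp hm)
  rw [rename_monomial, coeff_monomial, Finsupp.mapDomain_ite_fin_two, hdeg]
  refine if_congr ⟨fun h => ?_, fun h => by rw [h]⟩ rfl rfl
  simpa using DFunLike.congr_fun h 1

theorem sum_coeff_filter_apply_eq_degree (hf : f.IsHomogeneous d) (i : σ) :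
    ∑ m ∈ f.support with m i = d, f.coeff m = f.coeff (Finsupp.single i d) := by
  rw [Finset.sum_filter]
  refine (Finset.sum_eq_single (Finsupp.single i d) (fun m hm hne => if_neg fun hmi => hne ?_)
    (fun h => by simp [notMem_support_iff.mp h])).trans (by simp)
  have hdeg : m.degree = m i := by
    rw [hmi, Finsupp.degree_eq_weight_one]; exact hf (mem_support_iff.mp hm)
  rw [Finsupp.eq_single_of_degree_eq_apply hdeg, hmi]

end IsHomogeneous

end MvPolynomial

theorem coeff_sum_on_levels_eq_zero_general {K : Type*} [Field K] [CharZero K] {n : ℕ}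
    (d : ℕ) (f : MvPolynomial (Fin n) K) (hf : f.IsHomogeneous d)
    (hann : (∑ t, MvPolynomial.pderiv t f) = 0)
    (i : Fin n) (hpure : Finsupp.single i d ∉ f.support) :
    ∀ k < d, ∑ m ∈ f.support.filter (fun m => m i = k), f.coeff m = 0 := by
  intro k hk
  set g := rename (fun j => if j = i then 1 else 0 : Fin n → Fin 2) f
  have hg : pderiv 0 g + pderiv 1 g = 0 := by
    rw [← Fin.sum_univ_two (fun t => pderiv t g), sum_pderiv_rename, hann, map_zero]
  have htop : coeff (Finsupp.single 1 (d - k + k)) g = 0 := by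
    have hpower := hf.coeff_rename_ite_fin_two i d
    rw [Nat.sub_self, Finsupp.single_zero, zero_add, hf.sum_coeff_filter_apply_eq_degree] at hpower
    rw [Nat.sub_add_cancel hk.le, hpower, notMem_support_iff.mp hpure]
  rw [← hf.coeff_rename_ite_fin_two i k]
  exact coeff_eq_zero_of_pderiv_add_eq_zero hg htop

/-- If `f` is a non-zero form of degree `d` in `K[y_1,…,y_n]` with
`(x_1 + ⋯ + x_n) ∘ f = 0` (each `x_i` acting as `∂/∂y_i`), and the pure power `y_i^d`
does not appear in `f`, then for each `0 ≤ k ≤ d-1` the sum of the coefficients of `f`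
over the monomials `m` of `f` with `deg_i(m) = k` is zero. -/
theorem coeff_sum_on_levels_eq_zero {K : Type*} [Field K] [CharZero K] {n : ℕ}
    (d : ℕ) (f : MvPolynomial (Fin n) K) (hf0 : f ≠ 0) (hf : f.IsHomogeneous d)
    (hann : (∑ t, MvPolynomial.pderiv t f) = 0)
    (i : Fin n) (hpure : Finsupp.single i d ∉ f.support) :
    ∀ k < d, ∑ m ∈ f.support.filter (fun m => m i = k), f.coeff m = 0 :=
  coeff_sum_on_levels_eq_zero_general d f hf hann i hpure
end

section
/- Let K be a field of characteristic zero and let f be a non-zero form of degree d in R = K[y_1,…,y_n] such that (x_1 + ⋯ + x_n) ∘ f = 0. Fix i with 1 ≤ i ≤ n and let a = max{ deg_i(m) : m ∈ supp(f) }. Then for every 0 ≤ k ≤ a there exists a monomial m ∈ supp(f) with deg_i(m) = k. -/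
/-!
Comparing coefficients of `y^ν` in `∑ₜ ∂f/∂yₜ = 0` gives
`∑ₜ (νₜ + 1) · coeff_{ν + eₜ} f = 0`. If `ν i = j` and no monomial of `f` has `i`-degree `j`,
every term with `t ≠ i` vanishes, so `(j + 1) · coeff_{ν + eᵢ} f = 0`; in characteristic zero
this forces `coeff_{ν + eᵢ} f = 0`. Hence a monomial of `i`-degree `j + 1` in `supp f` forces one
of `i`-degree `j`, and descending from a monomial of maximal `i`-degree fills every level.
-/

open MvPolynomial Finset

namespace MvPolynomial

variable {R σ : Type*} [CommRing R] [IsDomain R] [CharZero R] [Fintype σ]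
  {f : MvPolynomial σ R}

theorem exists_mem_support_apply_eq_of_succ (hann : ∑ t, pderiv t f = 0) {i : σ} {j : ℕ}
    {m : σ →₀ ℕ} (hm : m ∈ f.support) (hmi : m i = j + 1) :
    ∃ m' ∈ f.support, m' i = j := by
  by_contra! hlevel
  set ν := m - Finsupp.single i 1
  have hνi : ν i = j := by simp [ν, hmi]
  have hνm : ν + Finsupp.single i 1 = m := tsub_add_cancel_of_le <| by
    simp [Finsupp.single_le_iff, hmi]
  have hoff : ∀ t ≠ i, coeff ν (pderiv t f) = 0 := fun t hti => by
    rw [coeff_pderiv, notMem_support_iff.mp fun h => hlevel _ h (by simp [hti, hνi]), zero_mul]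
  have hcoeff : coeff ν (∑ t, pderiv t f) = coeff m f * (j + 1) := by
    rw [coeff_sum, Finset.sum_eq_single i (fun t _ => hoff t) (by simp), coeff_pderiv, hνm, hνi]
  rw [hann, coeff_zero, eq_comm, mul_eq_zero] at hcoeff
  exact hcoeff.elim (mem_support_iff.mp hm) (Nat.cast_add_one_ne_zero j)

theorem exists_mem_support_apply_eq_of_le (hann : ∑ t, pderiv t f = 0) {i : σ} {k : ℕ}
    {m : σ →₀ ℕ} (hm : m ∈ f.support) (hk : k ≤ m i) :
    ∃ m' ∈ f.support, m' i = k := by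
  induction hk using Nat.decreasingInduction with
  | self => exact ⟨m, hm, rfl⟩
  | of_succ j _ ih =>
    obtain ⟨m', hm', hm'i⟩ := ih
    exact exists_mem_support_apply_eq_of_succ hann hm' hm'i

end MvPolynomial

theorem levels_nonempty_general {K : Type*} [Field K] [CharZero K] {n : ℕ}
    (f : MvPolynomial (Fin n) K) (hf0 : f ≠ 0)
    (hann : (∑ t, MvPolynomial.pderiv t f) = 0)
    (i : Fin n) (a : ℕ) (ha : a = f.support.sup (fun m => m i)) :
    ∀ k ≤ a, ∃ m ∈ f.support, m i = k := by
  obtain ⟨m, hm, hmi⟩ :=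
    Finset.exists_mem_eq_sup f.support (support_nonempty.mpr hf0) (fun m => m i)
  intro k hk
  exact exists_mem_support_apply_eq_of_le hann hm (hk.trans (ha.trans hmi).le)

/-- If `f` is a non-zero form of degree `d` in `K[y_1,…,y_n]` with
`(x_1 + ⋯ + x_n) ∘ f = 0` (each `x_i` acting as `∂/∂y_i`), and
`a = max { deg_i(m) : m ∈ supp f }`, then for every `0 ≤ k ≤ a` there is a monomial
`m ∈ supp f` with `deg_i(m) = k`. -/
theorem levels_nonempty {K : Type*} [Field K] [CharZero K] {n : ℕ}
    (d : ℕ) (f : MvPolynomial (Fin n) K) (hf0 : f ≠ 0) (hf : f.IsHomogeneous d)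
    (hann : (∑ t, MvPolynomial.pderiv t f) = 0)
    (i : Fin n) (a : ℕ) (ha : a = f.support.sup (fun m => m i)) :
    ∀ k ≤ a, ∃ m ∈ f.support, m i = k :=
  levels_nonempty_general f hf0 hann i a ha
end

section
/- Let K be a field of characteristic zero and let f ≠ 0 be a form of degree d in R = K[y_1,…,y_n]. If ℓ = x_1 + ⋯ + x_n satisfies ℓ^{d−a} ∘ f = 0 for some integer a with 0 ≤ a ≤ d−1, then |supp(f)| ≥ a + 2. -/
/-!
Let `ℓ = ∑ ∂ᵢ`. As `⁅∂ᵢ, ℓ⁆` is a derivation killing every variable, `ℓ` commutes with each `∂ᵢ`,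
and the Leibniz rule gives `ℓ^{k+1} (yᵢ g) = yᵢ ℓ^{k+1} g + (k + 1) ℓ^k g`.
Induct on `deg f = a + k`, where `ℓ^k f = 0`, and pick a variable `yᵢ` occurring in `f`.
If `yᵢ` is missing from some monomial of `f`, then `∂ᵢ f ≠ 0` has degree `(a - 1) + k`, is still
killed by `ℓ^k`, and has fewer monomials than `f` (for `a = 0` those two monomials suffice).
Otherwise `f = yᵢ g`, and `h = ℓ^{k-1} g` satisfies `yᵢ ℓ h = -k h`. Then `yᵢ ∣ h` and `h / yᵢ`
satisfies the same equation with `k + 1`, so `h = 0` by descent on the degree: `g` has the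
monomials of `f`, degree `a + (k - 1)`, and `ℓ^{k-1} g = 0`.
-/

open MvPolynomial Finset

namespace MvPolynomial

variable {σ R : Type*}

section Support

variable [CommSemiring R] {i : σ} {f : MvPolynomial σ R} {α : σ →₀ ℕ}

theorem card_support_pderiv_lt (hα : α ∈ f.support) (hαi : α i = 0) :
    #(pderiv i f).support < #f.support := by
  have hsub : (pderiv i f).support.map (addRightEmbedding (Finsupp.single i 1)) ⊆ f.support := by
    intro β hβ
    obtain ⟨γ, hγ, rfl⟩ := mem_map.1 hβ
    rw [mem_support_iff, coeff_pderiv] at hγ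
    exact mem_support_iff.2 (left_ne_zero_of_mul hγ)
  have hα' : α ∉ (pderiv i f).support.map (addRightEmbedding (Finsupp.single i 1)) := by
    simp only [mem_map, addRightEmbedding_apply, not_exists, not_and]
    intro γ _ hγ
    simpa [hαi] using DFunLike.congr_fun hγ i
  rw [← card_map (addRightEmbedding (Finsupp.single i 1))]
  exact card_lt_card ((ssubset_iff_of_subset hsub).2 ⟨α, hα, hα'⟩)

theorem pderiv_ne_zero_of_mem_support [NoZeroDivisors R] [CharZero R] (hα : α ∈ f.support)
    (hαi : α i ≠ 0) : pderiv i f ≠ 0 := by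
  have hle : Finsupp.single i 1 ≤ α := Finsupp.single_le_iff.2 (Nat.one_le_iff_ne_zero.2 hαi)
  intro h
  have hcoeff := coeff_pderiv (i := i) f (α - Finsupp.single i 1)
  rw [h, coeff_zero, tsub_add_cancel_of_le hle, eq_comm] at hcoeff
  exact mul_ne_zero (mem_support_iff.1 hα) (Nat.cast_add_one_ne_zero _) hcoeff

theorem X_dvd_of_forall_mem_support (h : ∀ α ∈ f.support, α i ≠ 0) : X i ∣ f := by
  rw [X_dvd_iff_modMonomial_eq_zero]
  ext β
  by_cases hβ : Finsupp.single i 1 ≤ β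
  · rw [coeff_modMonomial_of_le _ hβ, coeff_zero]
  · rw [coeff_modMonomial_of_not_le _ hβ, coeff_zero, ← notMem_support_iff]
    exact fun hf => hβ (Finsupp.single_le_iff.2 (Nat.one_le_iff_ne_zero.2 (h β hf)))

theorem IsHomogeneous.of_X_mul {g : MvPolynomial σ R} {d : ℕ}
    (h : (X i * g).IsHomogeneous (d + 1)) : g.IsHomogeneous d := by
  intro β hβ
  have hdeg := h (show coeff (Finsupp.single i 1 + β) (X i * g) ≠ 0 by rwa [coeff_X_mul])
  rw [map_add, Finsupp.weight_single, Pi.one_apply, one_smul] at hdeg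
  omega

end Support

section CommRing

variable [Fintype σ] [CommRing R]

noncomputable def sumPderiv (σ R : Type*) [Fintype σ] [CommRing R] :
    Derivation R (MvPolynomial σ R) (MvPolynomial σ R) :=
  ∑ i, pderiv i

theorem sumPderiv_apply (p : MvPolynomial σ R) : sumPderiv σ R p = ∑ i, pderiv i p := by
  rw [sumPderiv, ← Derivation.coeFnAddMonoidHom_apply, map_sum, Finset.sum_apply]
  rfl

@[simp]
theorem sumPderiv_X (i : σ) : sumPderiv σ R (X i) = 1 := by
  classical
  simp [sumPderiv_apply, pderiv_X]

theorem pderiv_sumPderiv (i : σ) (p : MvPolynomial σ R) :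
    pderiv i (sumPderiv σ R p) = sumPderiv σ R (pderiv i p) := by
  classical
  have h : ⁅pderiv i, sumPderiv σ R⁆ = 0 := derivation_ext fun j => by
    rw [Derivation.commutator_apply, sumPderiv_X, pderiv_X]
    by_cases hij : i = j <;> simp [hij]
  simpa [Derivation.commutator_apply, sub_eq_zero] using congr($h p)

theorem pderiv_iterate_sumPderiv (i : σ) (k : ℕ) (p : MvPolynomial σ R) :
    pderiv i ((sumPderiv σ R)^[k] p) = (sumPderiv σ R)^[k] (pderiv i p) :=
  (Function.Commute.iterate_right (pderiv_sumPderiv i) k).eq p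

theorem iterate_sumPderiv_X_mul (i : σ) (k : ℕ) (p : MvPolynomial σ R) :
    (sumPderiv σ R)^[k + 1] (X i * p) =
      X i * (sumPderiv σ R)^[k + 1] p + (k + 1 : ℕ) • (sumPderiv σ R)^[k] p := by
  induction k with
  | zero => simp [Derivation.leibniz, add_comm]
  | succ k ih =>
    rw [Function.iterate_succ_apply', ih, map_add, Derivation.leibniz, map_nsmul,
      ← Function.iterate_succ_apply' (sumPderiv σ R),
      ← Function.iterate_succ_apply' (sumPderiv σ R)]
    simp only [sumPderiv_X, smul_eq_mul, mul_one, succ_nsmul]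
    abel

end CommRing

section Field

variable [Fintype σ] [Field R] [CharZero R]

theorem eq_zero_of_X_mul_sumPderiv_eq_neg_nsmul {i : σ} {c : ℕ} (hc : c ≠ 0)
    {p : MvPolynomial σ R} (h : X i * sumPderiv σ R p = -(c • p)) : p = 0 := by
  induction hd : p.totalDegree using Nat.strong_induction_on generalizing p c with
  | _ d ih =>
  by_contra hp
  set q := -((c : R)⁻¹ • sumPderiv σ R p)
  have hpq : p = X i * q := by
    rw [mul_neg, mul_smul_comm, h, smul_neg, neg_neg, ← Nat.cast_smul_eq_nsmul R, smul_smul,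
      inv_mul_cancel₀ (Nat.cast_ne_zero.2 hc), one_smul]
  have hq : q ≠ 0 := by rintro hq; exact hp (by rw [hpq, hq, mul_zero])
  have hdeg : q.totalDegree < d := by
    rw [← hd, hpq, totalDegree_mul_of_isDomain (X_ne_zero i) hq, totalDegree_X]
    omega
  have hq' : X i * sumPderiv σ R q = -((c + 1) • q) := by
    rw [hpq, Derivation.leibniz, sumPderiv_X, smul_eq_mul, smul_eq_mul, mul_one] at h
    apply mul_left_cancel₀ (X_ne_zero i)
    simp only [nsmul_eq_mul, Nat.cast_succ] at h ⊢
    linear_combination h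
  exact hq (ih _ hdeg (Nat.succ_ne_zero c) hq' rfl)

theorem iterate_sumPderiv_eq_zero_of_X_mul {i : σ} {k : ℕ} {p : MvPolynomial σ R}
    (h : (sumPderiv σ R)^[k + 1] (X i * p) = 0) : (sumPderiv σ R)^[k] p = 0 := by
  refine eq_zero_of_X_mul_sumPderiv_eq_neg_nsmul (i := i) (Nat.succ_ne_zero k) ?_
  rw [← Function.iterate_succ_apply' (sumPderiv σ R), eq_neg_iff_add_eq_zero,
    ← iterate_sumPderiv_X_mul, h]

theorem add_two_le_card_support_of_iterate_sumPderiv_eq_zero {a k : ℕ}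
    {f : MvPolynomial σ R} (hf0 : f ≠ 0) (hf : f.IsHomogeneous (a + k))
    (hann : (sumPderiv σ R)^[k] f = 0) : a + 2 ≤ #f.support := by
  induction hd : a + k using Nat.strong_induction_on generalizing a k f with
  | _ d ih =>
  obtain ⟨k, rfl⟩ : ∃ k', k = k' + 1 :=
    Nat.exists_eq_succ_of_ne_zero (by rintro rfl; exact hf0 hann)
  obtain ⟨α₁, hα₁⟩ := support_nonempty.2 hf0
  obtain ⟨i, hi⟩ : ∃ i, α₁ i ≠ 0 := by
    have hdeg := hf (mem_support_iff.1 hα₁)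
    exact DFunLike.ne_iff.1 (show α₁ ≠ 0 by rintro rfl; simp at hdeg)
  by_cases hmix : ∃ α₀ ∈ f.support, α₀ i = 0
  · obtain ⟨α₀, hα₀, hα₀i⟩ := hmix
    rcases a with _ | a
    · exact one_lt_card.2 ⟨α₀, hα₀, α₁, hα₁, by rintro rfl; exact hi hα₀i⟩
    · have hfi : (sumPderiv σ R)^[k + 1] (pderiv i f) = 0 := by
        rw [← pderiv_iterate_sumPderiv, hann, map_zero]
      have hcard_pderiv := ih (a + (k + 1)) (by omega) (pderiv_ne_zero_of_mem_support hα₁ hi)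
        ((show a + 1 + (k + 1) - 1 = a + (k + 1) by omega) ▸ hf.pderiv) hfi rfl
      have hlt := card_support_pderiv_lt hα₀ hα₀i
      omega
  · push Not at hmix
    obtain ⟨g, rfl⟩ := X_dvd_of_forall_mem_support hmix
    rw [support_X_mul, card_map]
    exact ih (a + k) (by omega) (right_ne_zero_of_mul hf0) (IsHomogeneous.of_X_mul hf)
      (iterate_sumPderiv_eq_zero_of_X_mul hann) rfl

end Field

end MvPolynomial

theorem support_card_ge_of_ell_pow_ann_general {K : Type*} [Field K] [CharZero K] {n : ℕ}
    (d a : ℕ) (ha : a ≤ d - 1)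
    (f : MvPolynomial (Fin n) K) (hf0 : f ≠ 0) (hf : f.IsHomogeneous d)
    (hann : (fun g : MvPolynomial (Fin n) K => ∑ t, MvPolynomial.pderiv t g)^[d - a] f = 0) :
    a + 2 ≤ f.support.card := by
  have hell : (fun g : MvPolynomial (Fin n) K => ∑ t, pderiv t g) = sumPderiv (Fin n) K :=
    funext fun g => (sumPderiv_apply g).symm
  rw [hell] at hann
  rw [show d = a + (d - a) by omega] at hf
  exact add_two_le_card_support_of_iterate_sumPderiv_eq_zero hf0 hf hann

/-- If `f ≠ 0` is a form of degree `d` in `K[y_1,…,y_n]` and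
`ℓ^{d-a} ∘ f = 0` where `ℓ = x_1 + ⋯ + x_n` acts with `x_i = ∂/∂y_i` and
`0 ≤ a ≤ d - 1`, then `|supp f| ≥ a + 2`. -/
theorem support_card_ge_of_ell_pow_ann {K : Type*} [Field K] [CharZero K] {n : ℕ}
    (d a : ℕ) (ha : a ≤ d - 1) (hd : 1 ≤ d)
    (f : MvPolynomial (Fin n) K) (hf0 : f ≠ 0) (hf : f.IsHomogeneous d)
    (hann : (fun g : MvPolynomial (Fin n) K => ∑ t, MvPolynomial.pderiv t g)^[d - a] f = 0) :
    a + 2 ≤ f.support.card :=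
  support_card_ge_of_ell_pow_ann_general d a ha f hf0 hf hann
end

section
/- Let K be a field of characteristic zero and let f be a non-zero form of degree d ≥ 2 in R = K[y_1,y_2,y_3] such that (x_1 + x_2 + x_3) ∘ f = 0. For 1 ≤ i ≤ 3 set a_i = max{ deg_i(m) : m ∈ supp(f) }. Then for every 1 ≤ i ≤ 3 and every 0 ≤ k ≤ a_i, the number of monomials m ∈ supp(f) with deg_i(m) = k is at least d − a_i + 1. -/
/-!
Fix `i` and let `G_k` be the coefficient of `y_i ^ k` in `f`, dehomogenised at `y_{i+2} = 1` and
written in `t = y_{i+1}`; by homogeneity its terms correspond to the monomials of `f` of `i`-degree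
`k`. Comparing coefficients in `(∂_i + ∂_{i+1} + ∂_{i+2}) f = 0` gives
`(t - 1) G_k' - (d - k) G_k = (k + 1) G_{k+1}`. If `(t - 1) G' - e G = H`, then `G` and `H` have
the same multiplicity at `t = 1` as long as it is below `e`; so, starting from `G_{a_i + 1} = 0`,
a downward induction shows that `(t - 1) ^ (d - a_i)` divides every `G_k`, and `G_k ≠ 0` for
`k ≤ a_i`.
Finally, in characteristic zero a non-zero polynomial divisible by `(t - 1) ^ N` has more than `N`
terms.
-/

open Finset

namespace Polynomial

section CommRing

variable {R : Type*} [CommRing R]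

lemma coeff_X_mul_derivative (p : R[X]) (n : ℕ) :
    (X * derivative p).coeff n = n * p.coeff n := by
  cases n <;> simp [coeff_X_mul, coeff_derivative]; ring

lemma X_sub_C_mul_derivative_X_sub_C_pow (a : R) (n : ℕ) :
    (X - C a) * derivative ((X - C a) ^ n) = C (n : R) * (X - C a) ^ n := by
  cases n with
  | zero => simp
  | succ n => rw [derivative_X_sub_C_pow, Nat.add_sub_cancel, pow_succ]; ring

variable [IsDomain R]

lemma not_X_sub_C_dvd_monomial {a : R} (ha : a ≠ 0) {n : ℕ} {c : R} (hc : c ≠ 0) :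
    ¬ X - C a ∣ monomial n c := by
  rw [dvd_iff_isRoot]
  simp [ha, hc]

variable [CharZero R]

lemma support_X_mul_derivative_sub_C_mul (p : R[X]) (s : ℕ) :
    (X * derivative p - C (s : R) * p).support = p.support.erase s := by
  ext n
  rw [mem_erase, mem_support_iff, mem_support_iff, coeff_sub, coeff_X_mul_derivative,
    coeff_C_mul, ← sub_mul, mul_ne_zero_iff, sub_ne_zero, ne_eq, Nat.cast_inj]

/-- The Euler-type operator `p ↦ X p' - s p` deletes the monomial of degree `s` from `p` and
lowers the multiplicity of every non-zero root by at most one. -/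
theorem lt_card_support_of_X_sub_C_pow_dvd {a : R} (ha : a ≠ 0) :
    ∀ {N : ℕ} {p : R[X]}, p ≠ 0 → (X - C a) ^ N ∣ p → N < #p.support
  | 0, p, hp, _ => card_pos.2 (support_nonempty.2 hp)
  | N + 1, p, hp, hdvd => by
    obtain ⟨s, hs⟩ := support_nonempty.2 hp
    have hq_dvd : (X - C a) ^ N ∣ X * derivative p - C (s : R) * p :=
      dvd_sub (dvd_mul_of_dvd_right (pow_sub_one_dvd_derivative_of_pow_dvd hdvd) _)
        (dvd_mul_of_dvd_right ((pow_dvd_pow _ N.le_succ).trans hdvd) _)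
    have hq : X * derivative p - C (s : R) * p ≠ 0 := by
      intro h0
      have : #p.support ≤ 1 := by
        rw [← card_erase_add_one hs, ← support_X_mul_derivative_sub_C_mul, h0, support_zero,
          card_empty]
      obtain ⟨n, c, rfl⟩ := card_support_le_one_iff_monomial.1 this
      exact not_X_sub_C_dvd_monomial ha (by simpa using hp)
        ((dvd_pow_self _ N.succ_ne_zero).trans hdvd)
    have := lt_card_support_of_X_sub_C_pow_dvd ha hq hq_dvd
    rw [support_X_mul_derivative_sub_C_mul, card_erase_of_mem hs] at this
    omega

end CommRing

theorem X_sub_C_pow_dvd_of_dvd_X_sub_C_mul_derivative_sub {K : Type*} [Field K] [CharZero K]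
    {a : K} {e N : ℕ} (hN : N ≤ e) {p : K[X]}
    (h : (X - C a) ^ N ∣ (X - C a) * derivative p - C (e : K) * p) : (X - C a) ^ N ∣ p := by
  induction N with
  | zero => exact one_dvd p
  | succ N ih =>
    obtain ⟨q, rfl⟩ := ih (by omega) ((pow_dvd_pow _ N.le_succ).trans h)
    have hexpand : (X - C a) * derivative ((X - C a) ^ N * q) - C (e : K) * ((X - C a) ^ N * q) =
        (X - C a) ^ N * (C ((N : K) - e) * q + (X - C a) * derivative q) := by
      rw [derivative_mul, mul_add, ← mul_assoc, X_sub_C_mul_derivative_X_sub_C_pow, map_sub]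
      ring
    rw [hexpand, pow_succ, mul_dvd_mul_iff_left (pow_ne_zero _ (X_sub_C_ne_zero a)),
      dvd_add_left (dvd_mul_right _ _)] at h
    have hNe : (N : K) - e ≠ 0 := sub_ne_zero.2 (by exact_mod_cast (by omega : N ≠ e))
    exact mul_dvd_mul_left _ ((isUnit_C.2 (Ne.isUnit hNe)).dvd_mul_left.1 h)

end Polynomial

noncomputable def cycExp (i : Fin 3) (a b c : ℕ) : Fin 3 →₀ ℕ :=
  Finsupp.single i a + Finsupp.single (i + 1) b + Finsupp.single (i + 2) c

section cycExp

variable (i : Fin 3) (a b c : ℕ)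

@[simp] lemma cycExp_apply_self : cycExp i a b c i = a := by fin_cases i <;> simp [cycExp]

@[simp] lemma cycExp_apply_add_one : cycExp i a b c (i + 1) = b := by
  fin_cases i <;> simp [cycExp]

@[simp] lemma cycExp_apply_add_two : cycExp i a b c (i + 2) = c := by
  fin_cases i <;> simp [cycExp]

@[simp] lemma degree_cycExp : (cycExp i a b c).degree = a + b + c := by simp [cycExp]

lemma cycExp_eq_self (m : Fin 3 →₀ ℕ) : cycExp i (m i) (m (i + 1)) (m (i + 2)) = m := by
  ext t
  fin_cases i <;> fin_cases t <;> simp [cycExp]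

end cycExp

open MvPolynomial

section Slice

variable {R : Type*} [CommRing R] {f : MvPolynomial (Fin 3) R} {d : ℕ} (i : Fin 3)

variable (f d) in
/-- The coefficient of `y_i ^ k` in `f`, dehomogenised at `y_{i+2} = 1`, as a polynomial in
`y_{i+1}`. -/
noncomputable def dehomSlice (k : ℕ) : Polynomial R :=
  ∑ l ∈ range (d + 1), Polynomial.monomial l (coeff (cycExp i k l (d - k - l)) f)

lemma coeff_cycExp_eq_zero (hf : f.IsHomogeneous d) {a b c : ℕ} (h : a + b + c ≠ d) :
    coeff (cycExp i a b c) f = 0 :=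
  hf.coeff_eq_zero (by rwa [degree_cycExp])

lemma cycExp_eq_of_mem_support (hf : f.IsHomogeneous d) {m : Fin 3 →₀ ℕ}
    (hm : m ∈ f.support) :
    cycExp i (m i) (m (i + 1)) (d - m i - m (i + 1)) = m := by
  have hdeg : m i + m (i + 1) + m (i + 2) = d := by
    rw [← degree_cycExp, cycExp_eq_self]
    by_contra h
    exact mem_support_iff.1 hm (hf.coeff_eq_zero h)
  rw [← hdeg, show m i + m (i + 1) + m (i + 2) - m i - m (i + 1) = m (i + 2) by omega,
    cycExp_eq_self]

lemma coeff_dehomSlice (hf : f.IsHomogeneous d) (k l : ℕ) :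
    (dehomSlice f d i k).coeff l = coeff (cycExp i k l (d - k - l)) f := by
  simp only [dehomSlice, Polynomial.finsetSum_coeff, Polynomial.coeff_monomial, sum_ite_eq',
    mem_range]
  split_ifs with hl
  · rfl
  · exact (coeff_cycExp_eq_zero i hf (by omega)).symm

theorem card_support_dehomSlice (hf : f.IsHomogeneous d) (k : ℕ) :
    #(dehomSlice f d i k).support = #{m ∈ f.support | m i = k} := by
  symm
  refine card_nbij' (· (i + 1)) (fun l ↦ cycExp i k l (d - k - l)) ?_ ?_ ?_ ?_
  · rintro m hmk
    obtain ⟨hm, rfl⟩ := mem_filter.1 hmk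
    simpa [coeff_dehomSlice i hf, cycExp_eq_of_mem_support i hf hm] using hm
  · intro l hl
    simpa [coeff_dehomSlice i hf] using hl
  · rintro m hmk
    obtain ⟨hm, rfl⟩ := mem_filter.1 hmk
    exact cycExp_eq_of_mem_support i hf hm
  · exact fun l _ ↦ cycExp_apply_add_one i k l _

lemma coeff_cycExp_recurrence (hf : f.IsHomogeneous d) (hann : ∑ t, pderiv t f = 0) (k l : ℕ) :
    ((k : R) + 1) * coeff (cycExp i (k + 1) l (d - (k + 1) - l)) f
      + ((l : R) + 1) * coeff (cycExp i k (l + 1) (d - k - (l + 1))) f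
      + ((d - k - l : ℕ) : R) * coeff (cycExp i k l (d - k - l)) f = 0 := by
  obtain hkl | hkl := lt_or_ge (k + l) d
  · have h := congrArg (coeff (cycExp i k l (d - (k + 1) - l))) hann
    rw [coeff_sum, coeff_zero, ← Equiv.sum_comp (Equiv.addLeft i), Fin.sum_univ_three] at h
    have e1 : cycExp i k l (d - (k + 1) - l) + Finsupp.single i 1 =
        cycExp i (k + 1) l (d - (k + 1) - l) := by
      simp only [cycExp, Finsupp.single_add]; abel
    have e2 : cycExp i k l (d - (k + 1) - l) + Finsupp.single (i + 1) 1 =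
        cycExp i k (l + 1) (d - k - (l + 1)) := by
      rw [show d - k - (l + 1) = d - (k + 1) - l by omega]
      simp only [cycExp, Finsupp.single_add]; abel
    have e3 : cycExp i k l (d - (k + 1) - l) + Finsupp.single (i + 2) 1 =
        cycExp i k l (d - k - l) := by
      rw [show d - k - l = d - (k + 1) - l + 1 by omega]
      simp only [cycExp, Finsupp.single_add]; abel
    simp only [Equiv.coe_addLeft, add_zero, coeff_pderiv, e1, e2, e3, cycExp_apply_self,
      cycExp_apply_add_one, cycExp_apply_add_two] at h
    have hcast : ((d - k - l : ℕ) : R) = ((d - (k + 1) - l : ℕ) : R) + 1 := by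
      rw [← Nat.cast_succ]; congr 1; omega
    rw [hcast]
    linear_combination h
  · rw [coeff_cycExp_eq_zero i hf (by omega), coeff_cycExp_eq_zero i hf (by omega),
      show d - k - l = 0 by omega]
    simp

theorem dehomSlice_recurrence (hf : f.IsHomogeneous d) (hann : ∑ t, pderiv t f = 0) (k : ℕ) :
    (Polynomial.X - Polynomial.C 1) * Polynomial.derivative (dehomSlice f d i k)
        - Polynomial.C ((d - k : ℕ) : R) * dehomSlice f d i k =
      Polynomial.C ((k : R) + 1) * dehomSlice f d i (k + 1) := by
  refine Polynomial.ext fun l ↦ ?_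
  simp only [sub_mul, map_one, one_mul, Polynomial.coeff_sub, Polynomial.coeff_X_mul_derivative,
    Polynomial.coeff_derivative, Polynomial.coeff_C_mul, coeff_dehomSlice i hf]
  obtain hl | hl := le_or_gt l (d - k)
  · have hcast : ((d - k : ℕ) : R) = ((d - k - l : ℕ) : R) + l := by
      rw [← Nat.cast_add]; congr 1; omega
    rw [hcast]
    linear_combination -coeff_cycExp_recurrence i hf hann k l
  · rw [coeff_cycExp_eq_zero i hf (a := k) (by omega),
      coeff_cycExp_eq_zero i hf (a := k) (b := l + 1) (by omega),
      coeff_cycExp_eq_zero i hf (a := k + 1) (by omega)]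
    ring

lemma dehomSlice_eq_zero_of_sup_lt (hf : f.IsHomogeneous d) {k : ℕ}
    (hk : f.support.sup (· i) < k) : dehomSlice f d i k = 0 := by
  rw [← Polynomial.card_support_eq_zero, card_support_dehomSlice i hf, card_eq_zero,
    filter_eq_empty_iff]
  rintro m hm rfl
  exact hk.not_ge (le_sup (f := (· i)) hm)

end Slice

section Downward

variable {K : Type*} [Field K] [CharZero K] {f : MvPolynomial (Fin 3) K} {d : ℕ} (i : Fin 3)

lemma dehomSlice_ne_zero (hf : f.IsHomogeneous d) (hann : ∑ t, pderiv t f = 0) (hf0 : f ≠ 0)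
    {k : ℕ} (hk : k ≤ f.support.sup (· i)) : dehomSlice f d i k ≠ 0 := by
  induction hk using Nat.decreasingInduction with
  | self =>
    obtain ⟨m, hm, hmi⟩ := exists_mem_eq_sup f.support (support_nonempty.2 hf0) (· i)
    rw [Ne, ← Polynomial.card_support_eq_zero, card_support_dehomSlice i hf, ← Ne,
      ← pos_iff_ne_zero, card_pos]
    exact ⟨m, mem_filter.2 ⟨hm, hmi.symm⟩⟩
  | of_succ k _ ih =>
    intro h0
    have hrec := dehomSlice_recurrence i hf hann k
    rw [h0, Polynomial.derivative_zero, mul_zero, mul_zero, sub_zero, zero_eq_mul,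
      Polynomial.C_eq_zero] at hrec
    exact ih (hrec.resolve_left (Nat.cast_add_one_ne_zero k))

theorem X_sub_one_pow_dvd_dehomSlice (hf : f.IsHomogeneous d) (hann : ∑ t, pderiv t f = 0)
    (k : ℕ) :
    (Polynomial.X - Polynomial.C 1) ^ (d - f.support.sup (· i)) ∣ dehomSlice f d i k := by
  set A := f.support.sup (· i)
  have hzero : ∀ k, A < k → (Polynomial.X - Polynomial.C 1) ^ (d - A) ∣ dehomSlice f d i k :=
    fun k hk ↦ by rw [dehomSlice_eq_zero_of_sup_lt i hf hk]; exact dvd_zero _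
  have step : ∀ k ≤ A,
      (Polynomial.X - Polynomial.C 1) ^ (d - A) ∣ dehomSlice f d i (k + 1) →
        (Polynomial.X - Polynomial.C 1) ^ (d - A) ∣ dehomSlice f d i k := fun k hk h ↦
    Polynomial.X_sub_C_pow_dvd_of_dvd_X_sub_C_mul_derivative_sub (e := d - k) (by omega)
      (by rw [dehomSlice_recurrence i hf hann]; exact dvd_mul_of_dvd_right h _)
  obtain hk | hk := le_or_gt k A
  · induction hk using Nat.decreasingInduction with
    | self => exact step A le_rfl (hzero _ A.lt_succ_self)
    | of_succ k hkA ih => exact step k hkA.le ih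
  · exact hzero k hk

end Downward

theorem level_card_ge_general {K : Type*} [Field K] [CharZero K]
    (d : ℕ) (f : MvPolynomial (Fin 3) K) (hf0 : f ≠ 0)
    (hf : f.IsHomogeneous d)
    (hann : (∑ t, MvPolynomial.pderiv t f) = 0)
    (a : Fin 3 → ℕ) (ha : ∀ i, a i = f.support.sup (fun m => m i)) :
    ∀ i : Fin 3, ∀ k ≤ a i,
      d - a i + 1 ≤ (f.support.filter (fun m => m i = k)).card := by
  intro i k hk
  rw [ha i] at hk
  rw [ha i, ← card_support_dehomSlice i hf k]
  exact Polynomial.lt_card_support_of_X_sub_C_pow_dvd one_ne_zero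
    (dehomSlice_ne_zero i hf hann hf0 hk) (X_sub_one_pow_dvd_dehomSlice i hf hann k)

/-- If `f` is a non-zero form of degree `d ≥ 2` in `K[y_1,y_2,y_3]` with
`(x_1 + x_2 + x_3) ∘ f = 0` (each `x_i` acting as `∂/∂y_i`), and
`a_i = max { deg_i(m) : m ∈ supp f }`, then for every `i` and every `0 ≤ k ≤ a_i`
the number of monomials `m ∈ supp f` with `deg_i(m) = k` is at least `d - a_i + 1`. -/
theorem level_card_ge {K : Type*} [Field K] [CharZero K]
    (d : ℕ) (hd : 2 ≤ d) (f : MvPolynomial (Fin 3) K) (hf0 : f ≠ 0)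
    (hf : f.IsHomogeneous d)
    (hann : (∑ t, MvPolynomial.pderiv t f) = 0)
    (a : Fin 3 → ℕ) (ha : ∀ i, a i = f.support.sup (fun m => m i)) :
    ∀ i : Fin 3, ∀ k ≤ a i,
      d - a i + 1 ≤ (f.support.filter (fun m => m i = k)).card :=
  level_card_ge_general d f hf0 hf hann a ha
end

section
/- Let K be a field of characteristic zero, n ≥ 4, d ≥ 2, and let f be a non-zero form of degree d in R = K[y_1,…,y_n] such that (x_1 + ⋯ + x_n) ∘ f = 0. For 1 ≤ i ≤ n set a_i = max{ deg_i(m) : m ∈ supp(f) }. Then |supp(f)| ≥ (a_i + 1)(d − a_i + 1) for every i with a_i ≠ 0; in particular |supp(f)| ≥ max{ (a_i+1)(d−a_i+1) : a_i ≠ 0 }. -/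
/-!
Write `L = ∑ ∂ₜ` and `E_v = ∑ vₜ yₜ ∂ₜ`, which multiplies the coefficient of `y^α` by
`⟨v, α⟩`. Since `[L, yₜ] = 1` and `∂ₜ` commutes with `L`, each `E_v` raises the nilpotency
order of `L` by at most one; and a form of degree `m` killed by `L^k`, `k ≤ m`, vanishes at
`(1, …, 1)` by Euler's identity. Hence `L f = 0` gives `∑_α c_α ⟨v, α⟩^p ⟨w, α⟩^q = 0` for
`p + q < d`. Take `⟨v, α⟩ = α_i` and `⟨w, α⟩ = ∑ α_t (d + 1)^t`, injective on the support.
Lowering the exponent of `y_i` one step at a time shows that `α_i` takes exactly the values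
`0, …, a_i`; a Lagrange polynomial of degree `a_i` in `α_i` isolates each fibre `α_i = j`,
whose first `d - a_i + 1` moments in `⟨w, α⟩` therefore vanish, and by Vandermonde the fibre
has at least `d - a_i + 1` elements.
-/

open MvPolynomial Finset

section Moments

variable {ι K : Type*} [Field K] {S : Finset ι} {c N : ι → K} {D : ℕ}

lemma sum_mul_eval_eq_zero_of_sum_mul_pow_eq_zero
    (h : ∀ q < D, ∑ x ∈ S, c x * N x ^ q = 0) {P : Polynomial K} (hP : P.natDegree < D) :
    ∑ x ∈ S, c x * P.eval (N x) = 0 := by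
  simp_rw [Polynomial.eval_eq_sum_range' hP, Finset.mul_sum]
  rw [Finset.sum_comm]
  refine Finset.sum_eq_zero fun q hq => ?_
  rw [← mul_zero (P.coeff q), ← h q (Finset.mem_range.1 hq), Finset.mul_sum]
  exact Finset.sum_congr rfl fun x _ => by ring

lemma sum_filter_eq_zero_of_sum_mul_pow_eq_zero [DecidableEq K]
    (h : ∀ q < D, ∑ x ∈ S, c x * N x ^ q = 0) (hD : #(S.image N) ≤ D) (y : K) :
    ∑ x ∈ S with N x = y, c x = 0 := by
  by_cases hy : y ∈ S.image N
  · set P := Lagrange.basis (S.image N) id y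
    have hP : P.natDegree < D := by
      rw [Lagrange.natDegree_basis (Set.injOn_id _) hy]
      have := Finset.card_pos.2 ⟨y, hy⟩
      omega
    have hPeval : ∀ x ∈ S, P.eval (N x) = if N x = y then 1 else 0 := fun x hx => by
      split_ifs with hxy
      · subst hxy
        exact Lagrange.eval_basis_self (Set.injOn_id _) hy
      · exact Lagrange.eval_basis_of_ne (v := id) (Ne.symm hxy) (Finset.mem_image_of_mem N hx)
    rw [← sum_mul_eval_eq_zero_of_sum_mul_pow_eq_zero h hP, Finset.sum_filter]
    exact Finset.sum_congr rfl fun x hx => by rw [hPeval x hx]; simp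
  · refine Finset.sum_eq_zero fun x hx => ?_
    obtain ⟨hxS, rfl⟩ := Finset.mem_filter.1 hx
    exact absurd (Finset.mem_image_of_mem N hxS) hy

lemma lt_card_of_sum_mul_pow_eq_zero (hc : ∀ x ∈ S, c x ≠ 0) (hN : Set.InjOn N S)
    (hS : S.Nonempty) (h : ∀ q < D, ∑ x ∈ S, c x * N x ^ q = 0) : D < #S := by
  classical
  by_contra! hSD
  obtain ⟨x₀, hx₀⟩ := hS
  have hfiber : S.filter (N · = N x₀) = {x₀} :=
    Finset.eq_singleton_iff_unique_mem.2
      ⟨Finset.mem_filter.2 ⟨hx₀, rfl⟩,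
        fun x hx => hN (Finset.mem_filter.1 hx).1 hx₀ (Finset.mem_filter.1 hx).2⟩
  have := sum_filter_eq_zero_of_sum_mul_pow_eq_zero h
    ((Finset.card_image_of_injOn hN).le.trans hSD) (N x₀)
  rw [hfiber, Finset.sum_singleton] at this
  exact hc x₀ hx₀ this

variable {u : ι → K} {d : ℕ}

lemma add_two_le_card_filter_add_card_image [DecidableEq K]
    (h : ∀ p q, p + q < d → ∑ x ∈ S, c x * u x ^ p * N x ^ q = 0)
    (hc : ∀ x ∈ S, c x ≠ 0) (hN : Set.InjOn N S) {y : K} (hy : y ∈ S.image u) :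
    d + 2 ≤ #(S.filter (u · = y)) + #(S.image u) := by
  have hne : (S.filter (u · = y)).Nonempty := by
    obtain ⟨x, hx, rfl⟩ := Finset.mem_image.1 hy
    exact ⟨x, Finset.mem_filter.2 ⟨hx, rfl⟩⟩
  have hfiber : ∀ q < d + 1 - #(S.image u),
      ∑ x ∈ S with u x = y, c x * N x ^ q = 0 := fun q hq =>
    sum_filter_eq_zero_of_sum_mul_pow_eq_zero (fun p hp => by
      rw [← h p q (by omega)]
      exact Finset.sum_congr rfl fun x _ => by ring) le_rfl y
  have := lt_card_of_sum_mul_pow_eq_zero (fun x hx => hc x (Finset.mem_filter.1 hx).1)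
    (hN.mono (Finset.filter_subset _ S)) hne hfiber
  have := hne.card_pos
  omega

lemma card_image_mul_le_card [DecidableEq K]
    (h : ∀ p q, p + q < d → ∑ x ∈ S, c x * u x ^ p * N x ^ q = 0)
    (hc : ∀ x ∈ S, c x ≠ 0) (hN : Set.InjOn N S) :
    #(S.image u) * (d + 2 - #(S.image u)) ≤ #S := by
  rw [Finset.card_eq_sum_card_image u S, ← smul_eq_mul, ← Finset.sum_const]
  refine Finset.sum_le_sum fun y hy => ?_
  have := add_two_le_card_filter_add_card_image h hc hN hy
  omega

end Moments

lemma Fin.injOn_sum_mul_pow (b n : ℕ) :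
    Set.InjOn (fun g : Fin n → ℕ => ∑ t, g t * b ^ (t : ℕ)) {g | ∀ t, g t < b} := by
  intro g hg g' hg' hgg'
  have := (finFunctionFinEquiv (m := b) (n := n)).injective (a₁ := fun t => ⟨g t, hg t⟩)
    (a₂ := fun t => ⟨g' t, hg' t⟩) (Fin.ext (by simpa [finFunctionFinEquiv_apply] using hgg'))
  exact funext fun t => congrArg Fin.val (congrFun this t)

namespace MvPolynomial

variable {σ K : Type*} [Field K]

lemma eval_one_eq_sum_coeff {h : MvPolynomial σ K} {s : Finset (σ →₀ ℕ)}
    (hs : h.support ⊆ s) : eval 1 h = ∑ α ∈ s, coeff α h := by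
  rw [eval_eq, Finset.sum_subset hs fun α _ hα => by simp [notMem_support_iff.1 hα]]
  simp

lemma IsHomogeneous.apply_le_of_mem_support {f : MvPolynomial σ K} {d : ℕ}
    (hf : f.IsHomogeneous d) {α : σ →₀ ℕ} (hα : α ∈ f.support) (t : σ) : α t ≤ d :=
  (Finsupp.le_degree t α).trans
    (by rw [Finsupp.degree_eq_weight_one]; exact (hf (mem_support_iff.1 hα)).le)

variable [Fintype σ]

variable (σ K) in
noncomputable def sumPDeriv : Derivation K (MvPolynomial σ K) (MvPolynomial σ K) :=
  ∑ t, pderiv t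

lemma sumPDeriv_apply (p : MvPolynomial σ K) : sumPDeriv σ K p = ∑ t, pderiv t p :=
  congr($(map_sum Derivation.coeFnAddMonoidHom pderiv univ) p).trans (Finset.sum_apply ..)

lemma sumPDeriv_X (t : σ) : sumPDeriv σ K (X t) = 1 := by
  classical
  simp [sumPDeriv_apply, pderiv_X, Pi.single_apply]

lemma sumPDeriv_pderiv (t : σ) (p : MvPolynomial σ K) :
    sumPDeriv σ K (pderiv t p) = pderiv t (sumPDeriv σ K p) := by
  have hcomm : ⁅sumPDeriv σ K, pderiv t⁆ = 0 := derivation_ext fun s => by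
    classical
    rw [Derivation.commutator_apply, sumPDeriv_X, pderiv_X, Pi.single_apply]
    split_ifs <;> simp
  simpa [Derivation.commutator_apply, sub_eq_zero] using congr($hcomm p)

lemma sumPDeriv_X_mul (t : σ) (p : MvPolynomial σ K) :
    sumPDeriv σ K (X t * p) = X t * sumPDeriv σ K p + p := by
  simp [Derivation.leibniz, sumPDeriv_X]

lemma pow_sumPDeriv_X_mul_eq_zero {s : ℕ} {p : MvPolynomial σ K}
    (hp : ((sumPDeriv σ K).toLinearMap ^ s) p = 0) (t : σ) :
    ((sumPDeriv σ K).toLinearMap ^ (s + 1)) (X t * p) = 0 := by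
  induction s generalizing p with
  | zero => simp_all
  | succ s ih =>
    rw [pow_succ, Module.End.mul_apply, Derivation.coeFn_coe, sumPDeriv_X_mul, map_add,
      hp, add_zero]
    exact ih (by rwa [pow_succ, Module.End.mul_apply] at hp)

lemma pow_sumPDeriv_pderiv (s : ℕ) (t : σ) (p : MvPolynomial σ K) :
    ((sumPDeriv σ K).toLinearMap ^ s) (pderiv t p) =
      pderiv t (((sumPDeriv σ K).toLinearMap ^ s) p) := by
  have : Commute (sumPDeriv σ K).toLinearMap (pderiv t).toLinearMap :=
    LinearMap.ext (sumPDeriv_pderiv t)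
  exact congr($((this.pow_left s).eq) p)

section WeightedEuler

variable (v : σ → K)

noncomputable def weightedEuler : Module.End K (MvPolynomial σ K) :=
  ∑ t, v t • (LinearMap.mulLeft K (X t) ∘ₗ (pderiv t).toLinearMap)

lemma weightedEuler_apply (p : MvPolynomial σ K) :
    weightedEuler v p = ∑ t, v t • (X t * pderiv t p) := by
  simp [weightedEuler]

lemma coeff_weightedEuler (p : MvPolynomial σ K) (α : σ →₀ ℕ) :
    coeff α (weightedEuler v p) = (∑ t, v t * α t) * coeff α p := by
  induction p using MvPolynomial.induction_on' with
  | monomial β c =>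
    classical
    rw [weightedEuler_apply]
    simp only [X_mul_pderiv_monomial, coeff_sum, coeff_smul]
    by_cases h : β = α
    · subst h
      simp [Finset.sum_mul, mul_assoc]
    · simp [coeff_monomial, h]
  | add p q hp hq => simp [hp, hq, mul_add]

lemma coeff_pow_weightedEuler (k : ℕ) (p : MvPolynomial σ K) (α : σ →₀ ℕ) :
    coeff α ((weightedEuler v ^ k) p) = (∑ t, v t * α t) ^ k * coeff α p := by
  induction k with
  | zero => simp
  | succ k ih =>
    rw [pow_succ', Module.End.mul_apply, coeff_weightedEuler, ih, pow_succ', mul_assoc]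

lemma pow_sumPDeriv_weightedEuler_eq_zero {s : ℕ} {p : MvPolynomial σ K}
    (hp : ((sumPDeriv σ K).toLinearMap ^ s) p = 0) :
    ((sumPDeriv σ K).toLinearMap ^ (s + 1)) (weightedEuler v p) = 0 := by
  rw [weightedEuler_apply, map_sum]
  refine Finset.sum_eq_zero fun t _ => ?_
  rw [map_smul, pow_sumPDeriv_X_mul_eq_zero (by rw [pow_sumPDeriv_pderiv, hp, map_zero]),
    smul_zero]

lemma pow_sumPDeriv_pow_weightedEuler_eq_zero {s : ℕ} {p : MvPolynomial σ K}
    (hp : ((sumPDeriv σ K).toLinearMap ^ s) p = 0) (k : ℕ) :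
    ((sumPDeriv σ K).toLinearMap ^ (s + k)) ((weightedEuler v ^ k) p) = 0 := by
  induction k with
  | zero => simpa using hp
  | succ k ih =>
    rw [pow_succ', Module.End.mul_apply, ← add_assoc]
    exact pow_sumPDeriv_weightedEuler_eq_zero v ih

end WeightedEuler

lemma isHomogeneous_sumPDeriv {h : MvPolynomial σ K} {m : ℕ} (hh : h.IsHomogeneous m) :
    (sumPDeriv σ K h).IsHomogeneous (m - 1) := by
  rw [sumPDeriv_apply]
  exact IsHomogeneous.sum _ _ _ fun t _ => hh.pderiv

lemma eval_one_sumPDeriv_of_isHomogeneous {h : MvPolynomial σ K} {m : ℕ}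
    (hh : h.IsHomogeneous m) : eval 1 (sumPDeriv σ K h) = m * eval 1 h := by
  simpa [sumPDeriv_apply] using congr(eval 1 $(hh.sum_X_mul_pderiv))

lemma eval_one_eq_zero_of_pow_sumPDeriv_eq_zero [CharZero K] {h : MvPolynomial σ K} {m k : ℕ}
    (hh : h.IsHomogeneous m) (hkm : k ≤ m) (hk : ((sumPDeriv σ K).toLinearMap ^ k) h = 0) :
    eval 1 h = 0 := by
  induction k generalizing h m with
  | zero => simp_all
  | succ k ih =>
    have hL : eval 1 (sumPDeriv σ K h) = 0 :=
      ih (isHomogeneous_sumPDeriv hh) (by omega) (by rwa [pow_succ, Module.End.mul_apply] at hk)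
    rw [eval_one_sumPDeriv_of_isHomogeneous hh] at hL
    exact (mul_eq_zero.1 hL).resolve_left (Nat.cast_ne_zero.2 (by omega))

lemma sum_coeff_mul_pow_mul_pow_eq_zero [CharZero K] {f : MvPolynomial σ K}
    {d : ℕ} (hf : f.IsHomogeneous d) (hann : sumPDeriv σ K f = 0) (v w : σ → K) {p q : ℕ}
    (hpq : p + q < d) :
    ∑ α ∈ f.support, coeff α f * (∑ t, v t * α t) ^ p * (∑ t, w t * α t) ^ q = 0 := by
  set h := (weightedEuler v ^ p) ((weightedEuler w ^ q) f)
  have hcoeff (α : σ →₀ ℕ) :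
      coeff α h = (∑ t, v t * α t) ^ p * ((∑ t, w t * α t) ^ q * coeff α f) := by
    rw [coeff_pow_weightedEuler, coeff_pow_weightedEuler]
  have hsupp : h.support ⊆ f.support := fun α hα => by
    rw [mem_support_iff, hcoeff] at hα
    exact mem_support_iff.2 (right_ne_zero_of_mul (right_ne_zero_of_mul hα))
  have hh : h.IsHomogeneous d := fun α hα =>
    hf (mem_support_iff.1 (hsupp (mem_support_iff.2 hα)))
  have hkill : ((sumPDeriv σ K).toLinearMap ^ (1 + q + p)) h = 0 :=
    pow_sumPDeriv_pow_weightedEuler_eq_zero v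
      (pow_sumPDeriv_pow_weightedEuler_eq_zero w (by simpa using hann) q) p
  rw [← eval_one_eq_zero_of_pow_sumPDeriv_eq_zero hh (by omega) hkill,
    eval_one_eq_sum_coeff hsupp]
  exact Finset.sum_congr rfl fun α _ => by rw [hcoeff]; ring

variable [CharZero K] {f : MvPolynomial σ K}

lemma exists_mem_support_add_one_eq (hann : sumPDeriv σ K f = 0) {α : σ →₀ ℕ}
    (hα : α ∈ f.support) {i : σ} (hi : α i ≠ 0) : ∃ β ∈ f.support, β i + 1 = α i := by
  classical
  by_contra! hβ
  set μ := α - Finsupp.single i 1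
  have hμ : μ + Finsupp.single i 1 = α :=
    tsub_add_cancel_of_le (Finsupp.single_le_iff.2 (by omega))
  have hcoeff : ∑ t, coeff (μ + Finsupp.single t 1) f * (μ t + 1) = 0 := by
    simpa [sumPDeriv_apply, coeff_sum, coeff_pderiv] using congr(coeff μ $hann)
  rw [Finset.sum_eq_single i (fun t _ hti => ?_) (by simp), hμ] at hcoeff
  · exact mul_ne_zero (mem_support_iff.1 hα) (Nat.cast_add_one_ne_zero (μ i)) hcoeff
  · rw [notMem_support_iff.1 fun h => hβ _ h ?_, zero_mul]
    rw [Finsupp.add_apply, Finsupp.single_eq_of_ne' hti, add_zero, ← hμ, Finsupp.add_apply,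
      Finsupp.single_eq_same]

lemma exists_mem_support_eq (hann : sumPDeriv σ K f = 0) {α : σ →₀ ℕ} (hα : α ∈ f.support)
    {i : σ} {j : ℕ} (hj : j ≤ α i) : ∃ β ∈ f.support, β i = j := by
  obtain ⟨k, hk⟩ := Nat.exists_eq_add_of_le hj
  clear hj
  induction k generalizing α with
  | zero => exact ⟨α, hα, hk⟩
  | succ k ih =>
    obtain ⟨β, hβ, hβi⟩ := exists_mem_support_add_one_eq hann hα (i := i) (by omega)
    exact ih hβ (by omega)

lemma image_support_eq_range (hann : sumPDeriv σ K f = 0) (hf0 : f ≠ 0) (i : σ) :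
    f.support.image (· i) = range (f.support.sup (· i) + 1) := by
  classical
  obtain ⟨α₀, hα₀, hα₀i⟩ := Finset.exists_mem_eq_sup f.support (support_nonempty.2 hf0) (· i)
  ext j
  simp only [Finset.mem_image, Finset.mem_range, Order.lt_add_one_iff]
  exact ⟨fun ⟨α, hα, hαj⟩ => hαj ▸ Finset.le_sup (f := (· i)) hα,
    fun hj => exists_mem_support_eq hann hα₀ (hα₀i ▸ hj)⟩

end MvPolynomial

theorem support_card_ge_max_general {K : Type*} [Field K] [CharZero K]
    {n : ℕ} (d : ℕ)
    (f : MvPolynomial (Fin n) K) (hf0 : f ≠ 0) (hf : f.IsHomogeneous d)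
    (hann : (∑ t, MvPolynomial.pderiv t f) = 0)
    (a : Fin n → ℕ) (ha : ∀ i, a i = f.support.sup (fun m => m i)) :
    ∀ i : Fin n, a i ≠ 0 → (a i + 1) * (d - a i + 1) ≤ f.support.card := by
  intro i _
  classical
  replace hann : sumPDeriv (Fin n) K f = 0 := by rwa [sumPDeriv_apply]
  have hle : ∀ α ∈ f.support, ∀ t, α t ≤ d := fun α hα => hf.apply_le_of_mem_support hα
  have hcard := card_image_mul_le_card (S := f.support) (c := fun α => coeff α f)
    (u := fun α => (α i : K)) (N := fun α => ((∑ t, α t * (d + 1) ^ (t : ℕ) : ℕ) : K)) (d := d)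
    (fun p q hpq => by
      simpa [Pi.single_apply, mul_comm] using sum_coeff_mul_pow_mul_pow_eq_zero hf hann
        (Pi.single i 1) (fun t => ((d + 1) ^ (t : ℕ) : K)) hpq)
    (fun α hα => mem_support_iff.1 hα)
    (fun α hα β hβ hαβ => DFunLike.coe_injective (Fin.injOn_sum_mul_pow (d + 1) n
      (fun t => Nat.lt_succ_of_le (hle α hα t)) (fun t => Nat.lt_succ_of_le (hle β hβ t))
      (Nat.cast_injective hαβ)))
  have himage : f.support.image (fun α => (α i : K)) = (range (a i + 1)).image Nat.cast := by
    rw [ha, ← image_support_eq_range hann hf0, Finset.image_image]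
    rfl
  rw [himage, Finset.card_image_of_injective _ Nat.cast_injective, Finset.card_range] at hcard
  have had : a i ≤ d := ha i ▸ Finset.sup_le fun α hα => hle α hα i
  calc (a i + 1) * (d - a i + 1) = (a i + 1) * (d + 2 - (a i + 1)) := by congr 1; omega
    _ ≤ _ := hcard

/-- For `n ≥ 4` and `d ≥ 2`, if `f` is a non-zero form of degree `d` in
`K[y_1,…,y_n]` with `(x_1 + ⋯ + x_n) ∘ f = 0` (each `x_i` acting as `∂/∂y_i`) and
`a_i = max { deg_i(m) : m ∈ supp f }`, then `|supp f| ≥ (a_i + 1)(d - a_i + 1)` for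
every `i` with `a_i ≠ 0`. -/
theorem support_card_ge_max {K : Type*} [Field K] [CharZero K]
    {n : ℕ} (hn : 4 ≤ n) (d : ℕ) (hd : 2 ≤ d)
    (f : MvPolynomial (Fin n) K) (hf0 : f ≠ 0) (hf : f.IsHomogeneous d)
    (hann : (∑ t, MvPolynomial.pderiv t f) = 0)
    (a : Fin n → ℕ) (ha : ∀ i, a i = f.support.sup (fun m => m i)) :
    ∀ i : Fin n, a i ≠ 0 → (a i + 1) * (d - a i + 1) ≤ f.support.card :=
  support_card_ge_max_general d f hf0 hf hann a ha
end

section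
/- Let K be a field of characteristic zero, n ≥ 4, d ≥ 2, and let f be a non-zero form of degree d in R = K[y_1,…,y_n] such that (x_1 + ⋯ + x_n) ∘ f = 0 and y_i^d ∉ supp(f) for every 1 ≤ i ≤ n. Then |supp(f)| ≥ 2d. -/
open MvPolynomial Finset

/-!
Pick a variable `y_i` occurring in `f` and let `ρ` be its largest exponent in `f`; as no `y_i^d`
occurs, `1 ≤ ρ < d`. Cut `supp f` into the slices `S_k` of monomials with `y_i`-exponent `k`. For a
multi-index `β` in the other variables let `J_k(β)` be `∂^β` of the `k`-th slice of `f` at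
`(1,…,1)`; since `∂^β y^a = ∏ (a_m)_{β_m} y^(a-β)`, this pairs the coefficients of `f` with
products of falling factorials (`sliceMoment`). The relation `(∑ ∂_t) f = 0` and Euler's identity
give `(k + 1) J_{k+1}(β) = (|β| + k - d) J_k(β)`.

A polynomial with `t` terms has a derivative of order `< t` not vanishing at `(1,…,1)`. Applied to
`S_ρ`, and read downwards, the recursion shows that no slice `S_k`, `k ≤ ρ`, is empty. Applied to
`S_k` it gives `β` with `|β| < |S_k|` and `J_k(β) ≠ 0`; but if `|β| + ρ < d`, the recursion started
from `J_{ρ+1}(β) = 0` kills `J_k(β)`. Hence `|S_k| > d - ρ` and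
`|supp f| ≥ (ρ + 1)(d + 1 - ρ) ≥ 2d`.
-/

section Homogeneous

variable {σ R : Type*} [Fintype σ] [CommSemiring R]

lemma MvPolynomial.IsHomogeneous.sum_apply_eq {p : MvPolynomial σ R} {d : ℕ}
    (hp : p.IsHomogeneous d) {a : σ →₀ ℕ} (ha : a ∈ p.support) : ∑ m, a m = d := by
  rw [← Finsupp.degree_eq_sum, Finsupp.degree_eq_weight_one]
  exact hp (mem_support_iff.1 ha)

lemma MvPolynomial.IsHomogeneous.apply_lt {p : MvPolynomial σ R} {d : ℕ}
    (hp : p.IsHomogeneous d) {i : σ} (hpure : Finsupp.single i d ∉ p.support) {a : σ →₀ ℕ}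
    (ha : a ∈ p.support) : a i < d := by
  classical
  have hsum := hp.sum_apply_eq ha
  rw [← add_sum_erase _ _ (mem_univ i)] at hsum
  refine lt_of_le_of_ne (by omega) fun hai => hpure ?_
  convert ha using 1
  ext m
  rcases eq_or_ne m i with rfl | hm
  · simp [hai]
  · have := sum_eq_zero_iff.1 (by omega : ∑ m ∈ univ.erase i, a m = 0) m
      (mem_erase.2 ⟨hm, mem_univ m⟩)
    simp [Ne.symm hm, this]

end Homogeneous

section CoeffPairing

variable {σ R : Type*} [CommSemiring R]

noncomputable def coeffPairing (w : (σ →₀ ℕ) → R) : MvPolynomial σ R →ₗ[R] R :=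
  Finsupp.linearCombination R w ∘ₗ (AddMonoidAlgebra.coeffLinearEquiv R).toLinearMap

lemma coeffPairing_apply (w : (σ →₀ ℕ) → R) (p : MvPolynomial σ R) :
    coeffPairing w p = ∑ a ∈ p.support, coeff a p * w a := by
  simp [coeffPairing, Finsupp.linearCombination_apply, sum_def]

lemma coeffPairing_monomial (w : (σ →₀ ℕ) → R) (a : σ →₀ ℕ) (c : R) :
    coeffPairing w (monomial a c) = c * w a := by
  classical
  rw [coeffPairing_apply, support_monomial]
  split_ifs with hc <;> simp [hc]

lemma coeffPairing_pderiv {w w' : (σ →₀ ℕ) → R} {j : σ} (c : R)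
    (h : ∀ a, (a j : R) * w (a - Finsupp.single j 1) = c * w' a) (p : MvPolynomial σ R) :
    coeffPairing w (pderiv j p) = c * coeffPairing w' p := by
  induction p using MvPolynomial.induction_on' with
  | add p q hp hq => rw [map_add, map_add, hp, hq, map_add, mul_add]
  | monomial a b =>
    rw [pderiv_monomial, coeffPairing_monomial, coeffPairing_monomial, mul_assoc, h,
      mul_left_comm]

end CoeffPairing

section FallingWeight

variable {σ R : Type*}

def fallingWeight [CommSemiring R] (s : Finset σ) (β : σ → ℕ) (a : σ →₀ ℕ) : R :=
  ∏ m ∈ s, ((a m).descFactorial (β m) : R)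

lemma fallingWeight_sub_single_of_notMem [CommSemiring R] {s : Finset σ} {j : σ} (hj : j ∉ s)
    (β : σ → ℕ) (a : σ →₀ ℕ) :
    fallingWeight s β (a - Finsupp.single j 1) = (fallingWeight s β a : R) := by
  refine prod_congr rfl fun m hm => ?_
  simp [Ne.symm (ne_of_mem_of_not_mem hm hj)]

variable [DecidableEq σ]

lemma cast_descFactorial_succ [CommRing R] (a b : ℕ) :
    ((a.descFactorial (b + 1) : ℕ) : R) = ((a : R) - b) * a.descFactorial b := by
  rcases le_or_gt b a with hba | hab
  · rw [Nat.descFactorial_succ, Nat.cast_mul, Nat.cast_sub hba]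
  · simp [Nat.descFactorial_of_lt hab]

lemma fallingWeight_add_single [CommRing R] {s : Finset σ} {j : σ} (hj : j ∈ s) (β : σ → ℕ)
    (a : σ →₀ ℕ) :
    fallingWeight s (β + Pi.single j 1) a = ((a j : R) - β j) * fallingWeight s β a := by
  unfold fallingWeight
  rw [← mul_prod_erase s _ hj, ← mul_prod_erase s _ hj, ← mul_assoc]
  congr 1
  · rw [Pi.add_apply, Pi.single_eq_same, cast_descFactorial_succ]
  · refine prod_congr rfl fun m hm => ?_
    simp [ne_of_mem_erase hm]

lemma fallingWeight_sub_single [CommSemiring R] {s : Finset σ} {j : σ} (hj : j ∈ s)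
    (β : σ → ℕ) (a : σ →₀ ℕ) :
    (a j : R) * fallingWeight s β (a - Finsupp.single j 1) =
      fallingWeight s (β + Pi.single j 1) a := by
  unfold fallingWeight
  rw [← mul_prod_erase s _ hj, ← mul_prod_erase s _ hj, ← mul_assoc]
  congr 1
  · rw [Finsupp.tsub_apply, Finsupp.single_eq_same, Pi.add_apply, Pi.single_eq_same]
    cases h : a j with
    | zero => simp
    | succ b => rw [Nat.add_sub_cancel, Nat.succ_descFactorial_succ, Nat.cast_mul]
  · refine prod_congr rfl fun m hm => ?_
    simp [ne_of_mem_erase hm]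

end FallingWeight

section Moments

variable {σ R : Type*} [Fintype σ] [DecidableEq σ] [CommRing R] [NoZeroDivisors R] [CharZero R]

lemma exists_sum_mul_fallingWeight_ne_zero (S : Finset (σ →₀ ℕ)) (c : (σ →₀ ℕ) → R)
    (hc : ∀ a ∈ S, c a ≠ 0) (hS : S.Nonempty) :
    ∃ α : σ → ℕ, ∑ j, α j < #S ∧ ∑ a ∈ S, c a * fallingWeight univ α a ≠ 0 := by
  induction S using Finset.strongInduction generalizing c with
  | H S ih =>
  obtain ⟨a₀, ha₀⟩ := hS
  obtain rfl | ⟨a₁, ha₁, a₂, ha₂, hne⟩ := S.eq_singleton_or_nontrivial ha₀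
  · refine ⟨0, by simp, ?_⟩
    simpa [fallingWeight] using hc a₀ (mem_singleton_self a₀)
  obtain ⟨j, hj⟩ := Finsupp.ne_iff.1 hne
  -- multiplying `c` by `a₁ j - a j` kills it on the fibre of `a₁ j`, which `a₂` avoids
  set S' := {a ∈ S | a j ≠ a₁ j}
  have hS' : S' ⊂ S := filter_ssubset.2 ⟨a₁, ha₁, by simp⟩
  have hdiff : ∀ a ∈ S', ((a₁ j : R) - a j) ≠ 0 := fun a ha =>
    sub_ne_zero.2 (Nat.cast_injective.ne (mem_filter.1 ha).2.symm)
  obtain ⟨α, hα, hsum⟩ := ih S' hS' (fun a => ((a₁ j : R) - a j) * c a)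
    (fun a ha => mul_ne_zero (hdiff a ha) (hc a (mem_filter.1 ha).1))
    ⟨a₂, mem_filter.2 ⟨ha₂, Ne.symm hj⟩⟩
  have hrel : ∑ a ∈ S', ((a₁ j : R) - a j) * c a * fallingWeight univ α a =
      ((a₁ j : R) - α j) * ∑ a ∈ S, c a * fallingWeight univ α a -
        ∑ a ∈ S, c a * fallingWeight univ (α + Pi.single j 1) a := by
    rw [sum_filter_of_ne fun a _ h ha => by simp [ha] at h]
    simp only [mul_sum, ← sum_sub_distrib, fallingWeight_add_single (mem_univ j)]
    exact sum_congr rfl fun a _ => by ring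
  have hcard : #S' < #S := card_lt_card hS'
  by_cases h0 : ∑ a ∈ S, c a * fallingWeight univ α a = 0
  · refine ⟨α + Pi.single j 1, ?_, fun h => hsum (by rw [hrel, h0, h]; ring)⟩
    simp only [Pi.add_apply, sum_add_distrib, sum_pi_single', if_pos (mem_univ j)]
    omega
  · exact ⟨α, by omega, h0⟩

end Moments

section Slices

variable {σ R : Type*} [Fintype σ] [DecidableEq σ]

def supportSlice [CommSemiring R] (p : MvPolynomial σ R) (i : σ) (k : ℕ) : Finset (σ →₀ ℕ) :=
  {a ∈ p.support | a i = k}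

variable [CommRing R]

noncomputable def sliceMoment (i : σ) (k : ℕ) (β : σ → ℕ) : MvPolynomial σ R →ₗ[R] R :=
  coeffPairing fun a => if a i = k then fallingWeight (univ.erase i) β a else 0

lemma sliceMoment_eq_sum (i : σ) (k : ℕ) (β : σ → ℕ) (p : MvPolynomial σ R) :
    sliceMoment i k β p =
      ∑ a ∈ supportSlice p i k, coeff a p * fallingWeight (univ.erase i) β a := by
  rw [sliceMoment, coeffPairing_apply, supportSlice, sum_filter]
  simp only [mul_ite, mul_zero]

lemma sliceMoment_pderiv_self (i : σ) (k : ℕ) (β : σ → ℕ) (p : MvPolynomial σ R) :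
    sliceMoment i k β (pderiv i p) = (k + 1) * sliceMoment i (k + 1) β p := by
  refine coeffPairing_pderiv _ (fun a => ?_) p
  rw [fallingWeight_sub_single_of_notMem (notMem_erase i univ), Finsupp.tsub_apply,
    Finsupp.single_eq_same]
  by_cases hk : a i = k + 1
  · simp [hk]
  · rw [if_neg hk, mul_zero]
    split_ifs with h
    · rw [show a i = 0 by omega, Nat.cast_zero, zero_mul]
    · rw [mul_zero]

lemma sliceMoment_pderiv_of_ne {i j : σ} (hji : j ≠ i) (k : ℕ) (β : σ → ℕ)
    (p : MvPolynomial σ R) :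
    sliceMoment i k β (pderiv j p) = sliceMoment i k (β + Pi.single j 1) p := by
  rw [← one_mul (sliceMoment i k (β + Pi.single j 1) p)]
  refine coeffPairing_pderiv _ (fun a => ?_) p
  rw [Finsupp.tsub_apply, Finsupp.single_apply, if_neg hji, Nat.sub_zero, one_mul, mul_ite,
    mul_zero, fallingWeight_sub_single (mem_erase.2 ⟨hji, mem_univ j⟩)]

lemma sliceMoment_euler {p : MvPolynomial σ R} {d : ℕ} (hp : p.IsHomogeneous d) (i : σ) (k : ℕ)
    (β : σ → ℕ) :
    ∑ j ∈ univ.erase i, sliceMoment i k (β + Pi.single j 1) p =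
      ((d : R) - k - ∑ m ∈ univ.erase i, (β m : R)) * sliceMoment i k β p := by
  simp only [sliceMoment_eq_sum, mul_sum]
  rw [sum_comm]
  refine sum_congr rfl fun a ha => ?_
  obtain ⟨ha, hai⟩ := mem_filter.1 ha
  have hrest : ∑ m ∈ univ.erase i, (a m : R) = d - k := by
    rw [eq_sub_iff_add_eq, ← hai, ← Nat.cast_sum, ← Nat.cast_add, sum_erase_add _ _ (mem_univ i),
      hp.sum_apply_eq ha]
  calc ∑ j ∈ univ.erase i, coeff a p * fallingWeight (univ.erase i) (β + Pi.single j 1) a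
      = ∑ j ∈ univ.erase i, ((a j : R) - β j) * (coeff a p * fallingWeight (univ.erase i) β a) :=
        sum_congr rfl fun j hj => by rw [fallingWeight_add_single hj]; ring
    _ = _ := by rw [← sum_mul, sum_sub_distrib, hrest]

end Slices

section Recursion

variable {σ R : Type*} [Fintype σ] [DecidableEq σ] [CommRing R]

lemma sliceMoment_succ {p : MvPolynomial σ R} {d : ℕ} (hp : p.IsHomogeneous d)
    (hann : ∑ t, pderiv t p = 0) (i : σ) (k : ℕ) (β : σ → ℕ) :
    (k + 1) * sliceMoment i (k + 1) β p =
      ((∑ m ∈ univ.erase i, (β m : R)) + k - d) * sliceMoment i k β p := by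
  have h := congrArg (sliceMoment i k β) hann
  rw [map_sum, map_zero, ← add_sum_erase _ _ (mem_univ i), sliceMoment_pderiv_self,
    sum_congr rfl fun j hj => sliceMoment_pderiv_of_ne (ne_of_mem_erase hj) k β p,
    sliceMoment_euler hp] at h
  linear_combination h

variable [NoZeroDivisors R] [CharZero R]

lemma exists_sliceMoment_ne_zero {p : MvPolynomial σ R} {i : σ} {k : ℕ}
    (hS : (supportSlice p i k).Nonempty) :
    ∃ β : σ → ℕ, ∑ m ∈ univ.erase i, β m < #(supportSlice p i k) ∧ sliceMoment i k β p ≠ 0 := by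
  obtain ⟨α, hα, hne⟩ := exists_sum_mul_fallingWeight_ne_zero _ (coeff · p)
    (fun a ha => mem_support_iff.1 (mem_filter.1 ha).1) hS
  refine ⟨α, (sum_le_sum_of_subset (subset_univ _)).trans_lt hα, ?_⟩
  have hsplit : ∑ a ∈ supportSlice p i k, coeff a p * fallingWeight univ α a =
      (k.descFactorial (α i) : R) * sliceMoment i k α p := by
    rw [sliceMoment_eq_sum, mul_sum]
    refine sum_congr rfl fun a ha => ?_
    rw [fallingWeight, ← mul_prod_erase _ _ (mem_univ i), (mem_filter.1 ha).2, fallingWeight]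
    ring
  exact right_ne_zero_of_mul (hsplit ▸ hne)

end Recursion

section Sequences

variable {R : Type*} [CommRing R] {u g : ℕ → R}

lemma ne_zero_of_le_of_succ_mul_eq [NoZeroDivisors R] [CharZero R]
    (hrec : ∀ k : ℕ, ((k : R) + 1) * u (k + 1) = g k * u k) {k m : ℕ} (hkm : k ≤ m)
    (hm : u m ≠ 0) : u k ≠ 0 := by
  induction m, hkm using Nat.le_induction with
  | base => exact hm
  | succ m _ ih =>
    refine ih fun h => hm ?_
    have := hrec m
    rw [h, mul_zero] at this
    exact (mul_eq_zero.1 this).resolve_left (by exact_mod_cast m.succ_ne_zero)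

lemma eq_zero_of_le_of_succ_mul_eq [NoZeroDivisors R]
    (hrec : ∀ k : ℕ, ((k : R) + 1) * u (k + 1) = g k * u k) {N : ℕ} (hN : u N = 0)
    (hg : ∀ k < N, g k ≠ 0) {k : ℕ} (hkN : k ≤ N) : u k = 0 := by
  induction hkN using Nat.decreasingInduction with
  | self => exact hN
  | of_succ k hk ih =>
    have := hrec k
    rw [ih, mul_zero] at this
    exact (mul_eq_zero.1 this.symm).resolve_left (hg k hk)

end Sequences

section SliceBound

variable {σ R : Type*} [Fintype σ] [DecidableEq σ] [CommRing R] [NoZeroDivisors R] [CharZero R]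

lemma lt_card_supportSlice_add {p : MvPolynomial σ R} {d : ℕ} (hp : p.IsHomogeneous d)
    (hann : ∑ t, pderiv t p = 0) {i : σ} {ρ k : ℕ} (htop : (supportSlice p i ρ).Nonempty)
    (habove : supportSlice p i (ρ + 1) = ∅) (hk : k ≤ ρ) :
    d < #(supportSlice p i k) + ρ := by
  have hrec (β : σ → ℕ) (k : ℕ) := sliceMoment_succ hp hann i k β
  obtain ⟨α, -, hα⟩ := exists_sliceMoment_ne_zero htop
  have hSk : (supportSlice p i k).Nonempty := by
    have := ne_zero_of_le_of_succ_mul_eq (u := (sliceMoment i · α p)) (hrec α) hk hα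
    rw [sliceMoment_eq_sum] at this
    exact nonempty_of_sum_ne_zero this
  obtain ⟨β, hβ, hne⟩ := exists_sliceMoment_ne_zero hSk
  by_contra! hle
  refine hne (eq_zero_of_le_of_succ_mul_eq (u := (sliceMoment i · β p)) (hrec β) ?_
    (fun k' hk' => ?_) (hk.trans ρ.le_succ))
  · rw [sliceMoment_eq_sum, habove, sum_empty]
  · rw [sub_ne_zero]
    exact_mod_cast (by omega : ∑ m ∈ univ.erase i, β m + k' ≠ d)

end SliceBound

theorem support_card_ge_two_d_general {K : Type*} [Field K] [CharZero K]
    {n : ℕ} (d : ℕ)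
    (f : MvPolynomial (Fin n) K) (hf0 : f ≠ 0) (hf : f.IsHomogeneous d)
    (hann : (∑ t, MvPolynomial.pderiv t f) = 0)
    (hpure : ∀ i : Fin n, Finsupp.single i d ∉ f.support) :
    2 * d ≤ f.support.card := by
  obtain ⟨a₀, ha₀⟩ := support_nonempty.2 hf0
  obtain rfl | hd := Nat.eq_zero_or_pos d
  · simp
  obtain ⟨i, hi⟩ : ∃ i, a₀ i ≠ 0 := by
    by_contra! h
    have := hf.sum_apply_eq ha₀
    simp [h] at this
    omega
  set ρ := f.support.sup (· i)
  obtain ⟨aρ, haρ, hρ⟩ := exists_mem_eq_sup _ ⟨a₀, ha₀⟩ (· i)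
  have hle : ∀ a ∈ f.support, a i ≤ ρ := fun a ha => le_sup (f := (· i)) ha
  have hρ_pos : 0 < ρ := (Nat.pos_of_ne_zero hi).trans_le (hle a₀ ha₀)
  obtain ⟨s, rfl⟩ := Nat.exists_eq_add_of_lt (hρ ▸ hf.apply_lt (hpure i) haρ)
  have hslice : ∀ k ∈ range (ρ + 1), s + 2 ≤ #(supportSlice f i k) := fun k hk => by
    have := lt_card_supportSlice_add hf hann ⟨aρ, mem_filter.2 ⟨haρ, hρ.symm⟩⟩
      (filter_eq_empty_iff.2 fun a ha => (hle a ha).trans_lt ρ.lt_succ_self |>.ne)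
      (mem_range_succ_iff.1 hk)
    omega
  calc 2 * (ρ + s + 1) ≤ #(range (ρ + 1)) • (s + 2) := by
        rw [card_range, smul_eq_mul]; nlinarith
    _ ≤ ∑ k ∈ range (ρ + 1), #(supportSlice f i k) := card_nsmul_le_sum _ _ _ hslice
    _ = #f.support :=
        (card_eq_sum_card_fiberwise fun a ha => mem_range_succ_iff.2 (hle a ha)).symm

/-- For `n ≥ 4` and `d ≥ 2`, if `f` is a non-zero form of degree `d` in
`K[y_1,…,y_n]` with `(x_1 + ⋯ + x_n) ∘ f = 0` (each `x_i` acting as `∂/∂y_i`) and no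
pure power `y_i^d` appears in `f`, then `|supp f| ≥ 2d`. -/
theorem support_card_ge_two_d {K : Type*} [Field K] [CharZero K]
    {n : ℕ} (hn : 4 ≤ n) (d : ℕ) (hd : 2 ≤ d)
    (f : MvPolynomial (Fin n) K) (hf0 : f ≠ 0) (hf : f.IsHomogeneous d)
    (hann : (∑ t, MvPolynomial.pderiv t f) = 0)
    (hpure : ∀ i : Fin n, Finsupp.single i d ∉ f.support) :
    2 * d ≤ f.support.card :=
  support_card_ge_two_d_general d f hf0 hf hann hpure
end

section
/- Let K be a field of characteristic zero, n ≥ 4, d ≥ 2, and in R = K[y_1,…,y_n] let f = (y_1 − y_2)(y_3 − y_4)^{d−1}. Then (x_1 + ⋯ + x_n) ∘ f = 0, no pure power y_i^d lies in supp(f), and |supp(f)| = 2d. -/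
/-!
The operator `∑ᵢ ∂/∂yᵢ` is a derivation killing every difference `yₐ - y_b`, hence it kills
`f`. Expanding `(y₃ - y₄)^{d-1}` binomially gives `d` monomials with nonzero coefficients
(characteristic zero), and multiplying by `y₁ - y₂` doubles them without cancellation, since
`y₁, y₂` do not occur in the power. Every monomial of `f` has exponent exactly `1` in `y₁` or in
`y₂`, which a pure power `yᵢ^d` with `d ≥ 2` never has.
-/

open MvPolynomial Finset

theorem Derivation.finset_sum_apply {R A M ι : Type*} [CommSemiring R] [CommSemiring A]
    [Algebra R A] [AddCommMonoid M] [Module A M] [Module R M] (s : Finset ι)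
    (D : ι → Derivation R A M) (a : A) : (∑ i ∈ s, D i) a = ∑ i ∈ s, D i a := by
  rw [← Derivation.coeFnAddMonoidHom_apply, map_sum, Finset.sum_apply]
  rfl

theorem Derivation.map_mul_pow_eq_zero {R A M : Type*} [CommSemiring R] [CommSemiring A]
    [Algebra R A] [AddCommMonoid M] [Module A M] [Module R M] (D : Derivation R A M)
    {p q : A} (hp : D p = 0) (hq : D q = 0) (k : ℕ) : D (p * q ^ k) = 0 := by
  simp [D.leibniz, D.leibniz_pow, hp, hq]

namespace MvPolynomial

variable {R σ : Type*} [CommRing R]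

theorem sum_pderiv_X_sub_X [Fintype σ] [DecidableEq σ] (a b : σ) :
    (∑ t, pderiv t : Derivation R (MvPolynomial σ R) (MvPolynomial σ R)) (X a - X b) = 0 := by
  simp [Derivation.finset_sum_apply, pderiv_X]

theorem support_sub_of_disjoint [DecidableEq σ] {p q : MvPolynomial σ R}
    (h : Disjoint p.support q.support) : (p - q).support = p.support ∪ q.support := by
  rw [← support_neg (p := q)] at h ⊢
  rw [sub_eq_add_neg]
  exact Finsupp.support_add_eq h

theorem disjoint_support_X_mul {p : MvPolynomial σ R} {a b : σ} (hab : a ≠ b)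
    (ha : a ∉ p.vars) : Disjoint (X a * p).support (X b * p).support := by
  simp only [support_X_mul, disjoint_left, mem_map, addLeftEmbedding_apply, not_exists, not_and]
  rintro _ ⟨μ, hμ, rfl⟩ ν hν h
  have := DFunLike.congr_fun h a
  simp [hab.symm, mem_support_notMem_vars_zero hμ ha, mem_support_notMem_vars_zero hν ha] at this

theorem card_support_X_sub_X_mul [DecidableEq σ] {p : MvPolynomial σ R} {a b : σ} (hab : a ≠ b)
    (ha : a ∉ p.vars) : ((X a - X b) * p).support.card = 2 * p.support.card := by
  rw [sub_mul, support_sub_of_disjoint (disjoint_support_X_mul hab ha),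
    card_union_of_disjoint (disjoint_support_X_mul hab ha), support_X_mul, support_X_mul,
    card_map, card_map, two_mul]

theorem eq_one_or_eq_one_of_mem_support_X_sub_X_mul [DecidableEq σ] {p : MvPolynomial σ R}
    {a b : σ} (hab : a ≠ b) (ha : a ∉ p.vars) (hb : b ∉ p.vars) {μ : σ →₀ ℕ}
    (hμ : μ ∈ ((X a - X b) * p).support) : μ a = 1 ∨ μ b = 1 := by
  rw [sub_mul, support_sub_of_disjoint (disjoint_support_X_mul hab ha)] at hμ
  simp only [mem_union, support_X_mul, mem_map, addLeftEmbedding_apply] at hμ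
  rcases hμ with ⟨ν, hν, rfl⟩ | ⟨ν, hν, rfl⟩
  · simp [mem_support_notMem_vars_zero hν ha]
  · simp [mem_support_notMem_vars_zero hν hb]

theorem support_sum_monomial_of_injOn [DecidableEq σ] {ι : Type*} {s : Finset ι}
    {e : ι → σ →₀ ℕ} {c : ι → R} (he : Set.InjOn e s) (hc : ∀ i ∈ s, c i ≠ 0) :
    (∑ i ∈ s, monomial (e i) (c i)).support = s.image e := by
  ext μ
  simp only [mem_support_iff, coeff_sum, coeff_monomial, mem_image]
  constructor
  · intro h
    by_contra! hμ
    exact h (sum_eq_zero fun i hi => if_neg (hμ i hi))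
  · rintro ⟨i, hi, rfl⟩
    rw [sum_eq_single_of_mem i hi fun j hj hji => if_neg fun h => hji (he hj hi h), if_pos rfl]
    exact hc i hi

theorem X_sub_X_pow_eq_sum_monomial (c e : σ) (m : ℕ) :
    (X c - X e : MvPolynomial σ R) ^ m = ∑ ij ∈ antidiagonal m,
      monomial (Finsupp.single c ij.1 + Finsupp.single e ij.2)
        ((-1) ^ ij.2 * (m.choose ij.1 : R)) := by
  rw [sub_eq_add_neg, (Commute.all _ _).add_pow']
  refine sum_congr rfl fun ij _ => ?_
  rw [neg_pow, X_pow_eq_monomial, X_pow_eq_monomial, mul_left_comm, monomial_mul, one_mul,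
    ← mul_one ((-1) ^ ij.2 * _ : R), ← C_mul_monomial]
  simp only [map_mul, map_pow, map_neg, map_one, map_natCast, nsmul_eq_mul]
  ring

theorem card_support_X_sub_X_pow [DecidableEq σ] [CharZero R] {c e : σ} (hce : c ≠ e)
    (m : ℕ) : ((X c - X e : MvPolynomial σ R) ^ m).support.card = m + 1 := by
  have hinj : Set.InjOn (fun ij : ℕ × ℕ => Finsupp.single c ij.1 + Finsupp.single e ij.2)
      (antidiagonal m) := by
    intro ij _ ij' _ h
    have hc := DFunLike.congr_fun h c
    have he := DFunLike.congr_fun h e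
    simp [hce, hce.symm] at hc he
    exact Prod.ext hc he
  rw [X_sub_X_pow_eq_sum_monomial, support_sum_monomial_of_injOn hinj,
    card_image_of_injOn hinj, Nat.card_antidiagonal]
  intro ij hij
  rw [Ne, neg_one_pow_mul_eq_zero_iff, Nat.cast_eq_zero]
  exact (Nat.choose_pos (HasAntidiagonal.antidiagonal.fst_le hij)).ne'

theorem vars_X_sub_X_pow_subset [DecidableEq σ] [Nontrivial R] (c e : σ) (m : ℕ) :
    ((X c - X e : MvPolynomial σ R) ^ m).vars ⊆ {c, e} :=
  (vars_pow _ _).trans <| (vars_sub_subset _).trans <| by simp [vars_X]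

end MvPolynomial

/-- For `n ≥ 4` and `d ≥ 2`, the form `f = (y_1 - y_2)(y_3 - y_4)^{d-1}` in
`K[y_1,…,y_n]` satisfies `(x_1 + ⋯ + x_n) ∘ f = 0` (each `x_i` acting as `∂/∂y_i`),
contains no pure power `y_i^d` in its support, and has exactly `2d` monomials. -/
theorem sharp_example_many_vars {K : Type*} [Field K] [CharZero K]
    {n : ℕ} (hn : 4 ≤ n) (d : ℕ) (hd : 2 ≤ d)
    (f : MvPolynomial (Fin n) K)
    (hfdef : f = (MvPolynomial.X (⟨0, by omega⟩ : Fin n) -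
          MvPolynomial.X (⟨1, by omega⟩ : Fin n)) *
        (MvPolynomial.X (⟨2, by omega⟩ : Fin n) -
          MvPolynomial.X (⟨3, by omega⟩ : Fin n)) ^ (d - 1)) :
    (∑ t, MvPolynomial.pderiv t f) = 0 ∧
    (∀ i : Fin n, Finsupp.single i d ∉ f.support) ∧
    f.support.card = 2 * d := by
  subst hfdef
  set p : MvPolynomial (Fin n) K := (X ⟨2, by omega⟩ - X ⟨3, by omega⟩) ^ (d - 1)
  have hvars (j : Fin n) (hj : j ∈ p.vars) : (j : ℕ) = 2 ∨ (j : ℕ) = 3 := by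
    simpa [Fin.ext_iff] using vars_X_sub_X_pow_subset _ _ _ hj
  have h0 : ⟨0, by omega⟩ ∉ p.vars := fun h => by simpa using hvars _ h
  have h1 : ⟨1, by omega⟩ ∉ p.vars := fun h => by simpa using hvars _ h
  refine ⟨?_, fun i hi => ?_, ?_⟩
  · rw [← Derivation.finset_sum_apply]
    exact Derivation.map_mul_pow_eq_zero _ (sum_pderiv_X_sub_X _ _) (sum_pderiv_X_sub_X _ _) _
  · have hne (j : Fin n) : Finsupp.single i d j ≠ 1 := by
      rw [Finsupp.single_apply]
      split_ifs <;> omega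
    exact (eq_one_or_eq_one_of_mem_support_X_sub_X_mul (by simp) h0 h1 hi).elim (hne _) (hne _)
  · rw [card_support_X_sub_X_mul (by simp) h0, card_support_X_sub_X_pow (by simp)]
    omega
end

section
/- Let d ≥ 2 and let a_1, a_2, a_3 be integers. Let N be the number of triples (α_1, α_2, α_3) of non-negative integers with α_1 + α_2 + α_3 = d and a_1α_1 + a_2α_2 + a_3α_3 ≡ 0 (mod d), i.e. the number of monomials of degree d in K[x_1,x_2,x_3] fixed by the action of M_{a_1,a_2,a_3}. Then 2N = 2 + gcd(a_2−a_1, a_3−a_1, d)·d + gcd(a_2−a_1, d) + gcd(a_3−a_1, d) + gcd(a_3−a_2, d), where the gcds are taken in ℤ (yielding non-negative values). -/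
/-!
Eliminating `α₁ = d - α₂ - α₃` turns `N` into the number of lattice points `(y, z)` of the
triangle `y + z ≤ d` with `d ∣ b y + c z`, where `b = a₂ - a₁` and `c = a₃ - a₁`. The point
reflection `(y, z) ↦ (d - y, d - z)` preserves this condition and exchanges the triangle with the
opposite one in the square `[0, d]²`, so `2N` counts the square plus the antidiagonal. Modulo `d`,
the map `(y, z) ↦ b y + c z` on `(ℤ/dℤ)²` has image generated by `g = gcd(b, c, d)`, hence a
kernel of size `d · g`; the sides of the square and the antidiagonal contribute `gcd(b, d)`,
`gcd(c, d)` and `gcd(b - c, d)` by the same count with one coefficient.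
-/

open Finset

theorem card_filter_triple_add_eq (d : ℕ) (Q : ℕ × ℕ × ℕ → Prop) [DecidablePred Q] :
    #{p ∈ range (d + 1) ×ˢ range (d + 1) ×ˢ range (d + 1) | p.1 + p.2.1 + p.2.2 = d ∧ Q p} =
      #{q ∈ range (d + 1) ×ˢ range (d + 1) | q.1 + q.2 ≤ d ∧ Q (d - q.1 - q.2, q)} := by
  refine card_nbij' Prod.snd (fun q => (d - q.1 - q.2, q)) ?_ ?_ ?_ ?_
  · rintro ⟨x, y, z⟩ hp
    simp only [coe_filter, mem_product, mem_range, Set.mem_ofPred_eq] at hp ⊢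
    obtain rfl : x = d - y - z := by omega
    exact ⟨by omega, by omega, hp.2.2⟩
  · rintro ⟨y, z⟩ hq
    simp only [coe_filter, mem_product, mem_range, Set.mem_ofPred_eq] at hq ⊢
    exact ⟨by omega, by omega, hq.2.2⟩
  · rintro ⟨x, y, z⟩ hp
    simp only [coe_filter, mem_product, mem_range, Set.mem_ofPred_eq] at hp
    simp only [Prod.mk.injEq, and_true]
    omega
  · intro q _
    rfl

theorem card_filter_pair_add_eq (d : ℕ) (Q : ℕ × ℕ → Prop) [DecidablePred Q] :
    #{q ∈ range (d + 1) ×ˢ range (d + 1) | q.1 + q.2 = d ∧ Q q} =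
      #{y ∈ range (d + 1) | Q (y, d - y)} := by
  refine card_nbij' Prod.fst (fun y => (y, d - y)) ?_ ?_ ?_ ?_
  · rintro ⟨y, z⟩ hq
    simp only [coe_filter, mem_product, mem_range, Set.mem_ofPred_eq] at hq ⊢
    obtain rfl : z = d - y := by omega
    exact ⟨hq.1.1, hq.2.2⟩
  · intro y hy
    simp only [coe_filter, mem_product, mem_range, Set.mem_ofPred_eq] at hy ⊢
    exact ⟨⟨hy.1, by omega⟩, by omega, hy.2⟩
  · rintro ⟨y, z⟩ hq
    simp only [coe_filter, mem_product, mem_range, Set.mem_ofPred_eq] at hq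
    simp only [Prod.mk.injEq, true_and]
    omega
  · intro y _
    rfl

theorem two_mul_card_filter_add_le (d : ℕ) (P : ℕ × ℕ → Prop) [DecidablePred P]
    (hP : ∀ y ≤ d, ∀ z ≤ d, P (d - y, d - z) ↔ P (y, z)) :
    2 * #{q ∈ range (d + 1) ×ˢ range (d + 1) | q.1 + q.2 ≤ d ∧ P q} =
      #{q ∈ range (d + 1) ×ˢ range (d + 1) | P q} +
        #{q ∈ range (d + 1) ×ˢ range (d + 1) | q.1 + q.2 = d ∧ P q} := by
  set box := range (d + 1) ×ˢ range (d + 1)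
  have hreflect : #{q ∈ box | q.1 + q.2 ≤ d ∧ P q} = #{q ∈ box | d ≤ q.1 + q.2 ∧ P q} := by
    refine card_nbij' (fun q => (d - q.1, d - q.2)) (fun q => (d - q.1, d - q.2)) ?_ ?_ ?_ ?_
    all_goals
      rintro ⟨y, z⟩ hq
      simp only [box, coe_filter, mem_product, mem_range, Set.mem_ofPred_eq] at hq ⊢
    · exact ⟨⟨by omega, by omega⟩, by omega, (hP y (by omega) z (by omega)).2 hq.2.2⟩
    · exact ⟨⟨by omega, by omega⟩, by omega, (hP y (by omega) z (by omega)).2 hq.2.2⟩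
    · simp only [Prod.mk.injEq]; omega
    · simp only [Prod.mk.injEq]; omega
  have hunion : {q ∈ box | q.1 + q.2 ≤ d ∧ P q} ∪ {q ∈ box | d ≤ q.1 + q.2 ∧ P q} =
      {q ∈ box | P q} := by
    rw [← filter_or]
    exact filter_congr fun q _ =>
      ⟨fun h => h.elim And.right And.right, fun hq => (le_total _ _).imp (⟨·, hq⟩) (⟨·, hq⟩)⟩
  have hinter : {q ∈ box | q.1 + q.2 ≤ d ∧ P q} ∩ {q ∈ box | d ≤ q.1 + q.2 ∧ P q} =
      {q ∈ box | q.1 + q.2 = d ∧ P q} := by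
    rw [← filter_and]
    exact filter_congr fun q _ => ⟨fun ⟨⟨hle, hq⟩, hge, _⟩ => ⟨le_antisymm hle hge, hq⟩,
      fun ⟨heq, hq⟩ => ⟨⟨heq.le, hq⟩, heq.ge, hq⟩⟩
  rw [two_mul, ← hunion, ← hinter]
  nth_rewrite 2 [hreflect]
  exact (card_union_add_card_inter _ _).symm

theorem card_filter_range_succ_product (d : ℕ) (P : ℕ × ℕ → Prop) [DecidablePred P]
    (hright : ∀ x, P (x, d) ↔ P (x, 0)) (htop : ∀ y, P (d, y) ↔ P (0, y)) :
    #{q ∈ range (d + 1) ×ˢ range (d + 1) | P q} =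
      #{q ∈ range d ×ˢ range d | P q} + #{x ∈ range d | P (x, 0)} +
        #{y ∈ range d | P (0, y)} + if P (0, 0) then 1 else 0 := by
  simp only [card_filter, sum_product, sum_range_succ, sum_add_distrib, hright, htop]
  ring

namespace ZMod

variable {d : ℕ}

theorem intCast_mul_mem_zmultiples {g : ℕ} {k : ℤ} (h : (g : ℤ) ∣ k) (x : ZMod d) :
    (k : ZMod d) * x ∈ AddSubgroup.zmultiples (g : ZMod d) := by
  obtain ⟨m, rfl⟩ := h
  exact ⟨m * x.cast, by push_cast [zsmul_eq_mul, intCast_zmod_cast]; ring⟩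

theorem range_mulLeft_coprod_mulLeft (b c : ℤ) :
    ((AddMonoidHom.mulLeft (b : ZMod d)).coprod (AddMonoidHom.mulLeft (c : ZMod d))).range =
      AddSubgroup.zmultiples (Int.gcd b (Int.gcd c d) : ZMod d) := by
  apply le_antisymm
  · rintro _ ⟨⟨u, v⟩, rfl⟩
    have hc : (Int.gcd b (Int.gcd c d) : ℤ) ∣ c :=
      (Int.gcd_dvd_right _ _).trans (Int.gcd_dvd_left _ _)
    exact add_mem (intCast_mul_mem_zmultiples (Int.gcd_dvd_left _ _) u)
      (intCast_mul_mem_zmultiples hc v)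
  · rw [AddSubgroup.zmultiples_le]
    refine ⟨(Int.gcdA b (Int.gcd c d), Int.gcdA c d * Int.gcdB b (Int.gcd c d)), ?_⟩
    have hb := congrArg (Int.cast : ℤ → ZMod d) (Int.gcd_eq_gcd_ab b (Int.gcd c d))
    have hc := congrArg (Int.cast : ℤ → ZMod d) (Int.gcd_eq_gcd_ab c d)
    push_cast [natCast_self] at hb hc
    simp only [AddMonoidHom.coprod_apply, AddMonoidHom.coe_mulLeft]
    linear_combination -hb - Int.gcdB b (Int.gcd c d) * hc

theorem card_ker_mul_div_of_range_eq_zmultiples [NeZero d] {G : Type*} [AddGroup G]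
    (f : G →+ ZMod d) {g : ℕ} (hg : g ∣ d)
    (hf : f.range = AddSubgroup.zmultiples (g : ZMod d)) :
    Nat.card f.ker * (d / g) = Nat.card G := by
  rw [← f.ker.card_mul_index, AddSubgroup.index_ker, hf, Nat.card_zmultiples,
    addOrderOf_coe _ (NeZero.ne d), Nat.gcd_eq_right hg]

end ZMod

section Counting

variable {d : ℕ} [NeZero d]

theorem card_filter_range_product_dvd (b c : ℤ) :
    #{p ∈ range d ×ˢ range d | (d : ℤ) ∣ b * p.1 + c * p.2} = d * Int.gcd b (Int.gcd c d) := by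
  set f := (AddMonoidHom.mulLeft (b : ZMod d)).coprod (AddMonoidHom.mulLeft (c : ZMod d))
  have hdvd : ∀ x y : ℕ, (d : ℤ) ∣ b * x + c * y ↔ f (x, y) = 0 := fun x y => by
    rw [← ZMod.intCast_zmod_eq_zero_iff_dvd]
    push_cast
    rfl
  have hcount : #{p ∈ range d ×ˢ range d | (d : ℤ) ∣ b * p.1 + c * p.2} = Nat.card f.ker := by
    rw [Nat.card_eq_fintype_card, Fintype.card_subtype]
    refine card_nbij' (fun p => ((p.1 : ZMod d), (p.2 : ZMod d))) (fun q => (q.1.val, q.2.val))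
      ?_ ?_ ?_ ?_
    · intro p hp
      simp_all
    · intro q hq
      simp_all [ZMod.val_lt]
    · intro p hp
      simp_all [Nat.mod_eq_of_lt]
    · intro q _
      simp
  have hg : Int.gcd b (Int.gcd c d) ∣ d :=
    Int.ofNat_dvd.mp ((Int.gcd_dvd_right _ _).trans (Int.gcd_dvd_right _ _))
  have hker := ZMod.card_ker_mul_div_of_range_eq_zmultiples f hg
    (ZMod.range_mulLeft_coprod_mulLeft b c)
  rw [hcount]
  have hpos : 0 < d / Int.gcd b (Int.gcd c d) := Nat.div_pos (Nat.le_of_dvd (NeZero.pos d) hg)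
    (Nat.pos_of_dvd_of_pos hg (NeZero.pos d))
  refine Nat.eq_of_mul_eq_mul_right hpos ?_
  rw [hker, Nat.card_prod, Nat.card_zmod, mul_assoc, Nat.mul_div_cancel' hg]

theorem card_filter_range_dvd (b : ℤ) : #{x ∈ range d | (d : ℤ) ∣ b * (x : ℕ)} = Int.gcd b d := by
  have h := card_filter_range_product_dvd (d := d) b 0
  simp only [zero_mul, add_zero, Int.gcd_zero_left, Int.natAbs_natCast] at h
  rw [filter_product_left (fun x : ℕ => (d : ℤ) ∣ b * x), card_product, card_range, mul_comm] at h
  exact Nat.eq_of_mul_eq_mul_left (NeZero.pos d) h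

theorem card_filter_box_dvd (b c : ℤ) :
    #{q ∈ range (d + 1) ×ˢ range (d + 1) | (d : ℤ) ∣ b * q.1 + c * q.2} =
      d * Int.gcd b (Int.gcd c d) + Int.gcd b d + Int.gcd c d + 1 := by
  rw [card_filter_range_succ_product d _
    (fun x => by push_cast; rw [mul_zero, add_zero, dvd_add_left (dvd_mul_left _ _)])
    (fun y => by push_cast; rw [mul_zero, zero_add, dvd_add_right (dvd_mul_left _ _)])]
  simp only [Nat.cast_zero, mul_zero, add_zero, zero_add, dvd_zero, if_true]
  rw [card_filter_range_product_dvd, card_filter_range_dvd, card_filter_range_dvd]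

theorem card_filter_antidiagonal_dvd (b c : ℤ) :
    #{q ∈ range (d + 1) ×ˢ range (d + 1) | q.1 + q.2 = d ∧ (d : ℤ) ∣ b * q.1 + c * q.2} =
      Int.gcd (b - c) d + 1 := by
  have hshift : ∀ y ∈ range (d + 1),
      (d : ℤ) ∣ b * y + c * (d - y : ℕ) ↔ (d : ℤ) ∣ (b - c) * (y : ℕ) := fun y hy => by
    rw [Nat.cast_sub (mem_range_succ_iff.mp hy),
      show b * y + c * (d - y) = (b - c) * y + c * d by ring, dvd_add_left (dvd_mul_left _ _)]
  rw [card_filter_pair_add_eq, filter_congr hshift, range_add_one, filter_insert,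
    if_pos (dvd_mul_left _ _), card_insert_of_notMem (by simp), card_filter_range_dvd]

end Counting

/-- The number `N` of monomials of degree `d` in three variables fixed by the action
`x_i ↦ ξ^{a_i} x_i` of `ℤ/dℤ`, i.e. of triples `(α_1, α_2, α_3)` with
`α_1 + α_2 + α_3 = d` and `a_1α_1 + a_2α_2 + a_3α_3 ≡ 0 (mod d)`, satisfies
`2N = 2 + gcd(a_2-a_1, a_3-a_1, d)·d + gcd(a_2-a_1, d) + gcd(a_3-a_1, d) + gcd(a_3-a_2, d)`. -/
theorem count_fixed_monomials_three_vars (d : ℕ) (hd : 2 ≤ d) (a₁ a₂ a₃ : ℤ)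
    (N : ℕ)
    (hN : N = ((Finset.range (d + 1) ×ˢ Finset.range (d + 1) ×ˢ
          Finset.range (d + 1)).filter fun p =>
        p.1 + p.2.1 + p.2.2 = d ∧
          (d : ℤ) ∣ (a₁ * p.1 + a₂ * p.2.1 + a₃ * p.2.2)).card) :
    2 * N = 2 + Int.gcd (a₂ - a₁) (Int.gcd (a₃ - a₁) (d : ℤ) : ℤ) * d +
        Int.gcd (a₂ - a₁) (d : ℤ) + Int.gcd (a₃ - a₁) (d : ℤ) +
        Int.gcd (a₃ - a₂) (d : ℤ) := by
  have : NeZero d := ⟨by omega⟩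
  set b := a₂ - a₁
  set c := a₃ - a₁
  have heliminate : ∀ q ∈ range (d + 1) ×ˢ range (d + 1), (q.1 + q.2 ≤ d ∧
      (d : ℤ) ∣ a₁ * (d - q.1 - q.2 : ℕ) + a₂ * q.1 + a₃ * q.2) ↔
        (q.1 + q.2 ≤ d ∧ (d : ℤ) ∣ b * q.1 + c * q.2) := fun q _ => and_congr_right fun h => by
    rw [Nat.sub_sub, Nat.cast_sub h, show a₁ * (d - (q.1 + q.2 : ℕ)) + a₂ * q.1 + a₃ * q.2 =
      a₁ * d + (b * q.1 + c * q.2) by push_cast; ring, dvd_add_right (dvd_mul_left _ _)]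
  have hreflect : ∀ y ≤ d, ∀ z ≤ d,
      (d : ℤ) ∣ b * (d - y : ℕ) + c * (d - z : ℕ) ↔ (d : ℤ) ∣ b * y + c * z := fun y hy z hz => by
    rw [Nat.cast_sub hy, Nat.cast_sub hz, show b * (d - y) + c * (d - z) =
      d * (b + c) - (b * y + c * z) by ring, dvd_sub_right (dvd_mul_right _ _)]
  have hgcd : Int.gcd (a₃ - a₂) d = Int.gcd (b - c) d := by
    rw [show a₃ - a₂ = -(b - c) by ring, Int.neg_gcd]
  rw [hN, card_filter_triple_add_eq, filter_congr heliminate,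
    two_mul_card_filter_add_le d _ hreflect, card_filter_box_dvd, card_filter_antidiagonal_dvd,
    hgcd]
  ring
end

section
/- Let d ≥ 2, let ξ = e^{2πi/d} ∈ ℂ, and let a_1, a_2, a_3 be pairwise distinct integers with 0 ≤ a_i ≤ d−1. Let l and k be the residues of a_2 − a_3 − 1 and a_3 − a_1 − 1 modulo d (so 0 ≤ l, k ≤ d−1). Define the linear form L = (Σ_{j=0}^{l} ξ^j) x_1 + (Σ_{j=l+1}^{l+k+1} ξ^j) x_2 + (Σ_{j=l+k+2}^{2d−1} ξ^j) x_3 ∈ ℂ[x_1,x_2,x_3], let L̄ be the linear form obtained from L by complex-conjugating its coefficients, and set F = L^d − L̄^d. Then for every monomial x_1^{α_1}x_2^{α_2}x_3^{α_3} of degree d, its coefficient in F is non-zero if and only if a_1α_1 + a_2α_2 + a_3α_3 ≢ 0 (mod d); that is, supp(F) consists exactly of the degree-d monomials that are not invariant under the action x_i ↦ ξ^{a_i}x_i of ℤ/dℤ. -/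
/-!
Each coefficient of `L` is a sum of `ξ ^ j` over an arc `s ≤ j ≤ t`. Reflecting the arc
(`j ↦ s + t - j`, with `ξ̄ = ξ⁻¹`) gives `ξ ^ (s + t) * c̄ = c`, and `c ≠ 0` as long as `d` does
not divide the arc length. By the multinomial theorem the coefficient of `x ^ α` in `F` is
`multinomial α * (P - P̄)` with `P = ∏ cᵢ ^ αᵢ`, and `P = ξ ^ E * P̄` for `E = ∑ (sᵢ + tᵢ) αᵢ`,
so it vanishes iff `d ∣ E`. Finally `sᵢ + tᵢ ≡ aᵢ + (a₂ - a₃ - a₁ - 1) (mod d)` and `∑ αᵢ = d`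
removes the constant shift, while the arc lengths are `≡ a₂ - a₃, a₃ - a₁, a₁ - a₂ (mod d)`,
non-zero by distinctness.
-/

open MvPolynomial Finset

section GeomSum

variable {R : Type*}

theorem sum_Icc_pow_eq_pow_mul_geom_sum [Semiring R] (x : R) (a b : ℕ) :
    ∑ j ∈ Icc a b, x ^ j = x ^ a * ∑ i ∈ range (b + 1 - a), x ^ i := by
  rw [← Ico_add_one_right_eq_Icc, sum_Ico_eq_sum_range, mul_sum]
  simp only [pow_add]

theorem pow_add_mul_star_sum_Icc_pow [CommSemiring R] [StarRing R] {x : R}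
    (hx : x * star x = 1) (a b : ℕ) :
    x ^ (a + b) * star (∑ j ∈ Icc a b, x ^ j) = ∑ j ∈ Icc a b, x ^ j := by
  rw [star_sum, mul_sum]
  refine sum_nbij' (fun j ↦ a + b - j) (fun j ↦ a + b - j) ?_ ?_ ?_ ?_ fun j hj ↦ ?_
  any_goals intro j hj; simp only [mem_Icc] at hj ⊢; omega
  have hjb : j ≤ a + b := (mem_Icc.mp hj).2.trans (Nat.le_add_left b a)
  calc x ^ (a + b) * star (x ^ j) = x ^ (a + b - j) * (x * star x) ^ j := by
        rw [mul_pow, star_pow, ← mul_assoc, ← pow_add, Nat.sub_add_cancel hjb]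
    _ = x ^ (a + b - j) := by rw [hx, one_pow, mul_one]

theorem IsPrimitiveRoot.geom_sum_ne_zero [CommRing R] {ζ : R} {k n : ℕ}
    (hζ : IsPrimitiveRoot ζ k) (hn : ¬ k ∣ n) : ∑ i ∈ range n, ζ ^ i ≠ 0 := by
  intro h
  apply hn
  rw [← hζ.pow_eq_one_iff_dvd, ← sub_eq_zero, ← geom_sum_mul, h, zero_mul]

theorem IsPrimitiveRoot.sum_Icc_pow_ne_zero [CommRing R] {ζ : R} {k : ℕ}
    (hζ : IsPrimitiveRoot ζ k) (hk : k ≠ 0) {a b : ℕ} (hab : ¬ k ∣ b + 1 - a) :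
    ∑ j ∈ Icc a b, ζ ^ j ≠ 0 := by
  rw [sum_Icc_pow_eq_pow_mul_geom_sum, Ne, ((hζ.isUnit hk).pow a).mul_right_eq_zero]
  exact hζ.geom_sum_ne_zero hab

end GeomSum

section Coeff

variable {σ R : Type*} [Fintype σ] [CommRing R] [StarRing R]

theorem MvPolynomial.coeff_sum_C_mul_X_pow_sub_star (c : σ → R) (α : σ →₀ ℕ) {n : ℕ}
    (hα : α.sum (fun _ m ↦ m) = n) :
    coeff α ((∑ i, C (c i) * X i) ^ n - (∑ i, C (star (c i)) * X i) ^ n) =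
      α.multinomial * (∏ i, c i ^ α i - star (∏ i, c i ^ α i)) := by
  simp only [← smul_eq_C_mul, coeff_sub, coeff_linearCombination_X_pow_of_fintype, if_pos hα,
    Finsupp.prod_fintype _ _ (fun _ ↦ pow_zero _), star_prod, star_pow, mul_sub]

theorem IsPrimitiveRoot.prod_pow_eq_star_iff [IsDomain R] {ζ : R} {k : ℕ}
    (hζ : IsPrimitiveRoot ζ k) {c : σ → R} (hc : ∀ i, c i ≠ 0) {e : σ → ℕ}
    (he : ∀ i, ζ ^ e i * star (c i) = c i) (α : σ → ℕ) :
    ∏ i, c i ^ α i = star (∏ i, c i ^ α i) ↔ k ∣ ∑ i, e i * α i := by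
  have hP : ∏ i, c i ^ α i = ζ ^ (∑ i, e i * α i) * star (∏ i, c i ^ α i) :=
    calc ∏ i, c i ^ α i = ∏ i, (ζ ^ e i * star (c i)) ^ α i := by simp only [he]
      _ = ζ ^ (∑ i, e i * α i) * star (∏ i, c i ^ α i) := by
        simp only [star_prod, ← prod_pow_eq_pow_sum, mul_pow, prod_mul_distrib, pow_mul, star_pow]
  have hP0 : star (∏ i, c i ^ α i) ≠ 0 :=
    star_ne_zero.mpr (prod_ne_zero_iff.mpr fun i _ ↦ pow_ne_zero _ (hc i))
  calc ∏ i, c i ^ α i = star (∏ i, c i ^ α i)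
        ↔ ζ ^ (∑ i, e i * α i) * star (∏ i, c i ^ α i) = 1 * star (∏ i, c i ^ α i) := by
          rw [one_mul, ← hP]
    _ ↔ ζ ^ (∑ i, e i * α i) = 1 := mul_left_inj' hP0
    _ ↔ k ∣ ∑ i, e i * α i := hζ.pow_eq_one_iff_dvd _

theorem MvPolynomial.coeff_pow_sub_star_pow_eq_zero_iff [IsDomain R] [CharZero R] {ζ : R}
    {k : ℕ} (hζ : IsPrimitiveRoot ζ k) (hk : k ≠ 0) (hζ_star : ζ * star ζ = 1) (s t : σ → ℕ)
    (hst : ∀ i, ¬ k ∣ t i + 1 - s i) (α : σ →₀ ℕ) {n : ℕ} (hα : α.sum (fun _ m ↦ m) = n) :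
    coeff α ((∑ i, C (∑ j ∈ Icc (s i) (t i), ζ ^ j) * X i) ^ n -
        (∑ i, C (star (∑ j ∈ Icc (s i) (t i), ζ ^ j)) * X i) ^ n) = 0 ↔
      k ∣ ∑ i, (s i + t i) * α i := by
  have hα_multinomial : (α.multinomial : R) ≠ 0 :=
    Nat.cast_ne_zero.mpr (Nat.multinomial_pos _ _).ne'
  rw [coeff_sum_C_mul_X_pow_sub_star _ _ hα, mul_eq_zero, or_iff_right hα_multinomial, sub_eq_zero]
  exact hζ.prod_pow_eq_star_iff (fun i ↦ hζ.sum_Icc_pow_ne_zero hk (hst i))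
    (fun i ↦ pow_add_mul_star_sum_Icc_pow hζ_star _ _) α

end Coeff

theorem not_dvd_of_natCast_eq_intCast_sub {d n : ℕ} {a b : ℤ} (ha : 0 ≤ a) (ha' : a < d)
    (hb : 0 ≤ b) (hb' : b < d) (hab : a ≠ b) (hn : (n : ZMod d) = a - b) : ¬ d ∣ n := by
  rwa [← ZMod.natCast_eq_zero_iff, hn, sub_eq_zero, ZMod.intCast_eq_intCast_iff',
    Int.emod_eq_of_lt ha ha', Int.emod_eq_of_lt hb hb']

theorem dvd_sum_mul_iff_of_intCast_eq_add {σ : Type*} [Fintype σ] {d : ℕ} (e : σ → ℕ)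
    (a : σ → ℤ) (K : ZMod d) (he : ∀ i, (e i : ZMod d) = a i + K) (α : σ → ℕ)
    (hα : ∑ i, α i = d) : d ∣ ∑ i, e i * α i ↔ (d : ℤ) ∣ ∑ i, a i * α i := by
  rw [← ZMod.natCast_eq_zero_iff, ← ZMod.intCast_zmod_eq_zero_iff_dvd]
  have hα' : ∑ i, (α i : ZMod d) = 0 := by rw [← Nat.cast_sum, hα, ZMod.natCast_self]
  push_cast
  simp only [he, add_mul, sum_add_distrib, ← mul_sum, hα', mul_zero, add_zero]

section Arcs

variable {d l k : ℕ} {a₁ a₂ a₃ : ℤ}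

def arcStart (l k : ℕ) : Fin 3 → ℕ := ![0, l + 1, l + k + 2]

def arcEnd (d l k : ℕ) : Fin 3 → ℕ := ![l, l + k + 1, 2 * d - 1]

theorem not_dvd_arc_length (h₁ : 0 ≤ a₁) (h₁' : a₁ < d) (h₂ : 0 ≤ a₂) (h₂' : a₂ < d)
    (h₃ : 0 ≤ a₃) (h₃' : a₃ < d) (hne₁ : a₁ ≠ a₂) (hne₂ : a₁ ≠ a₃) (hne₃ : a₂ ≠ a₃)
    (hl_lt : l < d) (hk_lt : k < d) (hl : (l : ZMod d) = a₂ - a₃ - 1)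
    (hk : (k : ZMod d) = a₃ - a₁ - 1) (i : Fin 3) :
    ¬ d ∣ arcEnd d l k i + 1 - arcStart l k i := by
  fin_cases i <;>
    simp only [arcStart, arcEnd, Fin.zero_eta, Fin.mk_one, Fin.reduceFinMk, Matrix.cons_val]
  · refine not_dvd_of_natCast_eq_intCast_sub h₂ h₂' h₃ h₃' hne₃ ?_
    push_cast; linear_combination hl
  · refine not_dvd_of_natCast_eq_intCast_sub h₃ h₃' h₁ h₁' hne₂.symm ?_
    rw [Nat.cast_sub (by omega)]
    push_cast; linear_combination hk
  · refine not_dvd_of_natCast_eq_intCast_sub h₁ h₁' h₂ h₂' hne₁ ?_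
    rw [Nat.cast_sub (by omega), Nat.cast_add, Nat.cast_sub (by omega)]
    push_cast; linear_combination 2 * ZMod.natCast_self d - hl - hk

theorem natCast_arcStart_add_arcEnd (hd : d ≠ 0) (hl : (l : ZMod d) = a₂ - a₃ - 1)
    (hk : (k : ZMod d) = a₃ - a₁ - 1) (i : Fin 3) :
    ((arcStart l k i + arcEnd d l k i : ℕ) : ZMod d) =
      ![a₁, a₂, a₃] i + ((a₂ - a₃ - a₁ - 1 : ℤ) : ZMod d) := by
  fin_cases i <;>
    simp only [arcStart, arcEnd, Fin.zero_eta, Fin.mk_one, Fin.reduceFinMk, Matrix.cons_val]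
  · push_cast; linear_combination hl
  · push_cast; linear_combination 2 * hl + hk
  · rw [Nat.cast_add, Nat.cast_sub (by omega)]
    push_cast; linear_combination hl + hk + 2 * ZMod.natCast_self d

end Arcs

/-- For `ξ = e^{2πi/d}` and pairwise distinct integers `0 ≤ a_1, a_2, a_3 ≤ d-1`, let
`l, k` be the residues of `a_2 - a_3 - 1` and `a_3 - a_1 - 1` mod `d`, and let
`L = (∑_{j=0}^{l} ξ^j) x_1 + (∑_{j=l+1}^{l+k+1} ξ^j) x_2 + (∑_{j=l+k+2}^{2d-1} ξ^j) x_3`.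
Then the support of `F = L^d - L̄^d` consists exactly of the degree-`d` monomials
not invariant under `x_i ↦ ξ^{a_i} x_i`, i.e. those with
`a_1α_1 + a_2α_2 + a_3α_3 ≢ 0 (mod d)`. -/
theorem support_of_L_pow_sub_conj (d : ℕ) (hd : 2 ≤ d)
    (ξ : ℂ) (hξ : ξ = Complex.exp (2 * Real.pi * Complex.I / d))
    (a₁ a₂ a₃ : ℤ) (h₁ : 0 ≤ a₁) (h₁' : a₁ ≤ (d : ℤ) - 1)
    (h₂ : 0 ≤ a₂) (h₂' : a₂ ≤ (d : ℤ) - 1) (h₃ : 0 ≤ a₃) (h₃' : a₃ ≤ (d : ℤ) - 1)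
    (hne₁ : a₁ ≠ a₂) (hne₂ : a₁ ≠ a₃) (hne₃ : a₂ ≠ a₃)
    (l k : ℕ) (hl : (l : ℤ) = (a₂ - a₃ - 1) % (d : ℤ)) (hk : (k : ℤ) = (a₃ - a₁ - 1) % (d : ℤ))
    (c₁ c₂ c₃ : ℂ)
    (hc₁ : c₁ = ∑ j ∈ Finset.range (l + 1), ξ ^ j)
    (hc₂ : c₂ = ∑ j ∈ Finset.Icc (l + 1) (l + k + 1), ξ ^ j)
    (hc₃ : c₃ = ∑ j ∈ Finset.Icc (l + k + 2) (2 * d - 1), ξ ^ j)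
    (L Lbar F : MvPolynomial (Fin 3) ℂ)
    (hL : L = MvPolynomial.C c₁ * MvPolynomial.X 0 + MvPolynomial.C c₂ * MvPolynomial.X 1 +
        MvPolynomial.C c₃ * MvPolynomial.X 2)
    (hLbar : Lbar = MvPolynomial.C ((starRingEnd ℂ) c₁) * MvPolynomial.X 0 +
        MvPolynomial.C ((starRingEnd ℂ) c₂) * MvPolynomial.X 1 +
        MvPolynomial.C ((starRingEnd ℂ) c₃) * MvPolynomial.X 2)
    (hF : F = L ^ d - Lbar ^ d) :
    ∀ α : Fin 3 →₀ ℕ, α 0 + α 1 + α 2 = d →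
      (F.coeff α ≠ 0 ↔ ¬ (d : ℤ) ∣ (a₁ * α 0 + a₂ * α 1 + a₃ * α 2)) := by
  intro α hα
  have hd0 : d ≠ 0 := by omega
  have hζ : IsPrimitiveRoot ξ d := hξ ▸ Complex.isPrimitiveRoot_exp d hd0
  have hζ_star : ξ * star ξ = 1 := by
    rw [Complex.star_def, Complex.mul_conj', hζ.norm'_eq_one hd0]
    norm_num
  have hl_lt : (l : ℤ) < d := hl ▸ Int.emod_lt_of_pos _ (by omega)
  have hk_lt : (k : ℤ) < d := hk ▸ Int.emod_lt_of_pos _ (by omega)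
  have hl_zmod : (l : ZMod d) = a₂ - a₃ - 1 := by
    rw [← Int.cast_natCast, hl, ZMod.intCast_mod]; push_cast; ring
  have hk_zmod : (k : ZMod d) = a₃ - a₁ - 1 := by
    rw [← Int.cast_natCast, hk, ZMod.intCast_mod]; push_cast; ring
  rw [Nat.range_succ_eq_Icc_zero] at hc₁
  have hL_arcs : L = ∑ i, C (∑ j ∈ Icc (arcStart l k i) (arcEnd d l k i), ξ ^ j) * X i := by
    simp [hL, hc₁, hc₂, hc₃, Fin.sum_univ_three, arcStart, arcEnd]
  have hLbar_arcs :
      Lbar = ∑ i, C (star (∑ j ∈ Icc (arcStart l k i) (arcEnd d l k i), ξ ^ j)) * X i := by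
    simp [hLbar, hc₁, hc₂, hc₃, Fin.sum_univ_three, arcStart, arcEnd]
  rw [ne_eq, hF, hL_arcs, hLbar_arcs, coeff_pow_sub_star_pow_eq_zero_iff hζ hd0 hζ_star _ _
      (not_dvd_arc_length h₁ (by omega) h₂ (by omega) h₃ (by omega) hne₁ hne₂ hne₃ (by omega)
        (by omega) hl_zmod hk_zmod) α
      (by rwa [Finsupp.sum_fintype _ _ fun _ ↦ rfl, Fin.sum_univ_three]),
    dvd_sum_mul_iff_of_intCast_eq_add _ _ _ (natCast_arcStart_add_arcEnd hd0 hl_zmod hk_zmod) α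
      (by rwa [Fin.sum_univ_three])]
  simp [Fin.sum_univ_three]
end

section
/- Let n ≥ 3, d ≥ 2, and let a_1,…,a_n be integers with 0 ≤ a_i ≤ d−1 such that no value occurs among a_1,…,a_n more than n−2 times (i.e. at most n−2 of the integers a_i are equal). Then there exists a non-zero homogeneous polynomial f of degree d in ℂ[y_1,…,y_n] such that (x_1 + ⋯ + x_n) ∘ f = 0 and every monomial y_1^{α_1}⋯y_n^{α_n} ∈ supp(f) satisfies a_1α_1 + ⋯ + a_nα_n ≢ 0 (mod d). -/
open MvPolynomial Finset

/-!
Take a linear form `L = ∑ b_t y_t` with `∑ b_t = 0` and `∑ ξ^{a_t} b_t = 0`, and let `L'` be its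
image under the scaling `y_t ↦ ξ^{a_t} y_t`. The form `f = L^d - L'^d` is killed by `∑ ∂_t`, since
`∑ ∂_t (L^d) = d L^{d-1} ∑ b_t`, and its coefficient at `y^m` is `1 - ξ^{a·m}` times that of
`L^d`, which vanishes when `d ∣ a·m`. If `b_i, b_k ≠ 0` with `a_i ≠ a_k`, evaluating `f` at
`y_i = 1/b_i`, `y_k = 1/b_k` (other coordinates `0`) gives `2^d - (ξ^{a_i} + ξ^{a_k})^d`, which is
non-zero by strict convexity of the norm. Such `b` exist because the bound on occurrences forces
either three distinct values among the `a_t` or two pairs of equal values with different values.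
-/

section LinearForm

variable {σ R : Type*} [Fintype σ] [CommRing R]

noncomputable def linearForm (b : σ → R) : MvPolynomial σ R :=
  ∑ t, C (b t) * X t

theorem isHomogeneous_linearForm (b : σ → R) : (linearForm b).IsHomogeneous 1 :=
  IsHomogeneous.sum _ _ _ fun t _ => isHomogeneous_C_mul_X (b t) t

theorem pderiv_linearForm (b : σ → R) (t : σ) :
    pderiv t (linearForm b) = C (b t) := by
  classical
  simp [linearForm, pderiv_X, Pi.single_apply]

theorem eval_linearForm (b y : σ → R) : eval y (linearForm b) = ∑ t, b t * y t := by
  simp [linearForm]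

theorem sum_pderiv_linearForm_pow (b : σ → R) (hb : ∑ t, b t = 0) (d : ℕ) :
    ∑ t, pderiv t (linearForm b ^ d) = 0 := by
  simp only [Derivation.leibniz_pow, pderiv_linearForm, ← Finset.smul_sum, ← map_sum, hb,
    map_zero, smul_zero]

noncomputable def diagScale (s : σ → R) : MvPolynomial σ R →ₐ[R] MvPolynomial σ R :=
  aeval fun t => C (s t) * X t

theorem diagScale_linearForm (s b : σ → R) :
    diagScale s (linearForm b) = linearForm (s * b) := by
  simp [diagScale, linearForm, mul_left_comm, mul_comm]

theorem diagScale_monomial (s : σ → R) (v : σ →₀ ℕ) (r : R) :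
    diagScale s (monomial v r) = monomial v ((∏ t, s t ^ v t) * r) := by
  rw [diagScale, aeval_monomial, monomial_eq, Finsupp.prod_fintype _ _ fun _ => pow_zero _,
    Finsupp.prod_fintype _ _ fun _ => pow_zero _]
  simp only [mul_pow, prod_mul_distrib, map_mul, map_prod, map_pow, algebraMap_eq]
  ring

theorem coeff_diagScale (s : σ → R) (p : MvPolynomial σ R) (m : σ →₀ ℕ) :
    coeff m (diagScale s p) = (∏ t, s t ^ m t) * coeff m p := by
  classical
  induction p using MvPolynomial.induction_on' with
  | monomial v r =>
    rw [diagScale_monomial, coeff_monomial, coeff_monomial]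
    split_ifs with h <;> simp [h]
  | add p q hp hq => simp only [map_add, coeff_add, hp, hq, mul_add]

end LinearForm

section Complex

variable {σ : Type*} [Fintype σ]

theorem linearForm_pow_sub_ne_zero {b w : σ → ℂ} {i k : σ} (hwi : ‖w i‖ = 1) (hwk : ‖w k‖ = 1)
    (hwik : w i ≠ w k) (hbi : b i ≠ 0) (hbk : b k ≠ 0) {d : ℕ} (hd : d ≠ 0) :
    linearForm b ^ d - linearForm (w * b) ^ d ≠ 0 := by
  classical
  have hik : i ≠ k := fun h => hwik (h ▸ rfl)
  set y : σ → ℂ := Pi.single i (b i)⁻¹ + Pi.single k (b k)⁻¹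
  have heval (c : σ → ℂ) : eval y (linearForm c) = c i * (b i)⁻¹ + c k * (b k)⁻¹ := by
    simp [eval_linearForm, y, mul_add, Finset.sum_add_distrib, Pi.single_apply]
  have hnorm_lt : ‖w i + w k‖ < 2 := by
    have := not_sameRay_iff_norm_add_lt.mp
      ((not_sameRay_iff_of_norm_eq (hwi.trans hwk.symm)).mpr hwik)
    rwa [hwi, hwk, one_add_one_eq_two] at this
  intro h
  have h2 : (2 : ℂ) ^ d = (w i + w k) ^ d := by
    simpa [heval, hbi, hbk, sub_eq_zero, one_add_one_eq_two] using congrArg (eval y) h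
  have := congrArg norm h2
  rw [norm_pow, norm_pow, Complex.norm_two] at this
  exact (pow_lt_pow_left₀ hnorm_lt (norm_nonneg _) hd).ne this.symm

theorem exists_form_of_balanced {d : ℕ} (hd : d ≠ 0) {ξ : ℂ} (hξ : IsPrimitiveRoot ξ d)
    (a : σ → ℕ) {b : σ → ℂ} (hb : ∑ t, b t = 0) (hwb : ∑ t, ξ ^ a t * b t = 0) {i k : σ}
    (hik : ξ ^ a i ≠ ξ ^ a k) (hbi : b i ≠ 0) (hbk : b k ≠ 0) :
    ∃ f : MvPolynomial σ ℂ, f ≠ 0 ∧ f.IsHomogeneous d ∧ (∑ t, pderiv t f) = 0 ∧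
      ∀ m ∈ f.support, ¬ d ∣ ∑ t, a t * m t := by
  set w : σ → ℂ := fun t => ξ ^ a t
  have hw (t : σ) : ‖w t‖ = 1 := by simp [w, hξ.norm'_eq_one hd]
  have hscale : linearForm (w * b) ^ d = diagScale w (linearForm b ^ d) := by
    rw [map_pow, diagScale_linearForm]
  refine ⟨linearForm b ^ d - linearForm (w * b) ^ d,
    linearForm_pow_sub_ne_zero (hw i) (hw k) hik hbi hbk hd, ?_, ?_, ?_⟩
  · simpa using ((isHomogeneous_linearForm b).pow d).sub ((isHomogeneous_linearForm _).pow d)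
  · simp only [map_sub, sum_sub_distrib, sum_pderiv_linearForm_pow b hb,
      sum_pderiv_linearForm_pow (w * b) hwb, sub_zero]
  · intro m hm hdvd
    have hprod : ∏ t, w t ^ m t = 1 := by
      simp only [w, ← pow_mul, prod_pow_eq_pow_sum, (hξ.pow_eq_one_iff_dvd _).2 hdvd]
    rw [mem_support_iff, coeff_sub, hscale, coeff_diagScale, hprod, one_mul, sub_self] at hm
    exact hm rfl

end Complex

section Occurrences

variable {ι α : Type*} [Fintype ι] [DecidableEq α] {a : ι → α}

theorem one_lt_card_filter_ne (hocc : ∀ v, #{t | a t = v} ≤ Fintype.card ι - 2) (i : ι) :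
    1 < #{t | a t ≠ a i} := by
  have hpos : 0 < #{t | a t = a i} := card_pos.2 ⟨i, by simp⟩
  have hsplit : #{t | a t = a i} + #{t | a t ≠ a i} = Fintype.card ι :=
    card_filter_add_card_filter_not _
  have := hocc (a i)
  omega

theorem exists_three_values_or_two_pairs [Nonempty ι]
    (hocc : ∀ v, #{t | a t = v} ≤ Fintype.card ι - 2) :
    (∃ i j k, a i ≠ a j ∧ a i ≠ a k ∧ a j ≠ a k) ∨
      ∃ i j k l, i ≠ j ∧ k ≠ l ∧ a i = a j ∧ a k = a l ∧ a i ≠ a k := by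
  obtain ⟨i⟩ := ‹Nonempty ι›
  obtain ⟨k, hk, l, hl, hkl⟩ := one_lt_card.1 (one_lt_card_filter_ne hocc i)
  simp only [mem_filter, mem_univ, true_and] at hk hl
  by_cases hakl : a k = a l
  · obtain ⟨j, hj, hji⟩ := exists_mem_ne (one_lt_card_filter_ne hocc k) i
    simp only [mem_filter, mem_univ, true_and] at hj
    by_cases haji : a j = a i
    · exact Or.inr ⟨i, j, k, l, hji.symm, hkl, haji.symm, hakl, Ne.symm hk⟩
    · exact Or.inl ⟨i, j, k, Ne.symm haji, Ne.symm hk, hj⟩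
  · exact Or.inl ⟨i, k, l, Ne.symm hk, Ne.symm hl, hakl⟩

end Occurrences

section Balanced

variable {ι K : Type*} [Fintype ι] [CommRing K] {w : ι → K}

theorem exists_balanced_of_three_values {i j k : ι} (hij : w i ≠ w j) (hik : w i ≠ w k)
    (hjk : w j ≠ w k) :
    ∃ b : ι → K, ∑ t, b t = 0 ∧ ∑ t, w t * b t = 0 ∧ b i ≠ 0 ∧ b j ≠ 0 := by
  classical
  have hij' : i ≠ j := fun h => hij (h ▸ rfl)
  have hik' : i ≠ k := fun h => hik (h ▸ rfl)
  have hjk' : j ≠ k := fun h => hjk (h ▸ rfl)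
  -- `b` is the cross product of `(1, 1, 1)` and `(w i, w j, w k)`.
  refine ⟨Pi.single i (w k - w j) + Pi.single j (w i - w k) + Pi.single k (w j - w i),
    ?_, ?_, ?_, ?_⟩
  · simp only [Pi.add_apply, sum_add_distrib, Fintype.sum_pi_single']
    ring
  · simp only [Pi.add_apply, mul_add, sum_add_distrib, Pi.single_apply, mul_ite, mul_zero,
      sum_ite_eq', mem_univ, if_true]
    ring
  · simpa [hij', hik'] using sub_ne_zero.2 (Ne.symm hjk)
  · simpa [hij'.symm, hjk'] using sub_ne_zero.2 hik

theorem exists_balanced_of_two_pairs [Nontrivial K] {i j k l : ι} (hij : i ≠ j) (hkl : k ≠ l)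
    (hwij : w i = w j) (hwkl : w k = w l) (hwik : w i ≠ w k) :
    ∃ b : ι → K, ∑ t, b t = 0 ∧ ∑ t, w t * b t = 0 ∧ b i ≠ 0 ∧ b k ≠ 0 := by
  classical
  have hik : i ≠ k := fun h => hwik (h ▸ rfl)
  have hil : i ≠ l := fun h => hwik (h ▸ hwkl.symm)
  have hjk : j ≠ k := fun h => hwik (h ▸ hwij)
  refine ⟨Pi.single i 1 - Pi.single j 1 + Pi.single k 1 - Pi.single l 1, ?_, ?_, ?_, ?_⟩
  · simp only [Pi.add_apply, Pi.sub_apply, sum_add_distrib, sum_sub_distrib,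
      Fintype.sum_pi_single']
    ring
  · simp only [Pi.add_apply, Pi.sub_apply, mul_add, mul_sub, sum_add_distrib, sum_sub_distrib,
      Pi.single_apply, mul_ite, mul_zero, sum_ite_eq', mem_univ, if_true, hwij, hwkl]
    ring
  · simp [hij, hik, hil]
  · simp [hik.symm, hjk.symm, hkl]

theorem exists_balanced_coeffs [Nonempty ι] [Nontrivial K] {α : Type*} [DecidableEq α]
    (a : ι → α) (w : α → K) (hw : Set.InjOn w (Set.range a))
    (hocc : ∀ v, #{t | a t = v} ≤ Fintype.card ι - 2) :
    ∃ b : ι → K, ∑ t, b t = 0 ∧ ∑ t, w (a t) * b t = 0 ∧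
      ∃ i k, w (a i) ≠ w (a k) ∧ b i ≠ 0 ∧ b k ≠ 0 := by
  have hne {i j : ι} (h : a i ≠ a j) : w (a i) ≠ w (a j) :=
    hw.ne (Set.mem_range_self i) (Set.mem_range_self j) h
  rcases exists_three_values_or_two_pairs hocc with
    ⟨i, j, k, hij, hik, hjk⟩ | ⟨i, j, k, l, hij, hkl, haij, hakl, haik⟩
  · obtain ⟨b, hb, hwb, hbi, hbj⟩ :=
      exists_balanced_of_three_values (w := w ∘ a) (hne hij) (hne hik) (hne hjk)
    exact ⟨b, hb, hwb, i, j, hne hij, hbi, hbj⟩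
  · obtain ⟨b, hb, hwb, hbi, hbk⟩ := exists_balanced_of_two_pairs (w := w ∘ a) hij hkl
      (congrArg w haij) (congrArg w hakl) (hne haik)
    exact ⟨b, hb, hwb, i, k, hne haik, hbi, hbk⟩

end Balanced

/-- For `n ≥ 3`, `d ≥ 2` and `0 ≤ a_1, …, a_n ≤ d-1` with no value occurring more
than `n - 2` times among the `a_i`, there is a non-zero form `f` of degree `d` in
`ℂ[y_1,…,y_n]` with `(x_1 + ⋯ + x_n) ∘ f = 0` (each `x_i` acting as `∂/∂y_i`) all of
whose monomials `y^α` satisfy `a_1α_1 + ⋯ + a_nα_n ≢ 0 (mod d)`, i.e. none of them is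
fixed by the action `x_i ↦ ξ^{a_i} x_i` of `ℤ/dℤ`. -/
theorem exists_form_killing_surjectivity {n : ℕ} (hn : 3 ≤ n) (d : ℕ) (hd : 2 ≤ d)
    (a : Fin n → ℕ) (ha : ∀ i, a i ≤ d - 1)
    (hocc : ∀ v : ℕ, ((Finset.univ : Finset (Fin n)).filter fun i => a i = v).card ≤ n - 2) :
    ∃ f : MvPolynomial (Fin n) ℂ, f ≠ 0 ∧ f.IsHomogeneous d ∧
      (∑ t, MvPolynomial.pderiv t f) = 0 ∧
      ∀ m ∈ f.support, ¬ d ∣ ∑ i, a i * m i := by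
  have hd0 : d ≠ 0 := by omega
  have hξ := Complex.isPrimitiveRoot_exp d hd0
  have : Nonempty (Fin n) := ⟨⟨0, by omega⟩⟩
  have hinj : Set.InjOn (Complex.exp (2 * Real.pi * Complex.I / d) ^ ·) (Set.range a) := by
    rintro _ ⟨i, rfl⟩ _ ⟨j, rfl⟩ h
    exact hξ.pow_inj (by grind) (by grind) h
  obtain ⟨b, hb, hwb, i, k, hik, hbi, hbk⟩ :=
    exists_balanced_coeffs a _ hinj (by simpa using hocc)
  exact exists_form_of_balanced hd0 hξ a hb hwb hik hbi hbk
end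

section
/- Let n ≥ 3, d ≥ 2, let ξ = e^{2πi/d} ∈ ℂ, and let a_1,…,a_n be integers with 0 ≤ a_i ≤ d−1. Let F = Π_{i=0}^{d−1} (ξ^{i a_1} x_1 + ξ^{i a_2} x_2 + ⋯ + ξ^{i a_n} x_n) ∈ ℂ[x_1,…,x_n]. Then F is a non-zero homogeneous polynomial of degree d, F is divisible by the linear form x_1 + ⋯ + x_n, and every monomial x_1^{α_1}⋯x_n^{α_n} ∈ supp(F) satisfies a_1α_1 + ⋯ + a_nα_n ≡ 0 (mod d); that is, F lies in the ideal generated by all degree-d forms fixed by the action x_i ↦ ξ^{a_i}x_i of ℤ/dℤ. -/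
/-!
The substitution `x_t ↦ ξ^{a_t} x_t` sends the `i`-th factor of `F` to the `(i+1)`-st, and the
`d`-th factor is the `0`-th because `ξ^d = 1`; so it permutes the factors and fixes `F`. As it
multiplies the coefficient of `x^α` by `ξ^{Σ a_t α_t}`, every monomial of `F` satisfies
`d ∣ Σ a_t α_t`. The factor `i = 0` is `x_1 + ⋯ + x_n`.
-/

open MvPolynomial Finset

theorem Finset.prod_range_add_one_eq_of_eq {M : Type*} [CommMonoid M] {f : ℕ → M} {d : ℕ}
    (hf : f d = f 0) : ∏ i ∈ range d, f (i + 1) = ∏ i ∈ range d, f i := by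
  cases d with
  | zero => simp
  | succ k => rw [prod_range_succ, prod_range_succ', hf]

namespace MvPolynomial

variable {σ R : Type*}

section CommSemiring

variable [CommSemiring R]

noncomputable def scaleVars (c : σ → R) : MvPolynomial σ R →ₐ[R] MvPolynomial σ R :=
  aeval fun t => C (c t) * X t

theorem scaleVars_X (c : σ → R) (t : σ) : scaleVars c (X t) = C (c t) * X t :=
  aeval_X _ t

theorem scaleVars_C (c : σ → R) (r : R) : scaleVars c (C r) = C r :=
  aeval_C _ r

variable [Fintype σ]

noncomputable def linearForm (c : σ → R) : MvPolynomial σ R :=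
  ∑ t, C (c t) * X t

theorem linearForm_one : linearForm (fun _ => (1 : R)) = ∑ t : σ, X t := by
  simp [linearForm]

theorem isHomogeneous_linearForm (c : σ → R) : (linearForm c).IsHomogeneous 1 :=
  IsHomogeneous.sum _ _ _ fun t _ => (isHomogeneous_X R t).C_mul (c t)

theorem coeff_single_linearForm [DecidableEq σ] (c : σ → R) (t : σ) :
    coeff (Finsupp.single t 1) (linearForm c) = c t := by
  simp [linearForm, coeff_sum, coeff_C_mul, coeff_X, Finsupp.single_left_inj one_ne_zero]

theorem linearForm_ne_zero {c : σ → R} {t : σ} (ht : c t ≠ 0) : linearForm c ≠ 0 := by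
  classical
  intro h
  exact ht (by rw [← coeff_single_linearForm c t, h, coeff_zero])

theorem scaleVars_linearForm (b c : σ → R) :
    scaleVars b (linearForm c) = linearForm (b * c) := by
  simp only [linearForm, map_sum, map_mul, scaleVars_C, scaleVars_X, Pi.mul_apply]
  exact sum_congr rfl fun t _ => by ring

theorem scaleVars_monomial (c : σ → R) (u : σ →₀ ℕ) (r : R) :
    scaleVars c (monomial u r) = monomial u (r * ∏ t, c t ^ u t) := by
  simp only [monomial_eq, Finsupp.prod_fintype _ _ (fun _ => pow_zero _), map_mul, map_prod,
    map_pow, scaleVars_C, scaleVars_X, mul_pow, prod_mul_distrib]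
  ring

theorem coeff_scaleVars (c : σ → R) (p : MvPolynomial σ R) (m : σ →₀ ℕ) :
    coeff m (scaleVars c p) = (∏ t, c t ^ m t) * coeff m p := by
  classical
  induction p using MvPolynomial.induction_on' with
  | monomial u r =>
    rw [scaleVars_monomial, coeff_monomial, coeff_monomial]
    split_ifs with h
    · rw [h, mul_comm]
    · rw [mul_zero]
  | add p q hp hq => rw [map_add, coeff_add, coeff_add, hp, hq, mul_add]

end CommSemiring

variable [Fintype σ]

theorem prod_pow_eq_one_of_scaleVars_eq_self [CommRing R] [IsDomain R] {c : σ → R}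
    {p : MvPolynomial σ R} (hp : scaleVars c p = p) {m : σ →₀ ℕ} (hm : m ∈ p.support) :
    ∏ t, c t ^ m t = 1 := by
  have h := coeff_scaleVars c p m
  rw [hp, eq_comm, mul_eq_right₀ (mem_support_iff.mp hm)] at h
  exact h

section RootProduct

variable [CommRing R] (ξ : R) (a : σ → ℕ) (d : ℕ)

noncomputable def rootProduct : MvPolynomial σ R :=
  ∏ i ∈ range d, linearForm fun t => ξ ^ (i * a t)

theorem isHomogeneous_rootProduct : (rootProduct ξ a d).IsHomogeneous d := by
  simpa [rootProduct] using IsHomogeneous.prod (range d) _ (fun _ => 1)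
    fun i _ => isHomogeneous_linearForm fun t => ξ ^ (i * a t)

variable {ξ d}

theorem rootProduct_ne_zero [IsDomain R] [Nonempty σ] (hξ : ξ ≠ 0) : rootProduct ξ a d ≠ 0 :=
  prod_ne_zero_iff.mpr fun _ _ =>
    linearForm_ne_zero (t := Classical.arbitrary σ) (pow_ne_zero _ hξ)

theorem sum_X_dvd_rootProduct (hd : d ≠ 0) : ∑ t, X t ∣ rootProduct ξ a d := by
  have h := dvd_prod_of_mem (fun i => linearForm fun t => ξ ^ (i * a t))
    (mem_range.mpr (Nat.pos_of_ne_zero hd))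
  simpa [rootProduct, ← linearForm_one] using h

theorem scaleVars_rootProduct (hξ : ξ ^ d = 1) :
    scaleVars (fun t => ξ ^ a t) (rootProduct ξ a d) = rootProduct ξ a d := by
  have hshift : ∀ i, scaleVars (fun t => ξ ^ a t) (linearForm fun t => ξ ^ (i * a t)) =
      linearForm fun t => ξ ^ ((i + 1) * a t) := fun i => by
    rw [scaleVars_linearForm]
    congr 1
    ext t
    simp only [Pi.mul_apply, ← pow_add]
    ring_nf
  rw [rootProduct, map_prod]
  simp only [hshift]
  refine prod_range_add_one_eq_of_eq (f := fun i => linearForm fun t => ξ ^ (i * a t)) ?_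
  simp only [pow_mul, hξ, one_pow, zero_mul, pow_zero]

theorem dvd_sum_mul_of_mem_support_rootProduct [IsDomain R] (hξ : IsPrimitiveRoot ξ d)
    {m : σ →₀ ℕ} (hm : m ∈ (rootProduct ξ a d).support) : d ∣ ∑ t, a t * m t := by
  have h := prod_pow_eq_one_of_scaleVars_eq_self (scaleVars_rootProduct a hξ.pow_eq_one) hm
  simp only [← pow_mul, prod_pow_eq_pow_sum] at h
  exact (hξ.pow_eq_one_iff_dvd _).mp h

end RootProduct

end MvPolynomial

theorem product_form_in_fixed_ideal_general {n : ℕ} (hn : 3 ≤ n) (d : ℕ) (hd : 2 ≤ d)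
    (ξ : ℂ) (hξ : ξ = Complex.exp (2 * Real.pi * Complex.I / d))
    (a : Fin n → ℕ)
    (F : MvPolynomial (Fin n) ℂ)
    (hF : F = ∏ i ∈ Finset.range d, ∑ t, MvPolynomial.C (ξ ^ (i * a t)) * MvPolynomial.X t) :
    F ≠ 0 ∧ F.IsHomogeneous d ∧ (∑ t, MvPolynomial.X t : MvPolynomial (Fin n) ℂ) ∣ F ∧
      ∀ m ∈ F.support, d ∣ ∑ i, a i * m i := by
  have hd0 : d ≠ 0 := by omega
  have hprim : IsPrimitiveRoot ξ d := hξ ▸ Complex.isPrimitiveRoot_exp d hd0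
  have : Nonempty (Fin n) := ⟨⟨0, by omega⟩⟩
  change F = rootProduct ξ a d at hF
  subst hF
  exact ⟨rootProduct_ne_zero a (hprim.ne_zero hd0), isHomogeneous_rootProduct ξ a d,
    sum_X_dvd_rootProduct a hd0, fun m hm => dvd_sum_mul_of_mem_support_rootProduct a hprim hm⟩

/-- For `n ≥ 3`, `d ≥ 2`, `ξ = e^{2πi/d}` and `0 ≤ a_1, …, a_n ≤ d-1`, the polynomial
`F = ∏_{i=0}^{d-1} (ξ^{i a_1} x_1 + ⋯ + ξ^{i a_n} x_n)` is a non-zero form of degree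
`d`, divisible by `x_1 + ⋯ + x_n`, and every monomial of `F` has exponent vector `α`
with `a_1α_1 + ⋯ + a_nα_n ≡ 0 (mod d)`, i.e. `F` lies in the ideal generated by the
degree-`d` forms fixed by `x_i ↦ ξ^{a_i} x_i`. -/
theorem product_form_in_fixed_ideal {n : ℕ} (hn : 3 ≤ n) (d : ℕ) (hd : 2 ≤ d)
    (ξ : ℂ) (hξ : ξ = Complex.exp (2 * Real.pi * Complex.I / d))
    (a : Fin n → ℕ) (ha : ∀ i, a i ≤ d - 1)
    (F : MvPolynomial (Fin n) ℂ)
    (hF : F = ∏ i ∈ Finset.range d, ∑ t, MvPolynomial.C (ξ ^ (i * a t)) * MvPolynomial.X t) :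
    F ≠ 0 ∧ F.IsHomogeneous d ∧ (∑ t, MvPolynomial.X t : MvPolynomial (Fin n) ℂ) ∣ F ∧
      ∀ m ∈ F.support, d ∣ ∑ i, a i * m i :=
  product_form_in_fixed_ideal_general hn d hd ξ hξ a F hF
end

section
/- Let d ≥ 2, let ξ = e^{2πi/d} ∈ ℂ, and in ℂ[x,y,z] let F = Π_{j=0}^{d−1} (ξ^j x + ξ^{−j} y + z)(ξ^j x + ξ^{−j} y − z), a homogeneous polynomial of degree 2d. Then the number of monomials with non-zero coefficient in F is d + 3 if d is odd, and 2d + 5 if d is even. -/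
open MvPolynomial Finset

/-!
Write `ℓ_j = ξ^j x + ξ^{-j} y`, `A = x^d + y^d` and let `D_n(t, s)` be the homogeneous Dickson form,
characterised by `D_n(αβ, α + β) = α^n + β^n`. Splitting `z = α + β`, `xy = αβ` over an
algebraically closed field, `α (z - ℓ_j) = (α - ξ^j x)(α - ξ^{-j} y)`, and the product over `j`
gives `∏_j (z - ℓ_j) = D_d(xy, z) - A`. Hence `F = (A - D_d)(A - (-1)^d D_d)`, and with
`D_d^2 = D_{2d} + 2(xy)^d` this is `x^{2d} + y^{2d} - D_{2d}` for odd `d`, and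
`x^{2d} + y^{2d} + D_{2d} + 4(xy)^d - 2 A D_d` for even `d`.

The coefficient of `t^k s^{n-2k}` in `D_n` has sign `(-1)^k` for `2k ≤ n`, so it never vanishes and
`D_{2d}` contributes the `d + 1` monomials `(xy)^s z^{2d-2s}` (for even `d`, `4(xy)^d` only raises
the positive coefficient of `(xy)^d`); for even `d` the two families `x^d D_d` and `y^d D_d` add
`d/2 + 1` monomials each, and all these monomials are distinct.
-/

def dicksonCoeff : ℕ → ℕ → ℤ
  | 0, 0 => 2
  | 0, _ + 1 => 0
  | 1, 0 => 1
  | 1, _ + 1 => 0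
  | _ + 2, 0 => 1
  | n + 2, k + 1 => dicksonCoeff (n + 1) (k + 1) - dicksonCoeff n k

theorem dicksonCoeff_succ_zero (n : ℕ) : dicksonCoeff (n + 1) 0 = 1 := by
  cases n <;> rfl

theorem dicksonCoeff_eq_zero_of_lt : ∀ {n k : ℕ}, n < 2 * k → dicksonCoeff n k = 0
  | 0, _ + 1, _ | 1, _ + 1, _ => rfl
  | n + 2, k + 1, h => by
    rw [dicksonCoeff, dicksonCoeff_eq_zero_of_lt (by omega), dicksonCoeff_eq_zero_of_lt (by omega),
      sub_zero]

theorem neg_one_pow_mul_dicksonCoeff_pos : ∀ {n k : ℕ}, 2 * k ≤ n →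
    0 < (-1) ^ k * dicksonCoeff n k
  | 0, 0, _ => by decide
  | n + 1, 0, _ => by simp [dicksonCoeff_succ_zero]
  | n + 2, k + 1, h => by
    have ih := neg_one_pow_mul_dicksonCoeff_pos (n := n) (k := k) (by omega)
    rw [dicksonCoeff, pow_succ]
    rcases Nat.lt_or_ge (n + 1) (2 * (k + 1)) with h' | h'
    · rw [dicksonCoeff_eq_zero_of_lt h']
      linarith
    · have ih' := neg_one_pow_mul_dicksonCoeff_pos h'
      rw [pow_succ] at ih'
      linarith

section DicksonForm

variable {R : Type*} [CommRing R]

def dicksonForm (n : ℕ) (t s : R) : R :=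
  ∑ k ∈ range (n / 2 + 1), (dicksonCoeff n k : R) * t ^ k * s ^ (n - 2 * k)

theorem dicksonForm_eq_sum_range {n N : ℕ} (hN : n / 2 < N) (t s : R) :
    dicksonForm n t s = ∑ k ∈ range N, (dicksonCoeff n k : R) * t ^ k * s ^ (n - 2 * k) := by
  refine sum_subset (range_subset_range.2 hN) fun k _ hk => ?_
  rw [mem_range, not_lt] at hk
  rw [dicksonCoeff_eq_zero_of_lt (by omega), Int.cast_zero, zero_mul, zero_mul]

theorem dicksonForm_zero (t s : R) : dicksonForm 0 t s = 2 := by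
  simp [dicksonForm, dicksonCoeff]

theorem dicksonForm_one (t s : R) : dicksonForm 1 t s = s := by
  simp [dicksonForm, dicksonCoeff]

theorem dicksonForm_add_two (n : ℕ) (t s : R) :
    dicksonForm (n + 2) t s = s * dicksonForm (n + 1) t s - t * dicksonForm n t s := by
  rw [dicksonForm_eq_sum_range (N := n + 2) (by omega),
    dicksonForm_eq_sum_range (N := n + 2) (by omega),
    dicksonForm_eq_sum_range (N := n + 1) (by omega), sum_range_succ', sum_range_succ' _ (n + 1),
    mul_add, mul_sum, mul_sum, add_sub_right_comm, ← sum_sub_distrib]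
  congr 1
  · refine sum_congr rfl fun k _ => ?_
    -- where no factor `s` can be split off, the coefficient from `D_{n+1}` vanishes
    rcases Nat.lt_or_ge (n + 1) (2 * (k + 1)) with h | h
    · rw [dicksonCoeff, dicksonCoeff_eq_zero_of_lt h, show n + 2 - 2 * (k + 1) = n - 2 * k by omega]
      push_cast
      ring
    · obtain ⟨m, hm⟩ : ∃ m, n - 2 * k = m + 1 := ⟨n - 2 * k - 1, by omega⟩
      rw [show n + 2 - 2 * (k + 1) = m + 1 by omega, show n + 1 - 2 * (k + 1) = m by omega, hm,
        dicksonCoeff]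
      push_cast
      ring
  · simp only [dicksonCoeff_succ_zero, mul_zero, Nat.sub_zero]
    ring

theorem pow_add_pow_eq_dicksonForm (n : ℕ) (α β : R) :
    α ^ n + β ^ n = dicksonForm n (α * β) (α + β) := by
  induction n using Nat.twoStepInduction with
  | zero => rw [dicksonForm_zero]; norm_num
  | one => rw [dicksonForm_one]; ring
  | more n ih₀ ih₁ => rw [dicksonForm_add_two, ← ih₀, ← ih₁]; ring

theorem map_dicksonForm {S : Type*} [CommRing S] (f : R →+* S) (n : ℕ) (t s : R) :
    f (dicksonForm n t s) = dicksonForm n (f t) (f s) := by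
  simp [dicksonForm]

end DicksonForm

theorem IsPrimitiveRoot.pow_sub_pow_eq_prod_range_sub_mul {R : Type*} [CommRing R] [IsDomain R]
    {ζ : R} {n : ℕ} (hζ : IsPrimitiveRoot ζ n) (hn : 0 < n) (x y : R) :
    x ^ n - y ^ n = ∏ i ∈ range n, (x - ζ ^ i * y) := by
  simpa [Polynomial.eval_prod] using
    congrArg (Polynomial.eval x) (X_pow_sub_C_eq_prod hζ hn (rfl : y ^ n = y ^ n))

section RootsOfUnity

variable {K : Type*} [Field K] {ζ : K} {d : ℕ}

theorem prod_sub_add_zeta_mul_of_ne_zero (hζ : IsPrimitiveRoot ζ d) (hd : 0 < d)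
    {a b α β : K} (hα : α ≠ 0) (h : α * β = a * b) :
    ∏ j ∈ range d, (α + β - (ζ ^ j * a + ζ⁻¹ ^ j * b)) = α ^ d + β ^ d - a ^ d - b ^ d := by
  have hfactor : ∀ j ∈ range d,
      α * (α + β - (ζ ^ j * a + ζ⁻¹ ^ j * b)) = (α - ζ ^ j * a) * (α - ζ⁻¹ ^ j * b) := by
    intro j _
    have hunit : ζ ^ j * ζ⁻¹ ^ j = 1 := by
      rw [← mul_pow, mul_inv_cancel₀ (hζ.ne_zero hd.ne'), one_pow]
    linear_combination h - a * b * hunit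
  have hpow : α ^ d * β ^ d = a ^ d * b ^ d := by rw [← mul_pow, h, mul_pow]
  refine mul_left_cancel₀ (pow_ne_zero d hα) ?_
  calc α ^ d * ∏ j ∈ range d, (α + β - (ζ ^ j * a + ζ⁻¹ ^ j * b))
      = ∏ j ∈ range d, α * (α + β - (ζ ^ j * a + ζ⁻¹ ^ j * b)) := by
        rw [prod_mul_distrib, prod_const, card_range]
    _ = (α ^ d - a ^ d) * (α ^ d - b ^ d) := by
        rw [prod_congr rfl hfactor, prod_mul_distrib, hζ.pow_sub_pow_eq_prod_range_sub_mul hd,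
          hζ.inv.pow_sub_pow_eq_prod_range_sub_mul hd]
    _ = α ^ d * (α ^ d + β ^ d - a ^ d - b ^ d) := by linear_combination -hpow

theorem prod_sub_add_zeta_mul (hζ : IsPrimitiveRoot ζ d) (hd : 0 < d)
    {a b α β : K} (h : α * β = a * b) :
    ∏ j ∈ range d, (α + β - (ζ ^ j * a + ζ⁻¹ ^ j * b)) = α ^ d + β ^ d - a ^ d - b ^ d := by
  by_cases hα : α = 0
  · by_cases hβ : β = 0
    · subst hα hβ
      have hd' : d ≠ 0 := hd.ne'
      rcases mul_eq_zero.1 (h.symm.trans (mul_zero 0)) with rfl | rfl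
      · simpa [hd', sub_eq_neg_add] using (hζ.inv.pow_sub_pow_eq_prod_range_sub_mul hd 0 b).symm
      · simpa [hd', sub_eq_neg_add] using (hζ.pow_sub_pow_eq_prod_range_sub_mul hd 0 a).symm
    · rw [add_comm α, add_comm (α ^ d)]
      exact prod_sub_add_zeta_mul_of_ne_zero hζ hd hβ (by rwa [mul_comm])
  · exact prod_sub_add_zeta_mul_of_ne_zero hζ hd hα h

end RootsOfUnity

section Factorization

variable {K : Type*} [Field K] [IsAlgClosed K] {ζ : K} {d : ℕ}

theorem exists_add_eq_and_mul_eq (s t : K) : ∃ α β : K, α + β = s ∧ α * β = t := by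
  obtain ⟨α, hα⟩ := IsAlgClosed.exists_root
    (Polynomial.C 1 * Polynomial.X ^ 2 + Polynomial.C (-s) * Polynomial.X + Polynomial.C t)
    (by rw [Polynomial.degree_quadratic one_ne_zero]; decide)
  refine ⟨α, s - α, by ring, ?_⟩
  simp only [Polynomial.IsRoot, Polynomial.eval_add, Polynomial.eval_mul, Polynomial.eval_C,
    Polynomial.eval_pow, Polynomial.eval_X] at hα
  linear_combination -hα

theorem prod_linearForm_eq (hζ : IsPrimitiveRoot ζ d) (hd : 0 < d) :
    ∏ j ∈ range d,
        ((C (ζ ^ j) * X 0 + C (ζ ^ (-(j : ℤ))) * X 1 + X 2) *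
          (C (ζ ^ j) * X 0 + C (ζ ^ (-(j : ℤ))) * X 1 - X 2) : MvPolynomial (Fin 3) K) =
      X 0 ^ (2 * d) + X 1 ^ (2 * d) + (-1) ^ d * dicksonForm (2 * d) (X 0 * X 1) (X 2)
        + 2 * (1 + (-1) ^ d) * (X 0 * X 1) ^ d
        - (1 + (-1) ^ d) * ((X 0 ^ d + X 1 ^ d) * dicksonForm d (X 0 * X 1) (X 2)) := by
  refine MvPolynomial.funext fun v => ?_
  obtain ⟨α, β, hsum, hmul⟩ := exists_add_eq_and_mul_eq (v 2) (v 0 * v 1)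
  have hneg : -α * -β = v 0 * v 1 := by rw [neg_mul_neg, hmul]
  have hfactor : ∀ j ∈ range d,
      eval v ((C (ζ ^ j) * X 0 + C (ζ ^ (-(j : ℤ))) * X 1 + X 2) *
        (C (ζ ^ j) * X 0 + C (ζ ^ (-(j : ℤ))) * X 1 - X 2)) =
      (-α + -β - (ζ ^ j * v 0 + ζ⁻¹ ^ j * v 1)) * (α + β - (ζ ^ j * v 0 + ζ⁻¹ ^ j * v 1)) := by
    intro j _
    simp only [map_mul, map_add, map_sub, eval_C, eval_X, zpow_neg, zpow_natCast, inv_pow, ← hsum]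
    ring
  have hdickson : ∀ n, eval v (dicksonForm n (X 0 * X 1) (X 2)) = α ^ n + β ^ n := fun n => by
    rw [map_dicksonForm, map_mul, eval_X, eval_X, eval_X, ← hmul, ← hsum,
      pow_add_pow_eq_dicksonForm]
  rw [eval_prod, prod_congr rfl hfactor, prod_mul_distrib, prod_sub_add_zeta_mul hζ hd hneg,
    prod_sub_add_zeta_mul hζ hd hmul]
  simp only [map_add, map_sub, map_mul, map_pow, map_neg, map_one, map_ofNat, eval_X, hdickson]
  have hpow : α ^ d * β ^ d = (v 0 * v 1) ^ d := by rw [← mul_pow, hmul]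
  rw [neg_pow α, neg_pow β]
  linear_combination 2 * (-1 : K) ^ d * hpow

end Factorization

namespace MvPolynomial

variable {σ R ι : Type*} [CommSemiring R] {s : Finset ι} {g : ι → σ →₀ ℕ} {a : ι → R}

theorem coeff_sum_monomial_of_injOn (hg : Set.InjOn g s) {i : ι} (hi : i ∈ s) :
    coeff (g i) (∑ j ∈ s, monomial (g j) (a j)) = a i := by
  classical
  rw [coeff_sum, sum_eq_single_of_mem i hi fun j hj hji => ?_, coeff_monomial, if_pos rfl]
  rw [coeff_monomial, if_neg fun h => hji (hg hj hi h)]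

theorem support_sum_monomial_of_injOn_s19 [DecidableEq σ] (hg : Set.InjOn g s)
    (ha : ∀ i ∈ s, a i ≠ 0) : (∑ i ∈ s, monomial (g i) (a i)).support = s.image g := by
  ext m
  rw [mem_support_iff, mem_image]
  constructor
  · intro hm
    by_contra! hm'
    simp only [coeff_sum, coeff_monomial] at hm
    exact hm (sum_eq_zero fun i hi => if_neg (hm' i hi))
  · rintro ⟨i, hi, rfl⟩
    rw [coeff_sum_monomial_of_injOn hg hi]
    exact ha i hi

theorem support_add_monomial_of_mem [DecidableEq σ] {p : MvPolynomial σ R} {m : σ →₀ ℕ} {c : R}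
    (hm : m ∈ p.support) (hc : coeff m p + c ≠ 0) : (p + monomial m c).support = p.support := by
  ext m'
  rw [mem_support_iff, mem_support_iff, coeff_add, coeff_monomial]
  split_ifs with h
  · subst h
    exact ⟨fun _ => mem_support_iff.1 hm, fun _ => hc⟩
  · rw [add_zero]

theorem support_add_of_disjoint [DecidableEq σ] {p q : MvPolynomial σ R}
    (h : Disjoint p.support q.support) : (p + q).support = p.support ∪ q.support :=
  Finsupp.support_add_eq h

end MvPolynomial

noncomputable def expVec (i j k : ℕ) : Fin 3 →₀ ℕ :=
  Finsupp.single 0 i + Finsupp.single 1 j + Finsupp.single 2 k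

@[simp]
theorem expVec_inj {i j k i' j' k' : ℕ} :
    expVec i j k = expVec i' j' k' ↔ i = i' ∧ j = j' ∧ k = k' := by
  constructor
  · intro h
    refine ⟨?_, ?_, ?_⟩
    · simpa [expVec] using DFunLike.congr_fun h 0
    · simpa [expVec] using DFunLike.congr_fun h 1
    · simpa [expVec] using DFunLike.congr_fun h 2
  · rintro ⟨rfl, rfl, rfl⟩
    rfl

section Expansion

variable {K : Type*} [CommRing K]

theorem X_pow_mul_X_pow_mul_dicksonForm (i j n : ℕ) :
    (X 0 ^ i * X 1 ^ j * dicksonForm n (X 0 * X 1) (X 2) : MvPolynomial (Fin 3) K) =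
      ∑ k ∈ range (n / 2 + 1),
        monomial (expVec (i + k) (j + k) (n - 2 * k)) (dicksonCoeff n k : K) := by
  rw [dicksonForm, mul_sum]
  refine sum_congr rfl fun k _ => ?_
  rw [← map_intCast (C : K →+* MvPolynomial (Fin 3) K), mul_pow]
  simp only [X_pow_eq_monomial, C_mul_monomial, monomial_mul, mul_one, one_mul, expVec,
    Finsupp.single_add]
  congr 2
  abel

theorem dicksonForm_two_mul_eq_sum (d : ℕ) :
    (dicksonForm (2 * d) (X 0 * X 1) (X 2) : MvPolynomial (Fin 3) K) =
      ∑ s ∈ range (d + 1), monomial (expVec s s (2 * d - 2 * s)) (dicksonCoeff (2 * d) s : K) := by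
  simpa using X_pow_mul_X_pow_mul_dicksonForm (K := K) 0 0 (2 * d)

variable [CharZero K]

theorem support_X_pow_mul_X_pow_mul_dicksonForm (i j n : ℕ) :
    (X 0 ^ i * X 1 ^ j * dicksonForm n (X 0 * X 1) (X 2) : MvPolynomial (Fin 3) K).support =
      (range (n / 2 + 1)).image fun k => expVec (i + k) (j + k) (n - 2 * k) := by
  rw [X_pow_mul_X_pow_mul_dicksonForm]
  refine support_sum_monomial_of_injOn_s19 (fun k _ l _ h => by simp_all) fun k hk => ?_
  have := neg_one_pow_mul_dicksonCoeff_pos (n := n) (k := k) (by simp at hk; omega)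
  exact Int.cast_ne_zero.2 (right_ne_zero_of_mul this.ne')

theorem support_dicksonForm_two_mul (d : ℕ) :
    (dicksonForm (2 * d) (X 0 * X 1) (X 2) : MvPolynomial (Fin 3) K).support =
      (range (d + 1)).image fun s => expVec s s (2 * d - 2 * s) := by
  simpa using support_X_pow_mul_X_pow_mul_dicksonForm (K := K) 0 0 (2 * d)

end Expansion

section Counting

variable {K : Type*} [Field K] {d : ℕ}

theorem disjoint_pair_image_diag (hd : d ≠ 0) :
    Disjoint ({expVec (2 * d) 0 0, expVec 0 (2 * d) 0} : Finset (Fin 3 →₀ ℕ))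
      ((range (d + 1)).image fun s => expVec s s (2 * d - 2 * s)) := by
  simp [disjoint_left]
  grind

theorem support_X_pow_add_X_pow_add (hd : d ≠ 0) {q : MvPolynomial (Fin 3) K}
    (hq : q.support = (range (d + 1)).image fun s => expVec s s (2 * d - 2 * s)) :
    (X 0 ^ (2 * d) + X 1 ^ (2 * d) + q).support =
      {expVec (2 * d) 0 0, expVec 0 (2 * d) 0} ∪
        (range (d + 1)).image fun s => expVec s s (2 * d - 2 * s) := by
  have hpair : (X 0 ^ (2 * d) + X 1 ^ (2 * d) : MvPolynomial (Fin 3) K).support =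
      {expVec (2 * d) 0 0, expVec 0 (2 * d) 0} := by
    have h0 : (X 0 ^ (2 * d) : MvPolynomial (Fin 3) K).support = {expVec (2 * d) 0 0} := by
      rw [support_X_pow]; simp [expVec]
    have h1 : (X 1 ^ (2 * d) : MvPolynomial (Fin 3) K).support = {expVec 0 (2 * d) 0} := by
      rw [support_X_pow]; simp [expVec]
    rw [support_add_of_disjoint (by rw [h0, h1, disjoint_singleton]; simpa using hd), h0, h1]
    rfl
  rw [support_add_of_disjoint (by rw [hpair, hq]; exact disjoint_pair_image_diag hd), hpair, hq]

theorem card_pair_union_image_diag (hd : d ≠ 0) :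
    ({expVec (2 * d) 0 0, expVec 0 (2 * d) 0} ∪
      (range (d + 1)).image fun s => expVec s s (2 * d - 2 * s)).card = d + 3 := by
  rw [card_union_of_disjoint (disjoint_pair_image_diag hd), card_pair (by simpa using hd),
    card_image_of_injOn (fun s _ t _ h => by simp_all), card_range]
  ring

variable [CharZero K]

theorem card_support_X_pow_add_X_pow_sub_dicksonForm (hd : d ≠ 0) :
    (X 0 ^ (2 * d) + X 1 ^ (2 * d) - dicksonForm (2 * d) (X 0 * X 1) (X 2) :
      MvPolynomial (Fin 3) K).support.card = d + 3 := by
  rw [sub_eq_add_neg,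
    support_X_pow_add_X_pow_add hd (by rw [support_neg, support_dicksonForm_two_mul]),
    card_pair_union_image_diag hd]

theorem support_dicksonForm_two_mul_add (hd : Even d) :
    (dicksonForm (2 * d) (X 0 * X 1) (X 2) + 4 * (X 0 * X 1) ^ d :
      MvPolynomial (Fin 3) K).support =
      (range (d + 1)).image fun s => expVec s s (2 * d - 2 * s) := by
  have hmono : (4 * (X 0 * X 1) ^ d : MvPolynomial (Fin 3) K) = monomial (expVec d d 0) 4 := by
    rw [mul_pow, X_pow_eq_monomial, X_pow_eq_monomial, monomial_mul, ← map_ofNat C 4,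
      C_mul_monomial]
    simp [expVec]
  have hcoeff : coeff (expVec d d 0) (dicksonForm (2 * d) (X 0 * X 1) (X 2) :
      MvPolynomial (Fin 3) K) = dicksonCoeff (2 * d) d := by
    rw [dicksonForm_two_mul_eq_sum]
    simpa using coeff_sum_monomial_of_injOn (g := fun s => expVec s s (2 * d - 2 * s))
      (a := fun s => (dicksonCoeff (2 * d) s : K)) (fun s _ t _ h => by simp_all)
      (self_mem_range_succ d)
  have hpos : 0 < dicksonCoeff (2 * d) d := by
    simpa [hd.neg_one_pow] using neg_one_pow_mul_dicksonCoeff_pos (le_refl (2 * d))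
  rw [hmono, support_add_monomial_of_mem, support_dicksonForm_two_mul]
  · rw [support_dicksonForm_two_mul]
    exact mem_image.2 ⟨d, self_mem_range_succ d, by simp⟩
  · rw [hcoeff]
    exact_mod_cast (by omega : dicksonCoeff (2 * d) d + 4 ≠ 0)

theorem disjoint_image_offDiag (hd : d ≠ 0) :
    Disjoint ((range (d / 2 + 1)).image fun k => expVec (d + k) k (d - 2 * k))
      ((range (d / 2 + 1)).image fun k => expVec k (d + k) (d - 2 * k)) := by
  simp [disjoint_left]
  grind

theorem support_X_pow_add_X_pow_mul_dicksonForm (hd : d ≠ 0) :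
    ((X 0 ^ d + X 1 ^ d) * dicksonForm d (X 0 * X 1) (X 2) : MvPolynomial (Fin 3) K).support =
      ((range (d / 2 + 1)).image fun k => expVec (d + k) k (d - 2 * k)) ∪
        (range (d / 2 + 1)).image fun k => expVec k (d + k) (d - 2 * k) := by
  have hx := support_X_pow_mul_X_pow_mul_dicksonForm (K := K) d 0 d
  have hy := support_X_pow_mul_X_pow_mul_dicksonForm (K := K) 0 d d
  simp only [pow_zero, mul_one, one_mul, zero_add] at hx hy
  rw [add_mul, support_add_of_disjoint (hx ▸ hy ▸ disjoint_image_offDiag hd), hx, hy]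

theorem card_support_X_pow_add_X_pow_add_dicksonForm_sub (hd : Even d) (hd0 : d ≠ 0) :
    (X 0 ^ (2 * d) + X 1 ^ (2 * d) + (dicksonForm (2 * d) (X 0 * X 1) (X 2) + 4 * (X 0 * X 1) ^ d)
      - 2 * ((X 0 ^ d + X 1 ^ d) * dicksonForm d (X 0 * X 1) (X 2)) :
      MvPolynomial (Fin 3) K).support.card = 2 * d + 5 := by
  have hdiag := support_X_pow_add_X_pow_add hd0 (support_dicksonForm_two_mul_add (K := K) hd)
  have hoff : (-(2 * ((X 0 ^ d + X 1 ^ d) * dicksonForm d (X 0 * X 1) (X 2))) :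
      MvPolynomial (Fin 3) K).support =
      ((range (d / 2 + 1)).image fun k => expVec (d + k) k (d - 2 * k)) ∪
        (range (d / 2 + 1)).image fun k => expVec k (d + k) (d - 2 * k) := by
    rw [support_neg, ← map_ofNat C 2, ← smul_eq_C_mul, support_smul_eq two_ne_zero,
      support_X_pow_add_X_pow_mul_dicksonForm hd0]
  have hdisj : Disjoint ({expVec (2 * d) 0 0, expVec 0 (2 * d) 0} ∪
      (range (d + 1)).image fun s => expVec s s (2 * d - 2 * s))
      (((range (d / 2 + 1)).image fun k => expVec (d + k) k (d - 2 * k)) ∪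
        (range (d / 2 + 1)).image fun k => expVec k (d + k) (d - 2 * k)) := by
    simp [disjoint_left]
    grind
  rw [sub_eq_add_neg, support_add_of_disjoint (by rwa [hoff, hdiag]), hdiag, hoff,
    card_union_of_disjoint hdisj,
    card_pair_union_image_diag hd0, card_union_of_disjoint (disjoint_image_offDiag hd0),
    card_image_of_injOn (fun s _ t _ h => by simp_all),
    card_image_of_injOn (fun s _ t _ h => by simp_all), card_range]
  obtain ⟨m, rfl⟩ := hd
  omega

end Counting

/-- For `d ≥ 2` and `ξ = e^{2πi/d}`, the degree-`2d` form
`F = ∏_{j=0}^{d-1} (ξ^j x + ξ^{-j} y + z)(ξ^j x + ξ^{-j} y - z)` in `ℂ[x,y,z]`,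
invariant under the dihedral group `D_{2d}`, has exactly `d + 3` monomials with
non-zero coefficient if `d` is odd and `2d + 5` if `d` is even. -/
theorem dihedral_invariant_form_support_card (d : ℕ) (hd : 2 ≤ d)
    (ξ : ℂ) (hξ : ξ = Complex.exp (2 * Real.pi * Complex.I / d))
    (F : MvPolynomial (Fin 3) ℂ)
    (hF : F = ∏ j ∈ Finset.range d,
        ((MvPolynomial.C (ξ ^ j) * MvPolynomial.X 0 +
            MvPolynomial.C (ξ ^ (-(j : ℤ))) * MvPolynomial.X 1 + MvPolynomial.X 2) *
          (MvPolynomial.C (ξ ^ j) * MvPolynomial.X 0 +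
            MvPolynomial.C (ξ ^ (-(j : ℤ))) * MvPolynomial.X 1 - MvPolynomial.X 2))) :
    (Odd d → F.support.card = d + 3) ∧ (Even d → F.support.card = 2 * d + 5) := by
  have hξ' : IsPrimitiveRoot ξ d := hξ ▸ Complex.isPrimitiveRoot_exp d (by omega)
  rw [hF, prod_linearForm_eq hξ' (by omega)]
  refine ⟨fun hodd => ?_, fun heven => ?_⟩
  · rw [hodd.neg_one_pow,
      ← card_support_X_pow_add_X_pow_sub_dicksonForm (K := ℂ) (d := d) (by omega)]
    congr 2
    ring
  · rw [heven.neg_one_pow,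
      ← card_support_X_pow_add_X_pow_add_dicksonForm_sub (K := ℂ) heven (by omega)]
    congr 2
    ring
end
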